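/- arXiv:2304.02607 — 16 statements merged into one kernel-verified Lean document; each statement's English description precedes it below -/
import Mathlib

section
/- Let λ₁, ρ₀, μ₀, μ₁, μ₂, μ₃, C be real constants with λ₁ ≠ 0 and ρ₀ ≠ 0, and set γ = ρ₀²λ₁²μ₃ − λ₁μ₂ρ₀ + μ₀. Then for the function w(z) = C·e^{−ρ₀z} one has F_T[w](z) = γ·C·e^{−ρ₀z} for all z ∈ ℝ; in particular the one-dimensional linear space spanned by e^{−ρ₀z} is invariant under F_T. -/
/-- The one-dimensional space spanned by `e^{-ρ₀ z}` is invariant under the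
nonlinear operator `F_T[w] = λ₁² (d/dz)((μ₁/(2λ₁ρ₀)·w + μ₃)·w') + λ₁(μ₁·w + μ₂)·w' + μ₀·w`:
for `w(z) = C·e^{-ρ₀ z}` one has `F_T[w](z) = γ·C·e^{-ρ₀ z}` with
`γ = ρ₀²λ₁²μ₃ − λ₁μ₂ρ₀ + μ₀`. -/
theorem stmt_0 (lam1 rho0 mu0 mu1 mu2 mu3 C : ℝ) (hlam : lam1 ≠ 0) (hrho : rho0 ≠ 0)
    (gamma : ℝ) (hgamma : gamma = rho0 ^ 2 * lam1 ^ 2 * mu3 - lam1 * mu2 * rho0 + mu0)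
    (w : ℝ → ℝ) (hw : ∀ z, w z = C * Real.exp (-rho0 * z)) :
    ∀ z : ℝ,
      lam1 ^ 2 * deriv (fun z' => (mu1 / (2 * lam1 * rho0) * w z' + mu3) * deriv w z') z
        + lam1 * (mu1 * w z + mu2) * deriv w z + mu0 * w z
      = gamma * C * Real.exp (-rho0 * z) := by
  have hwf : w = fun z => C * Real.exp (-rho0 * z) := funext hw
  subst hwf hgamma
  intro z
  have hE : ∀ x : ℝ, HasDerivAt (fun z => C * Real.exp (-rho0 * z))
      (C * (Real.exp (-rho0 * x) * (-rho0 * 1))) x := by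
    intro x
    exact ((Real.hasDerivAt_exp (-rho0 * x)).comp x
      ((hasDerivAt_id x).const_mul (-rho0))).const_mul C
  have hdw : deriv (fun z => C * Real.exp (-rho0 * z)) =
      fun x => C * (Real.exp (-rho0 * x) * (-rho0 * 1)) := by
    funext x; exact (hE x).deriv
  rw [hdw]
  have hinner : HasDerivAt
      (fun z' => (mu1 / (2 * lam1 * rho0) * (C * Real.exp (-rho0 * z')) + mu3)
        * (C * (Real.exp (-rho0 * z') * (-rho0 * 1))))
      ((mu1 / (2 * lam1 * rho0) * (C * (Real.exp (-rho0 * z) * (-rho0 * 1))))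
        * (C * (Real.exp (-rho0 * z) * (-rho0 * 1)))
        + (mu1 / (2 * lam1 * rho0) * (C * Real.exp (-rho0 * z)) + mu3)
          * (C * (Real.exp (-rho0 * z) * (-rho0 * 1) * (-rho0 * 1)))) z := by
    have h1 : HasDerivAt (fun z' => mu1 / (2 * lam1 * rho0) * (C * Real.exp (-rho0 * z')) + mu3)
        (mu1 / (2 * lam1 * rho0) * (C * (Real.exp (-rho0 * z) * (-rho0 * 1)))) z :=
      ((hE z).const_mul (mu1 / (2 * lam1 * rho0))).add_const mu3
    have h2 : HasDerivAt (fun z' => C * (Real.exp (-rho0 * z') * (-rho0 * 1)))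
        (C * (Real.exp (-rho0 * z) * (-rho0 * 1) * (-rho0 * 1))) z := by
      have := ((Real.hasDerivAt_exp (-rho0 * z)).comp z
        ((hasDerivAt_id z).const_mul (-rho0))).const_mul (C * (-rho0 * 1))
      have e : (fun z' => C * (Real.exp (-rho0 * z') * (-rho0 * 1)))
          = fun y => C * (-rho0 * 1) * (Real.exp ∘ HMul.hMul (-rho0)) y := by
        funext x; simp only [Function.comp_apply]; ring
      rw [e]
      exact this.congr_deriv (by ring)
    exact h1.mul h2
  rw [hinner.deriv]
  have hexp : Real.exp (-rho0 * z) * Real.exp (-rho0 * z) =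
      Real.exp (-rho0 * z) * Real.exp (-rho0 * z) := rfl
  field_simp
  ring
end

section
/- Let λ₁, ρ₀, μ₀, μ₁, μ₂, μ₃, A₀ be real constants with λ₁ ≠ 0 and ρ₀ ≠ 0, and set γ = ρ₀²λ₁²μ₃ − λ₁μ₂ρ₀ + μ₀. Then the function w(z,t) = A₀·e^{−ρ₀z + γt} satisfies, for all z ∈ ℝ and t ∈ ℝ, the nonlinear convection–diffusion–reaction equation ∂w/∂t = λ₁² ∂/∂z( (μ₁/(2λ₁ρ₀)·w + μ₃)·∂w/∂z ) + λ₁(μ₁·w + μ₂)·∂w/∂z + μ₀·w. -/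
/-- `w(z,t) = A₀·e^{−ρ₀z + γt}` with `γ = ρ₀²λ₁²μ₃ − λ₁μ₂ρ₀ + μ₀` solves the
nonlinear convection–diffusion–reaction equation
`∂w/∂t = λ₁² ∂/∂z((μ₁/(2λ₁ρ₀)·w + μ₃)·∂w/∂z) + λ₁(μ₁·w + μ₂)·∂w/∂z + μ₀·w`. -/
theorem stmt_1 (lam1 rho0 mu0 mu1 mu2 mu3 A0 : ℝ) (hlam : lam1 ≠ 0) (hrho : rho0 ≠ 0)
    (gamma : ℝ) (hgamma : gamma = rho0 ^ 2 * lam1 ^ 2 * mu3 - lam1 * mu2 * rho0 + mu0)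
    (w : ℝ → ℝ → ℝ) (hw : ∀ z t, w z t = A0 * Real.exp (-rho0 * z + gamma * t)) :
    ∀ z t : ℝ,
      deriv (fun t' => w z t') t
      = lam1 ^ 2 * deriv (fun z' =>
            (mu1 / (2 * lam1 * rho0) * w z' t + mu3) * deriv (fun z'' => w z'' t) z') z
        + lam1 * (mu1 * w z t + mu2) * deriv (fun z' => w z' t) z
        + mu0 * w z t := by
  intro z t
  -- the exponential and its z-derivative
  have hE : ∀ t' z', HasDerivAt (fun z'' : ℝ => A0 * Real.exp (-rho0 * z'' + gamma * t'))
      (-rho0 * (A0 * Real.exp (-rho0 * z' + gamma * t'))) z' := by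
    intro t' z'
    have h1 : HasDerivAt (fun z'' : ℝ => -rho0 * z'' + gamma * t') (-rho0) z' := by
      simpa using ((hasDerivAt_id z').const_mul (-rho0)).add_const (gamma * t')
    have := (h1.exp).const_mul A0
    refine this.congr_deriv ?_
    ring
  have hderivz : ∀ t' z', deriv (fun z'' => w z'' t') z'
      = -rho0 * (A0 * Real.exp (-rho0 * z' + gamma * t')) := by
    intro t' z'
    have hfun : (fun z'' => w z'' t') = fun z'' => A0 * Real.exp (-rho0 * z'' + gamma * t') :=
      funext fun z'' => hw z'' t'
    rw [hfun, (hE t' z').deriv]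
  -- time derivative
  have hderivt : deriv (fun t' => w z t') t
      = gamma * (A0 * Real.exp (-rho0 * z + gamma * t)) := by
    have hfun : (fun t' => w z t') = fun t' => A0 * Real.exp (-rho0 * z + gamma * t') :=
      funext fun t' => hw z t'
    rw [hfun]
    have h1 : HasDerivAt (fun t' : ℝ => -rho0 * z + gamma * t') gamma t := by
      simpa using (((hasDerivAt_id t).const_mul gamma).const_add (-rho0 * z))
    have h2 := (h1.exp).const_mul A0
    rw [h2.deriv]; ring
  -- the flux derivative
  set c := mu1 / (2 * lam1 * rho0) with hc
  have hfun2 : (fun z' => (c * w z' t + mu3) * deriv (fun z'' => w z'' t) z')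
      = fun z' => (c * (A0 * Real.exp (-rho0 * z' + gamma * t)) + mu3) *
          (-rho0 * (A0 * Real.exp (-rho0 * z' + gamma * t))) := by
    funext z'
    rw [hw z' t, hderivz t z']
  have hflux : HasDerivAt (fun z' => (c * (A0 * Real.exp (-rho0 * z' + gamma * t)) + mu3) *
      (-rho0 * (A0 * Real.exp (-rho0 * z' + gamma * t))))
      ((c * (-rho0 * (A0 * Real.exp (-rho0 * z + gamma * t)))) *
        (-rho0 * (A0 * Real.exp (-rho0 * z + gamma * t)))
        + (c * (A0 * Real.exp (-rho0 * z + gamma * t)) + mu3) *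
          (-rho0 * (-rho0 * (A0 * Real.exp (-rho0 * z + gamma * t))))) z := by
    exact (((hE t z).const_mul c).add_const mu3).mul ((hE t z).const_mul (-rho0))
  rw [hderivt, hfun2, hflux.deriv, hderivz t z, hw z t, hc, hgamma]
  set E := Real.exp (-rho0 * z + gamma * t)
  field_simp
  ring
end

section
/- Let λ₁, ρ₀, μ₀, μ₁, μ₂, μ₃, A₀, A₁ be real constants with λ₁ ≠ 0 and ρ₀ ≠ 0, and suppose γ = ρ₀²λ₁²μ₃ − λ₁μ₂ρ₀ + μ₀ > 0. Then the function w(z,t) = (A₀·cosh(√γ·t) + (A₁/√γ)·sinh(√γ·t))·e^{−ρ₀z} satisfies, for all z ∈ ℝ and t ∈ ℝ, the nonlinear wave-type convection–diffusion–reaction equation ∂²w/∂t² = λ₁² ∂/∂z( (μ₁/(2λ₁ρ₀)·w + μ₃)·∂w/∂z ) + λ₁(μ₁·w + μ₂)·∂w/∂z + μ₀·w. -/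
/-- For `γ = ρ₀²λ₁²μ₃ − λ₁μ₂ρ₀ + μ₀ > 0`, the function
`w(z,t) = (A₀·cosh(√γ t) + (A₁/√γ)·sinh(√γ t))·e^{−ρ₀z}` solves the wave-type nonlinear
convection–diffusion–reaction equation
`∂²w/∂t² = λ₁² ∂/∂z((μ₁/(2λ₁ρ₀)·w + μ₃)·∂w/∂z) + λ₁(μ₁·w + μ₂)·∂w/∂z + μ₀·w`. -/
theorem stmt_2 (lam1 rho0 mu0 mu1 mu2 mu3 A0 A1 : ℝ) (hlam : lam1 ≠ 0) (hrho : rho0 ≠ 0)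
    (gamma : ℝ) (hgamma : gamma = rho0 ^ 2 * lam1 ^ 2 * mu3 - lam1 * mu2 * rho0 + mu0)
    (hpos : 0 < gamma)
    (w : ℝ → ℝ → ℝ)
    (hw : ∀ z t, w z t =
      (A0 * Real.cosh (Real.sqrt gamma * t) + A1 / Real.sqrt gamma * Real.sinh (Real.sqrt gamma * t))
        * Real.exp (-rho0 * z)) :
    ∀ z t : ℝ,
      deriv (fun t' => deriv (fun t'' => w z t'') t') t
      = lam1 ^ 2 * deriv (fun z' =>
            (mu1 / (2 * lam1 * rho0) * w z' t + mu3) * deriv (fun z'' => w z'' t) z') z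
        + lam1 * (mu1 * w z t + mu2) * deriv (fun z' => w z' t) z
        + mu0 * w z t := by
  intro z t
  have hspos : 0 < Real.sqrt gamma := Real.sqrt_pos.mpr hpos
  set s := Real.sqrt gamma with hs_def
  have hs : s ≠ 0 := ne_of_gt hspos
  have hs2 : s * s = gamma := Real.mul_self_sqrt hpos.le
  -- derivative of the exponential factor
  have hE : ∀ x : ℝ, HasDerivAt (fun z' => Real.exp (-rho0 * z'))
      (-rho0 * Real.exp (-rho0 * x)) x := by
    intro x
    have h1 : HasDerivAt (fun z' : ℝ => -rho0 * z') (-rho0) x := by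
      simpa using (hasDerivAt_id x).const_mul (-rho0)
    simpa [mul_comm] using h1.exp
  -- derivative of the time factor
  have hT : ∀ τ : ℝ, HasDerivAt
      (fun t' => A0 * Real.cosh (s * t') + A1 / s * Real.sinh (s * t'))
      (s * (A0 * Real.sinh (s * τ) + A1 / s * Real.cosh (s * τ))) τ := by
    intro τ
    have hlin : HasDerivAt (fun t' : ℝ => s * t') s τ := by
      simpa using (hasDerivAt_id τ).const_mul s
    have hc : HasDerivAt (fun t' => Real.cosh (s * t')) (Real.sinh (s * τ) * s) τ :=
      (Real.hasDerivAt_cosh (s * τ)).comp τ hlin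
    have hsh : HasDerivAt (fun t' => Real.sinh (s * t')) (Real.cosh (s * τ) * s) τ :=
      (Real.hasDerivAt_sinh (s * τ)).comp τ hlin
    have h : HasDerivAt (fun t' => A0 * Real.cosh (s * t') + A1 / s * Real.sinh (s * t')) _ τ :=
      (hc.const_mul A0).add (hsh.const_mul (A1 / s))
    convert h using 1
    ring
  have hT' : ∀ τ : ℝ, HasDerivAt
      (fun t' => s * (A0 * Real.sinh (s * t') + A1 / s * Real.cosh (s * t')))
      (gamma * (A0 * Real.cosh (s * τ) + A1 / s * Real.sinh (s * τ))) τ := by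
    intro τ
    have hlin : HasDerivAt (fun t' : ℝ => s * t') s τ := by
      simpa using (hasDerivAt_id τ).const_mul s
    have hc : HasDerivAt (fun t' => Real.cosh (s * t')) (Real.sinh (s * τ) * s) τ :=
      (Real.hasDerivAt_cosh (s * τ)).comp τ hlin
    have hsh : HasDerivAt (fun t' => Real.sinh (s * t')) (Real.cosh (s * τ) * s) τ :=
      (Real.hasDerivAt_sinh (s * τ)).comp τ hlin
    have h : HasDerivAt (fun t' => s * (A0 * Real.sinh (s * t') + A1 / s * Real.cosh (s * t'))) _ τ :=
      ((hsh.const_mul A0).add (hc.const_mul (A1 / s))).const_mul s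
    convert h using 1
    rw [← hs2]
    field_simp
  -- spatial first derivative of w
  have hdz : ∀ x : ℝ, deriv (fun z'' => w z'' t) x = -rho0 * w x t := by
    intro x
    have hfun : (fun z'' => w z'' t) = fun z'' =>
        (A0 * Real.cosh (s * t) + A1 / s * Real.sinh (s * t)) * Real.exp (-rho0 * z'') :=
      funext fun z'' => hw z'' t
    rw [hfun, hw x t,
      (((hE x).const_mul (A0 * Real.cosh (s * t) + A1 / s * Real.sinh (s * t)))).deriv]
    ring
  -- LHS: second time derivative
  have hdt : (fun t' => deriv (fun t'' => w z t'') t') = fun t' =>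
      (s * (A0 * Real.sinh (s * t') + A1 / s * Real.cosh (s * t'))) * Real.exp (-rho0 * z) := by
    funext τ
    have hfun : (fun t'' => w z t'') = fun t'' =>
        (A0 * Real.cosh (s * t'') + A1 / s * Real.sinh (s * t'')) * Real.exp (-rho0 * z) :=
      funext fun t'' => hw z t''
    rw [hfun, ((hT τ).mul_const _).deriv]
  have hLHS : deriv (fun t' => deriv (fun t'' => w z t'') t') t = gamma * w z t := by
    rw [hdt, ((hT' t).mul_const _).deriv, hw z t]
    ring
  -- flux derivative
  have hflux : deriv (fun z' =>
        (mu1 / (2 * lam1 * rho0) * w z' t + mu3) * deriv (fun z'' => w z'' t) z') z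
      = mu1 / (2 * lam1 * rho0) * (-rho0 * w z t) * (-rho0 * w z t)
        + (mu1 / (2 * lam1 * rho0) * w z t + mu3) * (rho0 ^ 2 * w z t) := by
    set c := A0 * Real.cosh (s * t) + A1 / s * Real.sinh (s * t) with hc_def
    have hfun : (fun z' =>
        (mu1 / (2 * lam1 * rho0) * w z' t + mu3) * deriv (fun z'' => w z'' t) z')
        = fun z' => (mu1 / (2 * lam1 * rho0) * (c * Real.exp (-rho0 * z')) + mu3)
            * (-rho0 * (c * Real.exp (-rho0 * z'))) := by
      funext x
      rw [hdz x, hw x t]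
    have h1 : HasDerivAt
        (fun z' => mu1 / (2 * lam1 * rho0) * (c * Real.exp (-rho0 * z')) + mu3)
        (mu1 / (2 * lam1 * rho0) * (c * (-rho0 * Real.exp (-rho0 * z)))) z := by
      simpa [mul_assoc, mul_left_comm, mul_comm] using
        ((((hE z).const_mul c).const_mul (mu1 / (2 * lam1 * rho0))).add_const mu3)
    have h2 : HasDerivAt (fun z' => -rho0 * (c * Real.exp (-rho0 * z')))
        (-rho0 * (c * (-rho0 * Real.exp (-rho0 * z)))) z := by
      simpa [mul_assoc, mul_left_comm, mul_comm] using
        (((hE z).const_mul c).const_mul (-rho0))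
    rw [hfun, (show HasDerivAt (fun z' => (mu1 / (2 * lam1 * rho0) * (c * Real.exp (-rho0 * z')) + mu3)
        * (-rho0 * (c * Real.exp (-rho0 * z')))) _ z from h1.mul h2).deriv, hw z t]
    ring
  rw [hLHS, hflux, hdz z, hgamma]
  field_simp
  ring
end

section
/- Let 0 < α < 1, let λ₁, ρ₀, μ₀, μ₁, μ₂, μ₃, A₀ be real constants with λ₁ ≠ 0 and ρ₀ ≠ 0, and set γ = ρ₀²λ₁²μ₃ − λ₁μ₂ρ₀ + μ₀. Define w(z,t) = A₀·(∑_{s=0}^∞ γ^s t^{αs}/Γ(αs+1))·e^{−ρ₀z}. Then for every z ∈ ℝ and every t > 0, the Caputo fractional time derivative of order α of w satisfies (1/Γ(1−α)) ∫₀ᵗ (∂w/∂τ)(z,τ)·(t−τ)^{−α} dτ = λ₁² ∂/∂z( (μ₁/(2λ₁ρ₀)·w + μ₃)·∂w/∂z ) + λ₁(μ₁·w + μ₂)·∂w/∂z + μ₀·w evaluated at (z,t). -/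
open Real MeasureTheory intervalIntegral Set

lemma aux_geom {k : ℕ} (hk : 0 < k) : Summable (fun s : ℕ => ((1:ℝ)/2) ^ (s / k)) := by
  have hb0 : (0:ℝ) < (1/2 : ℝ) ^ ((1:ℝ)/k) := Real.rpow_pos_of_pos (by norm_num) _
  have h1 : ((1:ℝ)/2) ^ ((1:ℝ)/k) < 1 :=
    Real.rpow_lt_one (by norm_num) (by norm_num) (by positivity)
  refine Summable.of_nonneg_of_le (fun s => by positivity) (fun s => ?_)
    ((summable_geometric_of_lt_one hb0.le h1).mul_left 2)
  have hkR : (0:ℝ) < (k:ℝ) := by exact_mod_cast hk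
  have hdiv : (s:ℝ)/k - 1 ≤ ((s / k : ℕ) : ℝ) := by
    have hn : s < (s/k + 1) * k := by
      have h := Nat.div_add_mod s k
      have h2 := Nat.mod_lt s hk
      have h3 : (s/k+1)*k = k*(s/k) + k := by ring
      omega
    have : (s:ℝ) < ((s/k : ℕ) + 1) * k := by exact_mod_cast hn
    rw [div_sub_one hkR.ne', div_le_iff₀ hkR]
    nlinarith
  calc ((1:ℝ)/2) ^ (s / k) = ((1:ℝ)/2) ^ (((s / k : ℕ)):ℝ) := by
        rw [Real.rpow_natCast]
    _ ≤ ((1:ℝ)/2) ^ ((s:ℝ)/k - 1) :=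
        Real.rpow_le_rpow_of_exponent_ge (by norm_num) (by norm_num) hdiv
    _ = 2 * (((1:ℝ)/2) ^ ((1:ℝ)/k)) ^ (s:ℕ) := by
        rw [← Real.rpow_natCast (((1:ℝ)/2) ^ ((1:ℝ)/k)) s, ← Real.rpow_mul (by norm_num)]
        rw [Real.rpow_sub (by norm_num), Real.rpow_one]
        ring_nf

lemma aux_summable_of_rec {a : ℕ → ℝ} {k N : ℕ} (hk : 0 < k) (h0 : ∀ s, 0 ≤ a s)
    (hrec : ∀ s, N ≤ s → a (s + k) ≤ 1/2 * a s) : Summable a := by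
  set B : ℝ := ∑ i ∈ Finset.range (N + k), a i with hB
  have hB0 : 0 ≤ B := Finset.sum_nonneg fun i _ => h0 i
  set C : ℝ := B * 2 ^ (N + k) with hC
  have key : ∀ s, a s ≤ C * (1/2) ^ (s / k) := by
    intro s
    induction s using Nat.strong_induction_on with
    | _ s ih =>
      by_cases hs : s < N + k
      · have h1 : a s ≤ B := Finset.single_le_sum (fun i _ => h0 i) (Finset.mem_range.2 hs)
        have h2 : ((1:ℝ)/2) ^ (N + k) ≤ (1/2) ^ (s / k) := by
          apply pow_le_pow_of_le_one (by norm_num) (by norm_num)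
          have : s / k ≤ s := Nat.div_le_self s k
          omega
        calc a s ≤ B := h1
          _ = B * 2 ^ (N+k) * (1/2) ^ (N+k) := by
              rw [mul_assoc, ← mul_pow]; norm_num
          _ ≤ C * (1/2) ^ (s / k) := by
              apply mul_le_mul_of_nonneg_left h2
              positivity
      · push_neg at hs
        have hks : k ≤ s := le_trans (Nat.le_add_left k N) hs
        have hNs : N ≤ s - k := by omega
        have hrw : s - k + k = s := Nat.sub_add_cancel hks
        have h1 : a s ≤ 1/2 * a (s - k) := by
          have := hrec (s - k) hNs; rwa [hrw] at this
        have h2 := ih (s - k) (by omega)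
        have hdiv : s / k = (s - k) / k + 1 := by
          rw [Nat.div_eq_sub_div hk hks]
        calc a s ≤ 1/2 * a (s-k) := h1
          _ ≤ 1/2 * (C * (1/2)^((s-k)/k)) := by
              apply mul_le_mul_of_nonneg_left h2; norm_num
          _ = C * (1/2) ^ (s/k) := by rw [hdiv, pow_succ]; ring
  exact Summable.of_nonneg_of_le h0 key ((aux_geom hk).mul_left C)

lemma gamma_mono {x y : ℝ} (hx : 2 ≤ x) (hxy : x ≤ y) : Real.Gamma x ≤ Real.Gamma y := by
  rcases eq_or_lt_of_le hxy with h | h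
  · rw [h]
  · exact (Real.Gamma_strictMonoOn_Ici hx (le_trans hx hxy) h).le

lemma sumML {α : ℝ} (hα : 0 < α) {r : ℝ} (hr : 0 ≤ r) :
    Summable (fun s : ℕ => ((s:ℝ)+1) * r^s / Real.Gamma (α*s+1)) := by
  obtain ⟨k, hk1, hk⟩ : ∃ k : ℕ, 0 < k ∧ 1 ≤ α * k := by
    refine ⟨max 1 ⌈1/α⌉₊, by positivity, ?_⟩
    have h1 : (1/α : ℝ) ≤ ⌈1/α⌉₊ := Nat.le_ceil _
    have h2 : (⌈1/α⌉₊ : ℝ) ≤ (max 1 ⌈1/α⌉₊ : ℕ) := by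
      exact_mod_cast Nat.le_max_right 1 _
    calc (1:ℝ) = α * (1/α) := by field_simp
      _ ≤ α * (max 1 ⌈1/α⌉₊ : ℕ) := by
          apply mul_le_mul_of_nonneg_left (le_trans h1 h2) hα.le
  set N : ℕ := ⌈(2*((k:ℝ)+1)*r^k) / α⌉₊ with hN
  apply aux_summable_of_rec (k := k) (N := N) hk1
  · intro s
    have := Real.Gamma_pos_of_pos (show (0:ℝ) < α*s+1 by positivity)
    positivity
  · intro s hs
    have hG1 : (0:ℝ) < Real.Gamma (α*s+1) := Real.Gamma_pos_of_pos (by positivity)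
    have hG2 : (0:ℝ) < Real.Gamma (α*(s+k:ℕ)+1) := Real.Gamma_pos_of_pos (by positivity)
    -- Gamma lower bound
    have hGIN : (α*s+1) * Real.Gamma (α*s+1) ≤ Real.Gamma (α*(s+k:ℕ)+1) := by
      have h1 : Real.Gamma (α*s+1+1) = (α*s+1) * Real.Gamma (α*s+1) :=
        Real.Gamma_add_one (by positivity)
      rw [← h1]
      apply gamma_mono (by nlinarith [mul_nonneg hα.le (Nat.cast_nonneg s)])
      push_cast
      nlinarith [mul_nonneg hα.le (Nat.cast_nonneg s)]
    -- from hs : N ≤ s, get 2*(k+1)*r^k ≤ α*s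
    have hsα : 2*((k:ℝ)+1)*r^k ≤ α*s := by
      have h1 : ((2*((k:ℝ)+1)*r^k) / α) ≤ (N:ℝ) := Nat.le_ceil _
      have h2 : (N:ℝ) ≤ s := by exact_mod_cast hs
      calc 2*((k:ℝ)+1)*r^k = α * ((2*((k:ℝ)+1)*r^k) / α) := by field_simp
        _ ≤ α * s := mul_le_mul_of_nonneg_left (le_trans h1 h2) hα.le
    -- main inequality
    have hcoef : ((s:ℝ)+(k:ℝ)+1) * r^k ≤ 1/2 * ((s:ℝ)+1) * (α*s+1) := by
      have h1 : ((s:ℝ)+(k:ℝ)+1) ≤ ((k:ℝ)+1) * ((s:ℝ)+1) := by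
        nlinarith [Nat.cast_nonneg (α := ℝ) s, Nat.cast_nonneg (α := ℝ) k]
      have h2 : ((k:ℝ)+1) * r^k * 2 ≤ (α*s+1) := by nlinarith
      nlinarith [pow_nonneg hr k, Nat.cast_nonneg (α := ℝ) s, Nat.cast_nonneg (α := ℝ) k]
    rw [div_le_iff₀ hG2]
    have e1 : 1/2 * (((s:ℝ)+1) * r^s / Real.Gamma (α*s+1)) * ((α*s+1) * Real.Gamma (α*s+1))
        = 1/2 * ((s:ℝ)+1) * (α*s+1) * r^s := by field_simp
    have e2 : ((((s+k):ℕ):ℝ)+1) * r^(s+k)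
        ≤ 1/2 * (((s:ℝ)+1) * r^s / Real.Gamma (α*s+1)) * ((α*s+1) * Real.Gamma (α*s+1)) := by
      rw [e1]
      push_cast [pow_add]
      nlinarith [pow_nonneg hr s, pow_nonneg hr k, Nat.cast_nonneg (α := ℝ) s,
        Nat.cast_nonneg (α := ℝ) k]
    refine le_trans e2 ?_
    apply mul_le_mul_of_nonneg_left hGIN
    positivity

lemma betaIntegrable {a b t : ℝ} (ha : 0 < a) (hb : 0 < b) (ht : 0 < t) :
    IntervalIntegrable (fun τ => τ^(a-1) * (t-τ)^(b-1)) volume 0 t := by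
  have hcont : ∀ {c d : ℝ} (s : Set ℝ), (∀ x ∈ s, t - x ≠ 0) →
      ContinuousOn (fun τ : ℝ => (t-τ)^(b-1)) s := by
    intro c d s hs
    intro x hx
    apply ContinuousAt.continuousWithinAt
    apply ContinuousAt.rpow_const
    · exact (continuous_const.sub continuous_id).continuousAt
    · exact Or.inl (hs x hx)
  apply IntervalIntegrable.trans (b := t/2)
  · apply IntervalIntegrable.mul_continuousOn
    · exact intervalIntegral.intervalIntegrable_rpow' (by linarith)
    · apply hcont (c := 0) (d := 0) _
      intro x hx
      rw [Set.uIcc_of_le (by linarith : (0:ℝ) ≤ t/2)] at hx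
      have := hx.2
      intro h; apply absurd h; intro h'; nlinarith [hx.1, hx.2]
  · apply IntervalIntegrable.continuousOn_mul
    · -- IntervalIntegrable (fun τ => (t-τ)^(b-1)) volume (t/2) t
      have h0 : IntervalIntegrable (fun x : ℝ => x^(b-1)) volume 0 (t/2) :=
        intervalIntegral.intervalIntegrable_rpow' (by linarith)
      have h1 := h0.comp_sub_left t
      have h2 : t - t/2 = t/2 := by ring
      rw [sub_zero, h2] at h1
      exact h1.symm
    · intro x hx
      rw [Set.uIcc_of_le (by linarith : t/2 ≤ t)] at hx
      apply ContinuousAt.continuousWithinAt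
      apply ContinuousAt.rpow_const continuous_id.continuousAt
      left
      simp only [id_eq]
      intro h
      rw [h] at hx
      linarith [hx.1]

lemma betaValue01 {a b : ℝ} (ha : 0 < a) (hb : 0 < b) :
    ∫ x in (0:ℝ)..1, x^(a-1) * (1-x)^(b-1)
      = Real.Gamma a * Real.Gamma b / Real.Gamma (a+b) := by
  have hG : (0:ℝ) < Real.Gamma (a+b) := Real.Gamma_pos_of_pos (by linarith)
  have hC : Complex.betaIntegral a b =
      ((∫ x in (0:ℝ)..1, x^(a-1) * (1-x)^(b-1) : ℝ) : ℂ) := by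
    rw [Complex.betaIntegral, ← intervalIntegral.integral_ofReal]
    apply intervalIntegral.integral_congr
    intro x hx
    rw [Set.uIcc_of_le (by norm_num : (0:ℝ) ≤ 1)] at hx
    push_cast
    rw [Complex.ofReal_cpow hx.1, Complex.ofReal_cpow (by linarith [hx.2])]
    push_cast
    ring
  have hmain := Complex.Gamma_mul_Gamma_eq_betaIntegral
    (show 0 < (a:ℂ).re by simpa using ha) (show 0 < (b:ℂ).re by simpa using hb)
  rw [hC] at hmain
  have hab : ((a:ℂ) + b) = ((a+b : ℝ) : ℂ) := by push_cast; ring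
  rw [hab, Complex.Gamma_ofReal, Complex.Gamma_ofReal, Complex.Gamma_ofReal] at hmain
  have : ((Real.Gamma a * Real.Gamma b : ℝ) : ℂ)
      = ((Real.Gamma (a+b) * ∫ x in (0:ℝ)..1, x^(a-1) * (1-x)^(b-1) : ℝ) : ℂ) := by
    push_cast; exact_mod_cast hmain
  have h2 : Real.Gamma a * Real.Gamma b
      = Real.Gamma (a+b) * ∫ x in (0:ℝ)..1, x^(a-1) * (1-x)^(b-1) := by exact_mod_cast this
  field_simp
  linarith [h2]

lemma betaValue {a b t : ℝ} (ha : 0 < a) (hb : 0 < b) (ht : 0 < t) :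
    ∫ τ in (0:ℝ)..t, τ^(a-1) * (t-τ)^(b-1)
      = Real.Gamma a * Real.Gamma b / Real.Gamma (a+b) * t^(a+b-1) := by
  have key := intervalIntegral.smul_integral_comp_mul_left
    (fun τ => τ^(a-1) * (t-τ)^(b-1)) t (a := 0) (b := 1)
  rw [mul_zero, mul_one] at key
  rw [← key]
  have hcong : ∫ x in (0:ℝ)..1, (t*x)^(a-1) * (t - t*x)^(b-1)
      = ∫ x in (0:ℝ)..1, (t^(a-1) * t^(b-1)) * (x^(a-1) * (1-x)^(b-1)) := by
    apply intervalIntegral.integral_congr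
    intro x hx
    rw [Set.uIcc_of_le (by norm_num : (0:ℝ) ≤ 1)] at hx
    have h1 : t - t*x = t*(1-x) := by ring
    simp only []
    rw [h1, Real.mul_rpow ht.le hx.1, Real.mul_rpow ht.le (by linarith [hx.2])]
    ring
  rw [hcong, intervalIntegral.integral_const_mul, betaValue01 ha hb]
  rw [smul_eq_mul]
  rw [show t^(a-1) * t^(b-1) = t^(a+b-2) by rw [← Real.rpow_add ht]; ring_nf]
  rw [show t^(a+b-1) = t^(a+b-2) * t by
    rw [show a+b-1 = (a+b-2) + 1 by ring, Real.rpow_add ht, Real.rpow_one]]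
  ring

lemma ML_hasDeriv {α : ℝ} (hα0 : 0 < α) (gamma : ℝ) {τ : ℝ} (hτ : 0 < τ) :
    HasDerivAt
      (fun x : ℝ => ∑' s : ℕ, gamma ^ s * x ^ (α * (s : ℝ)) / Real.Gamma (α * (s : ℝ) + 1))
      (∑' s : ℕ, gamma ^ s * ((α * (s:ℝ)) * τ ^ (α * (s : ℝ) - 1))
          / Real.Gamma (α * (s : ℝ) + 1)) τ := by
  set B : ℝ := τ + 1 with hB
  have hB1 : 1 < B := by simp [hB]; linarith
  have hB0 : (0:ℝ) < B := by linarith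
  set c : ℝ := |gamma| * B ^ α with hc
  have hc0 : 0 ≤ c := mul_nonneg (abs_nonneg _) (Real.rpow_pos_of_pos hB0 _).le
  have hpow : ∀ s : ℕ, B ^ (α * (s:ℝ)) = c ^ s / |gamma| ^ s ∨ True := fun _ => Or.inr trivial
  have hBpow : ∀ s : ℕ, |gamma| ^ s * B ^ (α * (s:ℝ)) = c ^ s := by
    intro s
    rw [hc, mul_pow, ← Real.rpow_natCast (B ^ α) s, ← Real.rpow_mul hB0.le]
  have hGpos : ∀ s : ℕ, (0:ℝ) < Real.Gamma (α * (s:ℝ) + 1) := fun s =>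
    Real.Gamma_pos_of_pos (by positivity)
  have husum : Summable (fun s : ℕ => (2/τ) * α * (((s:ℝ)+1) * c ^ s
      / Real.Gamma (α * (s:ℝ) + 1))) :=
    ((sumML hα0 hc0).mul_left _)
  refine hasDerivAt_tsum_of_isPreconnected husum (isOpen_Ioo (a := τ/2) (b := B))
    (isPreconnected_Ioo) (y₀ := τ)
    (g := fun (s : ℕ) (x : ℝ) => gamma ^ s * x ^ (α * (s:ℝ)) / Real.Gamma (α * (s:ℝ) + 1))
    (g' := fun (s : ℕ) (y : ℝ) => gamma ^ s * ((α * (s:ℝ)) * y ^ (α * (s:ℝ) - 1))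
          / Real.Gamma (α * (s:ℝ) + 1))
    ?_ ?_ ?_ ?_ ?_
  · -- HasDerivAt of each term
    intro s y hy
    have hy0 : (0:ℝ) < y := lt_trans (by linarith : (0:ℝ) < τ/2) hy.1
    have h := Real.hasDerivAt_rpow_const (x := y) (p := α * (s:ℝ)) (Or.inl hy0.ne')
    exact (h.const_mul (gamma ^ s)).div_const _
  · -- bound
    intro s y hy
    have hy0 : (0:ℝ) < y := lt_trans (by linarith : (0:ℝ) < τ/2) hy.1
    have hyB : y ≤ B := hy.2.le
    rw [Real.norm_eq_abs, abs_div, abs_mul, abs_pow, abs_mul,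
      abs_of_pos (hGpos s), abs_of_nonneg (by positivity : (0:ℝ) ≤ α * (s:ℝ)),
      abs_of_pos (Real.rpow_pos_of_pos hy0 _)]
    have h1 : y ^ (α * (s:ℝ) - 1) ≤ B ^ (α * (s:ℝ)) * (2/τ) := by
      rw [Real.rpow_sub hy0, Real.rpow_one]
      have ha : y ^ (α * (s:ℝ)) ≤ B ^ (α * (s:ℝ)) :=
        Real.rpow_le_rpow hy0.le hyB (by positivity)
      have hb : 1/y ≤ 2/τ := by
        rw [div_le_div_iff₀ hy0 hτ]
        linarith [hy.1]
      calc y ^ (α * (s:ℝ)) / y = y ^ (α * (s:ℝ)) * (1/y) := by ring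
        _ ≤ B ^ (α * (s:ℝ)) * (2/τ) := by
            apply mul_le_mul ha hb (by positivity) (by positivity)
    calc |gamma| ^ s * (α * (s:ℝ) * y ^ (α * (s:ℝ) - 1)) / Real.Gamma (α * (s:ℝ) + 1)
        ≤ |gamma| ^ s * (α * (s:ℝ) * (B ^ (α * (s:ℝ)) * (2/τ))) / Real.Gamma (α * (s:ℝ) + 1) := by
          gcongr
      _ = 2/τ * α * ((s:ℝ) * c ^ s / Real.Gamma (α * (s:ℝ) + 1)) := by
          rw [← hBpow s]; ring
      _ ≤ 2/τ * α * (((s:ℝ)+1) * c ^ s / Real.Gamma (α * (s:ℝ) + 1)) := by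
          gcongr
          linarith
  · exact ⟨by linarith, by linarith [hB1]⟩
  · -- summability at τ
    apply Summable.of_norm
    apply Summable.of_nonneg_of_le (fun s => norm_nonneg _) ?_
      (((sumML hα0 hc0).mul_left 1))
    intro s
    rw [Real.norm_eq_abs, abs_div, abs_mul, abs_pow,
      abs_of_pos (hGpos s), abs_of_pos (Real.rpow_pos_of_pos hτ _)]
    have h1 : τ ^ (α * (s:ℝ)) ≤ B ^ (α * (s:ℝ)) :=
      Real.rpow_le_rpow hτ.le (by linarith) (by positivity)
    rw [one_mul]
    calc |gamma| ^ s * τ ^ (α * (s:ℝ)) / Real.Gamma (α * (s:ℝ) + 1)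
        ≤ |gamma| ^ s * B ^ (α * (s:ℝ)) / Real.Gamma (α * (s:ℝ) + 1) := by
          gcongr
      _ = c ^ s / Real.Gamma (α * (s:ℝ) + 1) := by rw [hBpow]
      _ ≤ ((s:ℝ)+1) * c ^ s / Real.Gamma (α * (s:ℝ) + 1) := by
          gcongr
          nlinarith [pow_nonneg hc0 s, Nat.cast_nonneg (α := ℝ) s]
  · exact ⟨by linarith, by linarith [hB1]⟩

lemma caputo_ML {α : ℝ} (hα0 : 0 < α) (hα1 : α < 1) (gamma : ℝ) {t : ℝ} (ht : 0 < t) :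
    ∫ τ in (0:ℝ)..t,
      (∑' s : ℕ, gamma ^ s * ((α * (s:ℝ)) * τ ^ (α * (s : ℝ) - 1))
          / Real.Gamma (α * (s : ℝ) + 1)) * (t - τ) ^ (-α)
    = Real.Gamma (1-α) * gamma *
      (∑' s : ℕ, gamma ^ s * t ^ (α * (s : ℝ)) / Real.Gamma (α * (s : ℝ) + 1)) := by
  have hb : (0:ℝ) < 1 - α := by linarith
  have hGb : (0:ℝ) < Real.Gamma (1-α) := Real.Gamma_pos_of_pos hb
  set g : ℕ → ℝ → ℝ := fun s τ =>
    (gamma ^ s * ((α * (s:ℝ)) * τ ^ (α * (s : ℝ) - 1)) / Real.Gamma (α * (s : ℝ) + 1))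
      * (t - τ) ^ (-α) with hgdef
  have hexp : (-α) = (1 - α) - 1 := by ring
  have hgact : ∀ s : ℕ, g s = fun τ =>
      (gamma ^ s * (α * (s:ℝ)) / Real.Gamma (α * (s:ℝ) + 1))
        * (τ ^ (α * (s:ℝ) - 1) * (t - τ) ^ ((1-α) - 1)) := by
    intro s; funext τ
    show (gamma ^ s * ((α * (s:ℝ)) * τ ^ (α * (s : ℝ) - 1)) / Real.Gamma (α * (s : ℝ) + 1))
      * (t - τ) ^ (-α) = _
    rw [hexp]; ring
  have hg0 : g 0 = fun _ => 0 := by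
    funext τ
    show (gamma ^ 0 * ((α * ((0:ℕ):ℝ)) * τ ^ (α * ((0:ℕ):ℝ) - 1))
      / Real.Gamma (α * ((0:ℕ):ℝ) + 1)) * (t - τ) ^ (-α) = 0
    norm_num
  have hapos : ∀ n : ℕ, (0:ℝ) < α * ((n+1:ℕ):ℝ) := by
    intro n; push_cast; positivity
  have hGpos : ∀ x : ℝ, 0 < x → (0:ℝ) < Real.Gamma (x + 1) :=
    fun x hx => Real.Gamma_pos_of_pos (by linarith)
  -- integrability of each g s on Ioc 0 t
  have hInt : ∀ s : ℕ, MeasureTheory.Integrable (g s)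
      (MeasureTheory.volume.restrict (Set.Ioc 0 t)) := by
    intro s
    match s with
    | 0 => rw [hg0]; exact MeasureTheory.integrable_zero _ _ _
    | (n+1) =>
      rw [hgact]
      have hbi := betaIntegrable (hapos n) hb ht
      exact ((intervalIntegrable_iff_integrableOn_Ioc_of_le ht.le).mp hbi).const_mul _
  -- value of the scaled beta integral
  have hval : ∀ (c : ℝ) (n : ℕ),
      ∫ τ in Set.Ioc (0:ℝ) t, c * (τ ^ (α*((n+1:ℕ):ℝ) - 1) * (t-τ) ^ ((1-α)-1))
        = c * (Real.Gamma (α*((n+1:ℕ):ℝ)) * Real.Gamma (1-α)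
            / Real.Gamma (α*((n+1:ℕ):ℝ)+(1-α)) * t ^ (α*((n+1:ℕ):ℝ)+(1-α)-1)) := by
    intro c n
    rw [← intervalIntegral.integral_of_le ht.le, intervalIntegral.integral_const_mul,
      betaValue (hapos n) hb ht]
  -- algebraic simplification of the per-index value
  have hsimp : ∀ (q : ℝ) (n : ℕ),
      (q * (α*((n+1:ℕ):ℝ)) / Real.Gamma (α*((n+1:ℕ):ℝ) + 1))
        * (Real.Gamma (α*((n+1:ℕ):ℝ)) * Real.Gamma (1-α)
            / Real.Gamma (α*((n+1:ℕ):ℝ)+(1-α)) * t ^ (α*((n+1:ℕ):ℝ)+(1-α)-1))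
      = Real.Gamma (1-α) * q * t ^ (α*(n:ℝ)) / Real.Gamma (α*(n:ℝ)+1) := by
    intro q n
    have ha' := hapos n
    have e1 : Real.Gamma (α*((n+1:ℕ):ℝ) + 1)
        = (α*((n+1:ℕ):ℝ)) * Real.Gamma (α*((n+1:ℕ):ℝ)) := Real.Gamma_add_one ha'.ne'
    have e2 : α*((n+1:ℕ):ℝ)+(1-α) = α*(n:ℝ)+1 := by push_cast; ring
    have e3 : α*((n+1:ℕ):ℝ)+(1-α)-1 = α*(n:ℝ) := by push_cast; ring
    rw [e1, e3, e2]
    have hGn : Real.Gamma (α*((n+1:ℕ):ℝ)) ≠ 0 := (Real.Gamma_pos_of_pos ha').ne'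
    have hGd : Real.Gamma (α*(n:ℝ)+1) ≠ 0 :=
      (Real.Gamma_pos_of_pos (by positivity)).ne'
    field_simp
  -- per-index integral values
  have hIval : ∀ n : ℕ, ∫ τ in Set.Ioc (0:ℝ) t, g (n+1) τ
      = Real.Gamma (1-α) * gamma^(n+1) * t ^ (α*(n:ℝ)) / Real.Gamma (α*(n:ℝ)+1) := by
    intro n
    rw [hgact (n+1), hval, hsimp]
  -- per-index norm integral values
  have hNval : ∀ n : ℕ, ∫ τ in Set.Ioc (0:ℝ) t, ‖g (n+1) τ‖
      = Real.Gamma (1-α) * |gamma|^(n+1) * t ^ (α*(n:ℝ)) / Real.Gamma (α*(n:ℝ)+1) := by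
    intro n
    have ha' := hapos n
    have hGq := hGpos _ ha'
    have hcong : ∫ τ in Set.Ioc (0:ℝ) t, ‖g (n+1) τ‖
        = ∫ τ in Set.Ioc (0:ℝ) t,
            (|gamma|^(n+1) * (α*((n+1:ℕ):ℝ)) / Real.Gamma (α*((n+1:ℕ):ℝ) + 1))
              * (τ ^ (α*((n+1:ℕ):ℝ) - 1) * (t-τ) ^ ((1-α)-1)) := by
      apply MeasureTheory.setIntegral_congr_fun measurableSet_Ioc
      intro τ hτ
      rw [hgact (n+1)]
      simp only []
      rw [Real.norm_eq_abs, abs_mul, abs_div, abs_mul, abs_pow,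
        abs_of_pos ha', abs_of_pos hGq,
        abs_of_nonneg (mul_nonneg (Real.rpow_nonneg hτ.1.le _)
          (Real.rpow_nonneg (by linarith [hτ.2] : (0:ℝ) ≤ t - τ) _))]
    rw [hcong, hval, hsimp]
  have hN0 : ∫ τ in Set.Ioc (0:ℝ) t, ‖g 0 τ‖ = 0 := by
    rw [hg0]; simp
  -- summability of the norm integrals
  set r : ℝ := |gamma| * t ^ α with hr
  have hr0 : 0 ≤ r := mul_nonneg (abs_nonneg _) (Real.rpow_pos_of_pos ht _).le
  have htn : ∀ n : ℕ, t ^ (α * (n:ℝ)) = (t ^ α) ^ n := by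
    intro n
    rw [← Real.rpow_natCast (t ^ α) n, ← Real.rpow_mul ht.le]
  have hWn : Summable (fun n : ℕ =>
      Real.Gamma (1-α) * |gamma|^(n+1) * t ^ (α*(n:ℝ)) / Real.Gamma (α*(n:ℝ)+1)) := by
    apply Summable.of_nonneg_of_le
      (fun n => by
        have hGd : (0:ℝ) < Real.Gamma (α*(n:ℝ)+1) := Real.Gamma_pos_of_pos (by positivity)
        apply div_nonneg ?_ hGd.le
        have : (0:ℝ) ≤ t ^ (α*(n:ℝ)) := (Real.rpow_pos_of_pos ht _).le
        positivity)
      (fun n => ?_)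
      ((sumML hα0 hr0).mul_left (Real.Gamma (1-α) * |gamma|))
    have hGd : (0:ℝ) < Real.Gamma (α*(n:ℝ)+1) := Real.Gamma_pos_of_pos (by positivity)
    have he : Real.Gamma (1-α) * |gamma|^(n+1) * t ^ (α*(n:ℝ))
        = (Real.Gamma (1-α) * |gamma|) * r ^ n := by
      rw [htn n, hr, mul_pow, pow_succ]
      ring
    rw [he, mul_div_assoc]
    gcongr
    nlinarith [pow_nonneg hr0 n, Nat.cast_nonneg (α := ℝ) n]
  have hWsum : Summable (fun s : ℕ => ∫ τ in Set.Ioc (0:ℝ) t, ‖g s τ‖) :=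
    (summable_nat_add_iff 1).mp (hWn.congr fun n => (hNval n).symm)
  have hswap := MeasureTheory.integral_tsum_of_summable_integral_norm hInt hWsum
  have hIsum : Summable (fun s : ℕ => ∫ τ in Set.Ioc (0:ℝ) t, g s τ) :=
    Summable.of_norm_bounded hWsum (fun s => MeasureTheory.norm_integral_le_integral_norm _)
  calc ∫ τ in (0:ℝ)..t,
      (∑' s : ℕ, gamma ^ s * ((α * (s:ℝ)) * τ ^ (α * (s : ℝ) - 1))
          / Real.Gamma (α * (s : ℝ) + 1)) * (t - τ) ^ (-α)
      = ∫ τ in (0:ℝ)..t, ∑' s, g s τ := by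
        apply intervalIntegral.integral_congr
        intro τ _
        exact (tsum_mul_right).symm
    _ = ∫ τ in Set.Ioc (0:ℝ) t, ∑' s, g s τ := intervalIntegral.integral_of_le ht.le
    _ = ∑' s, ∫ τ in Set.Ioc (0:ℝ) t, g s τ := hswap.symm
    _ = (∫ τ in Set.Ioc (0:ℝ) t, g 0 τ)
        + ∑' n, ∫ τ in Set.Ioc (0:ℝ) t, g (n+1) τ := Summable.tsum_eq_zero_add hIsum
    _ = ∑' n : ℕ, (Real.Gamma (1-α) * gamma)
          * (gamma^n * t^(α*(n:ℝ)) / Real.Gamma (α*(n:ℝ)+1)) := by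
        rw [hg0]
        simp only [MeasureTheory.integral_zero, zero_add]
        exact tsum_congr fun n => by rw [hIval n, pow_succ]; ring
    _ = Real.Gamma (1-α) * gamma
          * ∑' s : ℕ, gamma^s * t^(α*(s:ℝ)) / Real.Gamma (α*(s:ℝ)+1) := tsum_mul_left

/-- For `0 < α < 1` and `γ = ρ₀²λ₁²μ₃ − λ₁μ₂ρ₀ + μ₀`, the function
`w(z,t) = A₀·E_{α,1}(γ t^α)·e^{−ρ₀z}` (with `E_{α,1}(x) = ∑ x^s/Γ(αs+1)`) solves the
time-fractional nonlinear convection–diffusion–reaction equation, where the Caputo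
derivative of order `α` in time is `(1/Γ(1−α)) ∫₀ᵗ (∂w/∂τ)(z,τ)·(t−τ)^{−α} dτ`. -/
theorem stmt_3 (α lam1 rho0 mu0 mu1 mu2 mu3 A0 : ℝ)
    (hα0 : 0 < α) (hα1 : α < 1) (hlam : lam1 ≠ 0) (hrho : rho0 ≠ 0)
    (gamma : ℝ) (hgamma : gamma = rho0 ^ 2 * lam1 ^ 2 * mu3 - lam1 * mu2 * rho0 + mu0)
    (w : ℝ → ℝ → ℝ)
    (hw : ∀ z t, w z t =
      A0 * (∑' s : ℕ, gamma ^ s * t ^ (α * (s : ℝ)) / Real.Gamma (α * (s : ℝ) + 1))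
        * Real.exp (-rho0 * z)) :
    ∀ z t : ℝ, 0 < t →
      (1 / Real.Gamma (1 - α))
          * ∫ τ in (0:ℝ)..t, deriv (fun τ' => w z τ') τ * (t - τ) ^ (-α)
      = lam1 ^ 2 * deriv (fun z' =>
            (mu1 / (2 * lam1 * rho0) * w z' t + mu3) * deriv (fun z'' => w z'' t) z') z
        + lam1 * (mu1 * w z t + mu2) * deriv (fun z' => w z' t) z
        + mu0 * w z t := by
  intro z t ht
  have hGb : (0:ℝ) < Real.Gamma (1-α) := Real.Gamma_pos_of_pos (by linarith)
  set E : ℝ → ℝ :=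
    fun x => ∑' s : ℕ, gamma ^ s * x ^ (α * (s:ℝ)) / Real.Gamma (α * (s:ℝ) + 1) with hE
  set X : ℝ := Real.exp (-rho0 * z) with hX
  set K : ℝ := A0 * E t with hK
  -- w as a function of z at fixed time t
  have hwz : ∀ z' : ℝ, w z' t = K * Real.exp (-rho0 * z') := by
    intro z'; rw [hw z' t]
  -- z-derivative of the exponential profile
  have hKz : ∀ z' : ℝ, HasDerivAt (fun z'' : ℝ => K * Real.exp (-rho0 * z''))
      (-rho0 * (K * Real.exp (-rho0 * z'))) z' := by
    intro z'
    have h1 : HasDerivAt (fun z'' : ℝ => -rho0 * z'') (-rho0) z' := by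
      simpa using (hasDerivAt_id z').const_mul (-rho0)
    have h2 := (h1.exp).const_mul K
    have h3 : K * (Real.exp (-rho0 * z') * (-rho0))
        = -rho0 * (K * Real.exp (-rho0 * z')) := by ring
    rw [h3] at h2
    exact h2
  have hwzfun : (fun z'' : ℝ => w z'' t) = fun z'' : ℝ => K * Real.exp (-rho0 * z'') :=
    funext hwz
  have hdz : ∀ z' : ℝ, deriv (fun z'' : ℝ => w z'' t) z'
      = -rho0 * (K * Real.exp (-rho0 * z')) := by
    intro z'
    rw [hwzfun]
    exact (hKz z').deriv
  -- outer z-derivative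
  set c1 : ℝ := mu1 / (2 * lam1 * rho0) with hc1
  have hFG : (fun z' => (mu1 / (2 * lam1 * rho0) * w z' t + mu3)
        * deriv (fun z'' => w z'' t) z')
      = fun z' => (c1 * (K * Real.exp (-rho0 * z')) + mu3)
        * (-rho0 * (K * Real.exp (-rho0 * z'))) := by
    funext z'
    rw [hwz z', hdz z', hc1]
  have hGd : HasDerivAt (fun z' => (c1 * (K * Real.exp (-rho0 * z')) + mu3)
        * (-rho0 * (K * Real.exp (-rho0 * z'))))
      ((c1 * (-rho0 * (K * X))) * (-rho0 * (K * X))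
        + (c1 * (K * X) + mu3) * (-rho0 * (-rho0 * (K * X)))) z := by
    have h1 : HasDerivAt (fun z' => c1 * (K * Real.exp (-rho0 * z')) + mu3)
        (c1 * (-rho0 * (K * X))) z := ((hKz z).const_mul c1).add_const mu3
    have h2 : HasDerivAt (fun z' => -rho0 * (K * Real.exp (-rho0 * z')))
        (-rho0 * (-rho0 * (K * X))) z := (hKz z).const_mul (-rho0)
    have := h1.mul h2
    simpa [hX, Pi.mul_def] using this
  have hRHSd : deriv (fun z' => (mu1 / (2 * lam1 * rho0) * w z' t + mu3)
        * deriv (fun z'' => w z'' t) z') z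
      = (c1 * (-rho0 * (K * X))) * (-rho0 * (K * X))
        + (c1 * (K * X) + mu3) * (-rho0 * (-rho0 * (K * X))) := by
    rw [hFG]
    exact hGd.deriv
  -- time derivative of w
  set C : ℝ := A0 * X with hC
  have hwt : (fun τ' : ℝ => w z τ') = fun τ' : ℝ => C * E τ' := by
    funext τ'
    rw [hw z τ', hC, hX]
    ring
  have hDt : ∀ τ : ℝ, 0 < τ → deriv (fun τ' : ℝ => w z τ') τ
      = C * ∑' s : ℕ, gamma ^ s * ((α * (s:ℝ)) * τ ^ (α * (s : ℝ) - 1))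
          / Real.Gamma (α * (s : ℝ) + 1) := by
    intro τ hτ
    rw [hwt]
    exact ((ML_hasDeriv hα0 gamma hτ).const_mul C).deriv
  -- the Caputo integral
  have hIcongr : ∫ τ in (0:ℝ)..t, deriv (fun τ' => w z τ') τ * (t - τ) ^ (-α)
      = ∫ τ in (0:ℝ)..t, C * ((∑' s : ℕ, gamma ^ s * ((α * (s:ℝ)) * τ ^ (α * (s : ℝ) - 1))
          / Real.Gamma (α * (s : ℝ) + 1)) * (t - τ) ^ (-α)) := by
    apply intervalIntegral.integral_congr_ae
    filter_upwards [] with τ hτ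
    rw [Set.uIoc_of_le ht.le] at hτ
    rw [hDt τ hτ.1]
    ring
  have hcore := caputo_ML hα0 hα1 gamma ht
  have hLHS : (1 / Real.Gamma (1 - α))
        * ∫ τ in (0:ℝ)..t, deriv (fun τ' => w z τ') τ * (t - τ) ^ (-α)
      = gamma * (K * X) := by
    rw [hIcongr, intervalIntegral.integral_const_mul, hcore]
    field_simp [hK, hC]
    ring
  rw [hLHS, hRHSd, hdz z, hwz z]
  rw [hgamma, hc1, hX]
  field_simp
  ring
end

section
/- Let β₁, c₀, k₀, ρ₁, a, b₀ be real constants. Then for the function w(z) = b₀ + a·e^{−ρ₁z} one has, for all z ∈ ℝ, F_T[w](z) = (ρ₁²(c₀ − β₁b₀) − ρ₁k₀)·a·e^{−ρ₁z}; in particular the two-dimensional linear space spanned by {1, e^{−ρ₁z}} is invariant under F_T. -/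
/-- The two-dimensional space spanned by `{1, e^{−ρ₁z}}` is invariant under the
quadratically nonlinear operator `F_T[w] = (d/dz)((β₁·w + c₀)·w') + (2β₁ρ₁·w + k₀)·w'`:
for `w(z) = b₀ + a·e^{−ρ₁z}` one has `F_T[w](z) = (ρ₁²(c₀ − β₁b₀) − ρ₁k₀)·a·e^{−ρ₁z}`. -/
theorem stmt_4 (beta1 c0 k0 rho1 a b0 : ℝ)
    (w : ℝ → ℝ) (hw : ∀ z, w z = b0 + a * Real.exp (-rho1 * z)) :
    ∀ z : ℝ,
      deriv (fun z' => (beta1 * w z' + c0) * deriv w z') z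
        + (2 * beta1 * rho1 * w z + k0) * deriv w z
      = (rho1 ^ 2 * (c0 - beta1 * b0) - rho1 * k0) * a * Real.exp (-rho1 * z) := by
  have hwe : w = fun z => b0 + a * Real.exp (-rho1 * z) := funext hw
  subst hwe
  have hE : ∀ z : ℝ, HasDerivAt (fun z' : ℝ => Real.exp (-rho1 * z'))
      (-rho1 * Real.exp (-rho1 * z)) z := by
    intro z
    simpa [mul_comm] using ((hasDerivAt_id z).const_mul (-rho1)).exp
  have hW : ∀ z : ℝ, HasDerivAt (fun z' : ℝ => b0 + a * Real.exp (-rho1 * z'))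
      (a * (-rho1 * Real.exp (-rho1 * z))) z := by
    intro z
    exact ((hE z).const_mul a).const_add b0
  have hdw : deriv (fun z' : ℝ => b0 + a * Real.exp (-rho1 * z'))
      = fun z => a * (-rho1 * Real.exp (-rho1 * z)) := funext fun z => (hW z).deriv
  intro z
  have hinner : HasDerivAt
      (fun z' => (beta1 * (b0 + a * Real.exp (-rho1 * z')) + c0) *
        (a * (-rho1 * Real.exp (-rho1 * z'))))
      ((beta1 * (a * (-rho1 * Real.exp (-rho1 * z)))) *
        (a * (-rho1 * Real.exp (-rho1 * z)))
       + (beta1 * (b0 + a * Real.exp (-rho1 * z)) + c0) *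
        (a * (-rho1 * (-rho1 * Real.exp (-rho1 * z))))) z := by
    have h1 : HasDerivAt (fun z' => beta1 * (b0 + a * Real.exp (-rho1 * z')) + c0)
        (beta1 * (a * (-rho1 * Real.exp (-rho1 * z)))) z :=
      ((hW z).const_mul beta1).add_const c0
    have h2 : HasDerivAt (fun z' => a * (-rho1 * Real.exp (-rho1 * z')))
        (a * (-rho1 * (-rho1 * Real.exp (-rho1 * z)))) z :=
      ((hE z).const_mul (-rho1)).const_mul a
    exact h1.mul h2
  rw [show (fun z' => (beta1 * (b0 + a * Real.exp (-rho1 * z')) + c0) *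
        deriv (fun z'' : ℝ => b0 + a * Real.exp (-rho1 * z'')) z')
      = (fun z' => (beta1 * (b0 + a * Real.exp (-rho1 * z')) + c0) *
        (a * (-rho1 * Real.exp (-rho1 * z')))) from funext fun z' => by rw [hdw]]
  rw [hinner.deriv, hdw]
  ring
end

section
/- Let β₁, c₀, k₀, ρ₁, a₀, b₀ be real constants and set γ = ρ₁²(c₀ − β₁b₀) − ρ₁k₀. Then the function w(z,t) = b₀ + a₀·e^{γt − ρ₁z} satisfies, for all z ∈ ℝ and t ∈ ℝ, the quadratically nonlinear convection–diffusion equation ∂w/∂t = ∂/∂z( (β₁·w + c₀)·∂w/∂z ) + (2β₁ρ₁·w + k₀)·∂w/∂z. -/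
/-- With `γ = ρ₁²(c₀ − β₁b₀) − ρ₁k₀`, the function `w(z,t) = b₀ + a₀·e^{γt − ρ₁z}`
solves the quadratically nonlinear convection–diffusion equation
`∂w/∂t = ∂/∂z((β₁·w + c₀)·∂w/∂z) + (2β₁ρ₁·w + k₀)·∂w/∂z`. -/
theorem stmt_5 (beta1 c0 k0 rho1 a0 b0 : ℝ)
    (gamma : ℝ) (hgamma : gamma = rho1 ^ 2 * (c0 - beta1 * b0) - rho1 * k0)
    (w : ℝ → ℝ → ℝ) (hw : ∀ z t, w z t = b0 + a0 * Real.exp (gamma * t - rho1 * z)) :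
    ∀ z t : ℝ,
      deriv (fun t' => w z t') t
      = deriv (fun z' => (beta1 * w z' t + c0) * deriv (fun z'' => w z'' t) z') z
        + (2 * beta1 * rho1 * w z t + k0) * deriv (fun z' => w z' t) z := by
  have hE : ∀ (x t : ℝ), HasDerivAt (fun z' => Real.exp (gamma * t - rho1 * z'))
      (-rho1 * Real.exp (gamma * t - rho1 * x)) x := by
    intro x t
    have h1 : HasDerivAt (fun z' : ℝ => gamma * t - rho1 * z') (-rho1) x := by
      simpa using ((hasDerivAt_id x).const_mul rho1).const_sub (gamma * t)
    simpa [mul_comm] using h1.exp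
  have hWz : ∀ (x t : ℝ), HasDerivAt (fun z' => w z' t)
      (a0 * (-rho1 * Real.exp (gamma * t - rho1 * x))) x := by
    intro x t
    simp only [hw]
    exact ((hE x t).const_mul a0).const_add b0
  intro z t
  -- time derivative
  have hWt : HasDerivAt (fun t' => w z t') (a0 * (Real.exp (gamma * t - rho1 * z) * gamma)) t := by
    simp only [hw]
    have h1 : HasDerivAt (fun t' : ℝ => gamma * t' - rho1 * z) gamma t := by
      simpa using ((hasDerivAt_id t).const_mul gamma).sub_const (rho1 * z)
    exact (h1.exp.const_mul a0).const_add b0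
  -- rewrite the inner function explicitly
  have hrw : (fun z' => (beta1 * w z' t + c0) * deriv (fun z'' => w z'' t) z')
      = fun z' => (beta1 * (b0 + a0 * Real.exp (gamma * t - rho1 * z')) + c0)
          * (a0 * (-rho1 * Real.exp (gamma * t - rho1 * z'))) := by
    funext z'
    rw [(hWz z' t).deriv, hw]
  have hF1 : HasDerivAt (fun z' => beta1 * (b0 + a0 * Real.exp (gamma * t - rho1 * z')) + c0)
      (beta1 * (a0 * (-rho1 * Real.exp (gamma * t - rho1 * z)))) z :=
    ((((hE z t).const_mul a0).const_add b0).const_mul beta1).add_const c0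
  have hF2 : HasDerivAt (fun z' => a0 * (-rho1 * Real.exp (gamma * t - rho1 * z')))
      (a0 * (-rho1 * (-rho1 * Real.exp (gamma * t - rho1 * z)))) z :=
    ((hE z t).const_mul (-rho1)).const_mul a0
  have hprod : HasDerivAt (fun z' => (beta1 * (b0 + a0 * Real.exp (gamma * t - rho1 * z')) + c0)
      * (a0 * (-rho1 * Real.exp (gamma * t - rho1 * z')))) _ z := hF1.mul hF2
  rw [hWt.deriv, hrw, hprod.deriv, (hWz z t).deriv, hw, hgamma]
  ring
end

section
/- Let β₁, c₀, k₀, ρ₁, a₀, a₁, b₀ be real constants and suppose γ = ρ₁²(c₀ − β₁b₀) − ρ₁k₀ > 0. Then the function w(z,t) = b₀ + (a₀·cosh(√γ·t) + (a₁/√γ)·sinh(√γ·t))·e^{−ρ₁z} satisfies, for all z ∈ ℝ and t ∈ ℝ, the wave-type quadratically nonlinear convection–diffusion equation ∂²w/∂t² = ∂/∂z( (β₁·w + c₀)·∂w/∂z ) + (2β₁ρ₁·w + k₀)·∂w/∂z. -/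
/-- With `γ = ρ₁²(c₀ − β₁b₀) − ρ₁k₀ > 0`, the function
`w(z,t) = b₀ + (a₀·cosh(√γ t) + (a₁/√γ)·sinh(√γ t))·e^{−ρ₁z}` solves the wave-type
quadratically nonlinear convection–diffusion equation
`∂²w/∂t² = ∂/∂z((β₁·w + c₀)·∂w/∂z) + (2β₁ρ₁·w + k₀)·∂w/∂z`. -/
theorem stmt_6 (beta1 c0 k0 rho1 a0 a1 b0 : ℝ)
    (gamma : ℝ) (hgamma : gamma = rho1 ^ 2 * (c0 - beta1 * b0) - rho1 * k0)
    (hpos : 0 < gamma)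
    (w : ℝ → ℝ → ℝ)
    (hw : ∀ z t, w z t = b0 +
      (a0 * Real.cosh (Real.sqrt gamma * t) + a1 / Real.sqrt gamma * Real.sinh (Real.sqrt gamma * t))
        * Real.exp (-rho1 * z)) :
    ∀ z t : ℝ,
      deriv (fun t' => deriv (fun t'' => w z t'') t') t
      = deriv (fun z' => (beta1 * w z' t + c0) * deriv (fun z'' => w z'' t) z') z
        + (2 * beta1 * rho1 * w z t + k0) * deriv (fun z' => w z' t) z := by
  intro z t
  set s := Real.sqrt gamma with hsdef
  have hspos : 0 < s := Real.sqrt_pos.mpr hpos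
  have hsne : s ≠ 0 := ne_of_gt hspos
  have hs2 : s * s = gamma := Real.mul_self_sqrt hpos.le
  have key : s * s = rho1 ^ 2 * (c0 - beta1 * b0) - rho1 * k0 := hs2.trans hgamma
  -- exp derivative helper
  have hE : ∀ x : ℝ, HasDerivAt (fun y : ℝ => Real.exp (-rho1 * y))
      (-rho1 * Real.exp (-rho1 * x)) x := by
    intro x
    have h1 : HasDerivAt (fun y : ℝ => -rho1 * y) (-rho1) x := by
      simpa using (hasDerivAt_id x).const_mul (-rho1)
    simpa [mul_comm] using h1.exp
  set A : ℝ := a0 * Real.cosh (s * t) + a1 / s * Real.sinh (s * t) with hA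
  -- z-derivative of w at any point
  have hAz : ∀ x : ℝ, deriv (fun z'' => w z'' t) x = A * (-rho1 * Real.exp (-rho1 * x)) := by
    intro x
    have hfun : (fun z'' => w z'' t) = fun z'' => b0 + A * Real.exp (-rho1 * z'') :=
      funext fun z' => hw z' t
    rw [hfun]
    exact (((hE x).const_mul A).const_add b0).deriv
  -- rewrite the flux function
  have hflux : (fun z' => (beta1 * w z' t + c0) * deriv (fun z'' => w z'' t) z')
      = fun z' => (beta1 * (b0 + A * Real.exp (-rho1 * z')) + c0)
          * (A * (-rho1 * Real.exp (-rho1 * z'))) := by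
    funext z'
    rw [hw z' t, hAz z']
  have hf : HasDerivAt (fun z' => beta1 * (b0 + A * Real.exp (-rho1 * z')) + c0)
      (beta1 * (A * (-rho1 * Real.exp (-rho1 * z)))) z :=
    ((((hE z).const_mul A).const_add b0).const_mul beta1).add_const c0
  have hg : HasDerivAt (fun z' => A * (-rho1 * Real.exp (-rho1 * z')))
      (A * (-rho1 * (-rho1 * Real.exp (-rho1 * z)))) z :=
    ((hE z).const_mul (-rho1)).const_mul A
  have hfluxderiv : deriv (fun z' => (beta1 * w z' t + c0) * deriv (fun z'' => w z'' t) z') z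
      = beta1 * (A * (-rho1 * Real.exp (-rho1 * z)))
          * (A * (-rho1 * Real.exp (-rho1 * z)))
        + (beta1 * (b0 + A * Real.exp (-rho1 * z)) + c0)
          * (A * (-rho1 * (-rho1 * Real.exp (-rho1 * z)))) := by
    rw [hflux]
    exact (hf.mul hg).deriv
  -- t-derivatives
  have hT : ∀ t' : ℝ, HasDerivAt
      (fun t'' => a0 * Real.cosh (s * t'') + a1 / s * Real.sinh (s * t''))
      (a0 * s * Real.sinh (s * t') + a1 * Real.cosh (s * t')) t' := by
    intro t'
    have hlin : HasDerivAt (fun y : ℝ => s * y) s t' := by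
      simpa using (hasDerivAt_id t').const_mul s
    have h := (hlin.cosh.const_mul a0).add (hlin.sinh.const_mul (a1 / s))
    refine h.congr_deriv ?_
    field_simp
  have hwt : ∀ t' : ℝ, deriv (fun t'' => w z t'') t'
      = (a0 * s * Real.sinh (s * t') + a1 * Real.cosh (s * t')) * Real.exp (-rho1 * z) := by
    intro t'
    have hfun : (fun t'' => w z t'') = fun t'' =>
        b0 + (a0 * Real.cosh (s * t'') + a1 / s * Real.sinh (s * t'')) * Real.exp (-rho1 * z) :=
      funext fun t'' => hw z t''
    rw [hfun]
    exact (((hT t').mul_const _).const_add b0).deriv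
  have hT2 : HasDerivAt (fun t' => a0 * s * Real.sinh (s * t') + a1 * Real.cosh (s * t'))
      (a0 * s * (Real.cosh (s * t) * s) + a1 * (Real.sinh (s * t) * s)) t := by
    have hlin : HasDerivAt (fun y : ℝ => s * y) s t := by
      simpa using (hasDerivAt_id t).const_mul s
    exact (hlin.sinh.const_mul (a0 * s)).add (hlin.cosh.const_mul a1)
  have hLHS : deriv (fun t' => deriv (fun t'' => w z t'') t') t
      = (a0 * s * (Real.cosh (s * t) * s) + a1 * (Real.sinh (s * t) * s)) * Real.exp (-rho1 * z) := by
    have hfun : (fun t' => deriv (fun t'' => w z t'') t')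
        = fun t' => (a0 * s * Real.sinh (s * t') + a1 * Real.cosh (s * t')) * Real.exp (-rho1 * z) :=
      funext hwt
    rw [hfun]
    exact (hT2.mul_const _).deriv
  rw [hLHS, hfluxderiv, hw z t, hAz z, hA]
  obtain ⟨B, hB⟩ : ∃ B : ℝ, a1 = B * s := ⟨a1 / s, by field_simp⟩
  rw [hB]
  simp only [mul_div_assoc, div_self hsne, mul_one]
  linear_combination (Real.exp (-rho1 * z) * (a0 * Real.cosh (s * t) + B * Real.sinh (s * t))) * key
end

section
/- Let γ₁, γ₂, c₀, a₀, a₁, b₀, b₁ be real constants. Then the function w(z,t) = (1/12)·t⁴·b₁²γ₁ + t³·((1/3)·b₁b₀γ₁ + (1/6)·b₁γ₂) + (1/2)·b₀(b₀γ₁ + γ₂)·t² + a₁·t + a₀ + (b₁·t + b₀)·z satisfies, for all z ∈ ℝ and t ∈ ℝ, the wave-type nonlinear convection–diffusion equation ∂²w/∂t² = ∂/∂z( (γ₁·w + c₀)·∂w/∂z ) + γ₂·∂w/∂z. -/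
lemma quartic_deriv (c4 c3 c2 c1 c0 : ℝ) (x : ℝ) :
    deriv (fun x => c4 * x ^ 4 + c3 * x ^ 3 + c2 * x ^ 2 + c1 * x + c0) x
      = 4 * c4 * x ^ 3 + 3 * c3 * x ^ 2 + 2 * c2 * x + c1 := by
  have h := (((((hasDerivAt_pow 4 x).const_mul c4).add
      ((hasDerivAt_pow 3 x).const_mul c3)).add
      ((hasDerivAt_pow 2 x).const_mul c2)).add
      ((hasDerivAt_id x).const_mul c1)).add_const c0
  convert h.deriv using 1
  · rfl
  norm_num
  ring

lemma cubic_deriv (c3 c2 c1 c0 : ℝ) (x : ℝ) :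
    deriv (fun x => c3 * x ^ 3 + c2 * x ^ 2 + c1 * x + c0) x
      = 3 * c3 * x ^ 2 + 2 * c2 * x + c1 := by
  have h := ((((hasDerivAt_pow 3 x).const_mul c3).add
      ((hasDerivAt_pow 2 x).const_mul c2)).add
      ((hasDerivAt_id x).const_mul c1)).add_const c0
  convert h.deriv using 1
  · rfl
  norm_num
  ring

lemma affine_deriv (a b : ℝ) (x : ℝ) :
    deriv (fun x => a * x + b) x = a := by
  have h := ((hasDerivAt_id x).const_mul a).add_const b
  simpa using h.deriv

/-- The function
`w(z,t) = (1/12)t⁴b₁²γ₁ + t³((1/3)b₁b₀γ₁ + (1/6)b₁γ₂) + (1/2)b₀(b₀γ₁ + γ₂)t² + a₁t + a₀ + (b₁t + b₀)z`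
solves the wave-type nonlinear convection–diffusion equation
`∂²w/∂t² = ∂/∂z((γ₁·w + c₀)·∂w/∂z) + γ₂·∂w/∂z`. -/
theorem stmt_8 (gamma1 gamma2 c0 a0 a1 b0 b1 : ℝ)
    (w : ℝ → ℝ → ℝ)
    (hw : ∀ z t, w z t =
      (1 / 12) * t ^ 4 * b1 ^ 2 * gamma1
        + t ^ 3 * ((1 / 3) * b1 * b0 * gamma1 + (1 / 6) * b1 * gamma2)
        + (1 / 2) * b0 * (b0 * gamma1 + gamma2) * t ^ 2
        + a1 * t + a0 + (b1 * t + b0) * z) :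
    ∀ z t : ℝ,
      deriv (fun t' => deriv (fun t'' => w z t'') t') t
      = deriv (fun z' => (gamma1 * w z' t + c0) * deriv (fun z'' => w z'' t) z') z
        + gamma2 * deriv (fun z' => w z' t) z := by
  intro z t
  -- z-derivative at any point and any time
  have hz : ∀ (t' z' : ℝ), deriv (fun z'' => w z'' t') z' = b1 * t' + b0 := by
    intro t' z'
    have hfe : (fun z'' => w z'' t') = fun z'' => (b1 * t' + b0) * z'' +
        ((1 / 12) * t' ^ 4 * b1 ^ 2 * gamma1
          + t' ^ 3 * ((1 / 3) * b1 * b0 * gamma1 + (1 / 6) * b1 * gamma2)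
          + (1 / 2) * b0 * (b0 * gamma1 + gamma2) * t' ^ 2
          + a1 * t' + a0) := by
      funext z''; rw [hw]; ring
    rw [hfe, affine_deriv]
  -- first t-derivative at any point
  have ht1 : ∀ t' : ℝ, deriv (fun t'' => w z t'') t'
      = 4 * ((1 / 12) * b1 ^ 2 * gamma1) * t' ^ 3
        + 3 * ((1 / 3) * b1 * b0 * gamma1 + (1 / 6) * b1 * gamma2) * t' ^ 2
        + 2 * ((1 / 2) * b0 * (b0 * gamma1 + gamma2)) * t' + (a1 + b1 * z) := by
    intro t'
    have hfe : (fun t'' => w z t'') = fun t'' =>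
        ((1 / 12) * b1 ^ 2 * gamma1) * t'' ^ 4
          + ((1 / 3) * b1 * b0 * gamma1 + (1 / 6) * b1 * gamma2) * t'' ^ 3
          + ((1 / 2) * b0 * (b0 * gamma1 + gamma2)) * t'' ^ 2
          + (a1 + b1 * z) * t'' + (a0 + b0 * z) := by
      funext t''; rw [hw]; ring
    rw [hfe, quartic_deriv]
  -- second t-derivative
  have ht2 : deriv (fun t' => deriv (fun t'' => w z t'') t') t
      = 3 * (4 * ((1 / 12) * b1 ^ 2 * gamma1)) * t ^ 2
        + 2 * (3 * ((1 / 3) * b1 * b0 * gamma1 + (1 / 6) * b1 * gamma2)) * t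
        + 2 * ((1 / 2) * b0 * (b0 * gamma1 + gamma2)) := by
    have hfe : (fun t' => deriv (fun t'' => w z t'') t') = fun t' =>
        (4 * ((1 / 12) * b1 ^ 2 * gamma1)) * t' ^ 3
          + (3 * ((1 / 3) * b1 * b0 * gamma1 + (1 / 6) * b1 * gamma2)) * t' ^ 2
          + (2 * ((1 / 2) * b0 * (b0 * gamma1 + gamma2))) * t' + (a1 + b1 * z) := by
      funext t'; rw [ht1]
    rw [hfe, cubic_deriv]
  -- RHS first term
  have hr : deriv (fun z' => (gamma1 * w z' t + c0) * deriv (fun z'' => w z'' t) z') z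
      = gamma1 * (b1 * t + b0) * (b1 * t + b0) := by
    have hfe : (fun z' => (gamma1 * w z' t + c0) * deriv (fun z'' => w z'' t) z')
        = fun z' => (gamma1 * (b1 * t + b0) * (b1 * t + b0)) * z' +
            ((gamma1 * ((1 / 12) * t ^ 4 * b1 ^ 2 * gamma1
              + t ^ 3 * ((1 / 3) * b1 * b0 * gamma1 + (1 / 6) * b1 * gamma2)
              + (1 / 2) * b0 * (b0 * gamma1 + gamma2) * t ^ 2
              + a1 * t + a0) + c0) * (b1 * t + b0)) := by
      funext z'; rw [hz t z', hw]; ring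
    rw [hfe, affine_deriv]
  rw [ht2, hr, hz t z]
  ring
end

section
/- Let 0 < α < 1 and let γ₁, γ₂, c₀, a₀, b₀ be real constants. Define w(z,t) = b₀(γ₁b₀ + γ₂)·t^α/Γ(α+1) + a₀ + b₀·z. Then for every z ∈ ℝ and every t > 0, the Caputo fractional time derivative of order α of w satisfies (1/Γ(1−α)) ∫₀ᵗ (∂w/∂τ)(z,τ)·(t−τ)^{−α} dτ = ∂/∂z( (γ₁·w + c₀)·∂w/∂z ) + γ₂·∂w/∂z evaluated at (z,t). -/
open MeasureTheory intervalIntegral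

lemma real_beta {α t : ℝ} (hα0 : 0 < α) (hα1 : α < 1) (ht : 0 < t) :
    ∫ τ in (0:ℝ)..t, τ ^ (α - 1) * (t - τ) ^ (-α)
      = Real.Gamma α * Real.Gamma (1 - α) := by
  have hs : (0:ℝ) < (α:ℂ).re := by simpa using hα0
  have hv : (0:ℝ) < ((1:ℂ) - α).re := by simp [hα1]
  have hscaled := Complex.betaIntegral_scaled (α:ℂ) (1 - α) ht
  have hsum : (α:ℂ) + (1 - α) = 1 := by ring
  have hG := Complex.Gamma_mul_Gamma_eq_betaIntegral hs hv
  rw [hsum, Complex.Gamma_one, one_mul] at hG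
  have hcongr : ∫ x in (0:ℝ)..t, (x:ℂ) ^ ((α:ℂ) - 1) * ((t:ℂ) - x) ^ ((1:ℂ) - α - 1)
      = ((∫ τ in (0:ℝ)..t, τ ^ (α - 1) * (t - τ) ^ (-α) : ℝ) : ℂ) := by
    rw [← intervalIntegral.integral_ofReal]
    apply intervalIntegral.integral_congr
    intro x hx
    rw [Set.uIcc_of_le ht.le] at hx
    obtain ⟨h0x, hxt⟩ := hx
    push_cast
    rw [Complex.ofReal_cpow h0x, Complex.ofReal_cpow (by linarith)]
    push_cast
    ring_nf
  have ht0 : (t:ℂ) ^ ((α:ℂ) + (1 - α) - 1) = 1 := by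
    rw [show (α:ℂ) + (1 - α) - 1 = 0 by ring, Complex.cpow_zero]
  rw [hcongr, ht0, one_mul, ← hG] at hscaled
  have : ((∫ τ in (0:ℝ)..t, τ ^ (α - 1) * (t - τ) ^ (-α) : ℝ) : ℂ)
      = ((Real.Gamma α * Real.Gamma (1 - α) : ℝ) : ℂ) := by
    rw [hscaled, show ((1:ℂ) - α) = ((1 - α : ℝ):ℂ) by push_cast; ring,
      Complex.Gamma_ofReal, Complex.Gamma_ofReal]
    push_cast
    ring
  exact_mod_cast this

/-- For `0 < α < 1`, the function
`w(z,t) = b₀(γ₁b₀ + γ₂)·t^α/Γ(α+1) + a₀ + b₀z` solves the time-fractional nonlinear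
convection–diffusion equation, where the Caputo derivative of order `α` in time is
`(1/Γ(1−α)) ∫₀ᵗ (∂w/∂τ)(z,τ)·(t−τ)^{−α} dτ`. -/
theorem stmt_9 (α gamma1 gamma2 c0 a0 b0 : ℝ) (hα0 : 0 < α) (hα1 : α < 1)
    (w : ℝ → ℝ → ℝ)
    (hw : ∀ z t, w z t =
      b0 * (gamma1 * b0 + gamma2) * t ^ α / Real.Gamma (α + 1) + a0 + b0 * z) :
    ∀ z t : ℝ, 0 < t →
      (1 / Real.Gamma (1 - α))
          * ∫ τ in (0:ℝ)..t, deriv (fun τ' => w z τ') τ * (t - τ) ^ (-α)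
      = deriv (fun z' => (gamma1 * w z' t + c0) * deriv (fun z'' => w z'' t) z') z
        + gamma2 * deriv (fun z' => w z' t) z := by
  intro z t ht
  set C : ℝ := b0 * (gamma1 * b0 + gamma2) with hC
  set G : ℝ := Real.Gamma (α + 1) with hGdef
  have hGval : G = α * Real.Gamma α := by
    rw [hGdef, Real.Gamma_add_one hα0.ne']
  have hΓα : 0 < Real.Gamma α := Real.Gamma_pos_of_pos hα0
  have hG0 : G ≠ 0 := by rw [hGval]; positivity
  have hΓ1α : 0 < Real.Gamma (1 - α) := Real.Gamma_pos_of_pos (by linarith)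
  -- spatial derivative is b0 everywhere
  have hderiv_z : ∀ t', deriv (fun z'' => w z'' t') = fun _ => b0 := by
    intro t'
    funext z'
    have : (fun z'' => w z'' t') = fun z'' => C * t' ^ α / G + a0 + b0 * z'' := by
      funext z''; rw [hw]
    rw [this]
    have h1 : HasDerivAt (fun z'' : ℝ => C * t' ^ α / G + a0 + b0 * z'') b0 z' := by
      simpa using ((hasDerivAt_id z').const_mul b0).const_add (C * t' ^ α / G + a0)
    exact h1.deriv
  -- RHS computation
  have hRHS : deriv (fun z' => (gamma1 * w z' t + c0) * deriv (fun z'' => w z'' t) z') z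
        + gamma2 * deriv (fun z' => w z' t) z = C := by
    rw [hderiv_z t]
    have hfun : (fun z' => (gamma1 * w z' t + c0) * b0)
        = fun z' => (gamma1 * (C * t ^ α / G + a0 + b0 * z') + c0) * b0 := by
      funext z'; rw [hw]
    rw [hfun]
    have h2 : HasDerivAt (fun z' : ℝ =>
        (gamma1 * (C * t ^ α / G + a0 + b0 * z') + c0) * b0) (gamma1 * b0 * b0) z := by
      have : HasDerivAt (fun z' : ℝ => z') 1 z := hasDerivAt_id z
      have := (((this.const_mul b0).const_add (C * t ^ α / G + a0)).const_mul
        gamma1).add_const c0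
      simpa [mul_comm, mul_assoc, mul_left_comm] using this.mul_const b0
    rw [h2.deriv]
    show gamma1 * b0 * b0 + gamma2 * b0 = C
    rw [hC]; ring
  -- time derivative on (0, t]
  have hderiv_t : ∀ τ : ℝ, 0 < τ →
      deriv (fun τ' => w z τ') τ = C / G * (α * τ ^ (α - 1)) := by
    intro τ hτ
    have hfun : (fun τ' => w z τ') = fun τ' => C / G * τ' ^ α + (a0 + b0 * z) := by
      funext τ'; rw [hw]; ring
    rw [hfun]
    have h1 : HasDerivAt (fun τ' : ℝ => τ' ^ α) (α * τ ^ (α - 1)) τ :=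
      Real.hasDerivAt_rpow_const (Or.inl hτ.ne')
    exact ((h1.const_mul (C / G)).add_const (a0 + b0 * z)).deriv
  -- rewrite integral
  have hint : (∫ τ in (0:ℝ)..t, deriv (fun τ' => w z τ') τ * (t - τ) ^ (-α))
      = C / G * α * (Real.Gamma α * Real.Gamma (1 - α)) := by
    rw [show (∫ τ in (0:ℝ)..t, deriv (fun τ' => w z τ') τ * (t - τ) ^ (-α))
        = ∫ τ in (0:ℝ)..t, C / G * α * (τ ^ (α - 1) * (t - τ) ^ (-α)) from ?_,
      intervalIntegral.integral_const_mul, real_beta hα0 hα1 ht]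
    apply intervalIntegral.integral_congr_ae
    filter_upwards with x hx
    rw [Set.uIoc_of_le ht.le] at hx
    rw [hderiv_t x hx.1]
    ring
  rw [hint, hRHS, hGval]
  field_simp
end

section
/- Let 1 < α < 2 and let γ₁, γ₂, c₀, a₀, a₁, b₀, b₁ be real constants. Define w(z,t) = 2b₁²γ₁·t^{α+2}/Γ(α+3) + (2b₁b₀γ₁ + b₁γ₂)·t^{α+1}/Γ(α+2) + b₀(b₀γ₁ + γ₂)·t^α/Γ(α+1) + a₁·t + a₀ + (b₁·t + b₀)·z. Then for every z ∈ ℝ and every t > 0, the Caputo fractional time derivative of order α of w satisfies (1/Γ(2−α)) ∫₀ᵗ (∂²w/∂τ²)(z,τ)·(t−τ)^{1−α} dτ = ∂/∂z( (γ₁·w + c₀)·∂w/∂z ) + γ₂·∂w/∂z evaluated at (z,t). -/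
open MeasureTheory intervalIntegral

lemma rbeta_left {u : ℝ} (v : ℝ) {a : ℝ} (hu : 0 < u) (ha : 0 < a) :
    IntervalIntegrable (fun x : ℝ => x ^ (u - 1) * (a - x) ^ (v - 1)) volume 0 (a / 2) := by
  apply IntervalIntegrable.mul_continuousOn
  · exact intervalIntegral.intervalIntegrable_rpow' (by linarith)
  · intro x hx
    rw [Set.uIcc_of_le (by positivity : (0:ℝ) ≤ a / 2)] at hx
    apply ContinuousAt.continuousWithinAt
    exact (Real.continuousAt_rpow_const _ _ (Or.inl (by linarith [hx.2] : a - x ≠ 0))).comp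
      ((continuous_const.sub continuous_id).continuousAt)

lemma rbeta_integrable {u v a : ℝ} (hu : 0 < u) (hv : 0 < v) (ha : 0 < a) :
    IntervalIntegrable (fun x : ℝ => x ^ (u - 1) * (a - x) ^ (v - 1)) volume 0 a := by
  refine (rbeta_left v hu ha).trans ?_
  have h := ((rbeta_left u hv ha).comp_sub_left a).symm
  simp only [sub_zero, sub_sub_cancel] at h
  have : a - a / 2 = a / 2 := by ring
  rw [this] at h
  refine h.congr ?_
  intro x _; beta_reduce
  ring

lemma rbeta_value {u v a : ℝ} (hu : 0 < u) (hv : 0 < v) (ha : 0 < a) :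
    ∫ x in (0:ℝ)..a, x ^ (u - 1) * (a - x) ^ (v - 1)
      = Real.Gamma u * Real.Gamma v / Real.Gamma (u + v) * a ^ (u + v - 1) := by
  have hGuv : Real.Gamma (u + v) ≠ 0 := (Real.Gamma_pos_of_pos (by linarith)).ne'
  apply Complex.ofReal_injective
  have h1 : ((∫ x in (0:ℝ)..a, x ^ (u - 1) * (a - x) ^ (v - 1) : ℝ) : ℂ)
      = ∫ x in (0:ℝ)..a, (x : ℂ) ^ ((u : ℂ) - 1) * ((a : ℂ) - x) ^ ((v : ℂ) - 1) := by
    rw [← intervalIntegral.integral_ofReal]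
    rw [intervalIntegral.integral_of_le ha.le, intervalIntegral.integral_of_le ha.le]
    refine setIntegral_congr_fun measurableSet_Ioc fun x hx => ?_
    rw [Complex.ofReal_mul, Complex.ofReal_cpow hx.1.le,
      Complex.ofReal_cpow (by linarith [hx.2] : (0:ℝ) ≤ a - x)]
    push_cast
    ring
  rw [h1, Complex.betaIntegral_scaled (u : ℂ) (v : ℂ) ha]
  have h2 : Complex.betaIntegral (u : ℂ) (v : ℂ)
      = (Real.Gamma u : ℂ) * Real.Gamma v / Real.Gamma (u + v) := by
    have h3 := Complex.Gamma_mul_Gamma_eq_betaIntegral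
      (s := (u:ℂ)) (t := (v:ℂ)) (by simpa using hu) (by simpa using hv)
    rw [← Complex.ofReal_add, Complex.Gamma_ofReal, Complex.Gamma_ofReal,
      Complex.Gamma_ofReal] at h3
    have hne : (Real.Gamma (u + v) : ℂ) ≠ 0 := by exact_mod_cast hGuv
    rw [eq_div_iff hne, mul_comm, ← h3]
  rw [h2]
  have h4 : ((u:ℂ) + v - 1) = ((u + v - 1 : ℝ) : ℂ) := by push_cast; ring
  rw [h4, ← Complex.ofReal_cpow ha.le]
  push_cast
  ring


/-- For `1 < α < 2`, the function
`w(z,t) = 2b₁²γ₁·t^{α+2}/Γ(α+3) + (2b₁b₀γ₁ + b₁γ₂)·t^{α+1}/Γ(α+2) + b₀(b₀γ₁ + γ₂)·t^α/Γ(α+1)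
          + a₁t + a₀ + (b₁t + b₀)z`
solves the time-fractional nonlinear convection–diffusion equation, where the Caputo
derivative of order `α` in time is `(1/Γ(2−α)) ∫₀ᵗ (∂²w/∂τ²)(z,τ)·(t−τ)^{1−α} dτ`. -/
theorem stmt_10 (α gamma1 gamma2 c0 a0 a1 b0 b1 : ℝ) (hα0 : 1 < α) (hα1 : α < 2)
    (w : ℝ → ℝ → ℝ)
    (hw : ∀ z t, w z t =
      2 * b1 ^ 2 * gamma1 * t ^ (α + 2) / Real.Gamma (α + 3)
        + (2 * b1 * b0 * gamma1 + b1 * gamma2) * t ^ (α + 1) / Real.Gamma (α + 2)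
        + b0 * (b0 * gamma1 + gamma2) * t ^ α / Real.Gamma (α + 1)
        + a1 * t + a0 + (b1 * t + b0) * z) :
    ∀ z t : ℝ, 0 < t →
      (1 / Real.Gamma (2 - α))
          * ∫ τ in (0:ℝ)..t, deriv (fun τ' => deriv (fun τ'' => w z τ'') τ') τ * (t - τ) ^ (1 - α)
      = deriv (fun z' => (gamma1 * w z' t + c0) * deriv (fun z'' => w z'' t) z') z
        + gamma2 * deriv (fun z' => w z' t) z := by
  intro z t ht
  have hα1' : (0:ℝ) < α - 1 := by linarith
  have hαne : α ≠ 0 := by linarith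
  -- z-derivatives
  have hz : ∀ z' : ℝ, HasDerivAt (fun z'' => w z'' t) (b1 * t + b0) z' := by
    intro z'
    have hfun : (fun z'' => w z'' t) = fun z'' : ℝ =>
        (2 * b1 ^ 2 * gamma1 * t ^ (α + 2) / Real.Gamma (α + 3)
        + (2 * b1 * b0 * gamma1 + b1 * gamma2) * t ^ (α + 1) / Real.Gamma (α + 2)
        + b0 * (b0 * gamma1 + gamma2) * t ^ α / Real.Gamma (α + 1)
        + a1 * t + a0) + (b1 * t + b0) * z'' := funext fun z'' => by rw [hw]
    rw [hfun]
    simpa using ((hasDerivAt_id z').const_mul (b1 * t + b0)).const_add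
      (2 * b1 ^ 2 * gamma1 * t ^ (α + 2) / Real.Gamma (α + 3)
        + (2 * b1 * b0 * gamma1 + b1 * gamma2) * t ^ (α + 1) / Real.Gamma (α + 2)
        + b0 * (b0 * gamma1 + gamma2) * t ^ α / Real.Gamma (α + 1)
        + a1 * t + a0)
  -- RHS value
  have hR : deriv (fun z' => (gamma1 * w z' t + c0) * deriv (fun z'' => w z'' t) z') z
        + gamma2 * deriv (fun z' => w z' t) z
      = gamma1 * (b1 * t + b0) * (b1 * t + b0) + gamma2 * (b1 * t + b0) := by
    have h0 : (fun z' => (gamma1 * w z' t + c0) * deriv (fun z'' => w z'' t) z')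
        = fun z' => (gamma1 * w z' t + c0) * (b1 * t + b0) := by
      funext z'; rw [(hz z').deriv]
    rw [h0, (hz z).deriv, ((((hz z).const_mul gamma1).add_const c0).mul_const (b1 * t + b0)).deriv]
  -- first time derivative
  have hd1 : ∀ s : ℝ, 0 < s → HasDerivAt (fun τ => w z τ)
      (2 * b1 ^ 2 * gamma1 * (α + 2) / Real.Gamma (α + 3) * s ^ (α + 1)
        + (2 * b1 * b0 * gamma1 + b1 * gamma2) * (α + 1) / Real.Gamma (α + 2) * s ^ α
        + b0 * (b0 * gamma1 + gamma2) * α / Real.Gamma (α + 1) * s ^ (α - 1)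
        + (a1 + b1 * z)) s := by
    intro s hs
    have hfun : (fun τ => w z τ) = fun τ : ℝ =>
        2 * b1 ^ 2 * gamma1 * τ ^ (α + 2) / Real.Gamma (α + 3)
        + (2 * b1 * b0 * gamma1 + b1 * gamma2) * τ ^ (α + 1) / Real.Gamma (α + 2)
        + b0 * (b0 * gamma1 + gamma2) * τ ^ α / Real.Gamma (α + 1)
        + a1 * τ + a0 + (b1 * τ + b0) * z := funext fun τ => hw z τ
    rw [hfun]
    have h1 := ((Real.hasDerivAt_rpow_const (p := α + 2) (Or.inl hs.ne')).const_mul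
      (2 * b1 ^ 2 * gamma1)).div_const (Real.Gamma (α + 3))
    have h2 := ((Real.hasDerivAt_rpow_const (p := α + 1) (Or.inl hs.ne')).const_mul
      (2 * b1 * b0 * gamma1 + b1 * gamma2)).div_const (Real.Gamma (α + 2))
    have h3 := ((Real.hasDerivAt_rpow_const (p := α) (Or.inl hs.ne')).const_mul
      (b0 * (b0 * gamma1 + gamma2))).div_const (Real.Gamma (α + 1))
    have h4 : HasDerivAt (fun τ : ℝ => a1 * τ) a1 s := by
      simpa using (hasDerivAt_id s).const_mul a1
    have h5 : HasDerivAt (fun τ : ℝ => (b1 * τ + b0) * z) (b1 * z) s := by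
      simpa using (((hasDerivAt_id s).const_mul b1).add_const b0).mul_const z
    have h := ((((h1.add h2).add h3).add h4).add_const a0).add h5
    refine h.congr_deriv ?_
    rw [show α + 2 - 1 = α + 1 by ring, show α + 1 - 1 = α by ring]
    ring
  -- second time derivative
  have hd2 : ∀ τ ∈ Set.Ioc (0:ℝ) t,
      deriv (fun τ' => deriv (fun τ'' => w z τ'') τ') τ
      = 2 * b1 ^ 2 * gamma1 * (α + 2) / Real.Gamma (α + 3) * ((α + 1) * τ ^ α)
        + (2 * b1 * b0 * gamma1 + b1 * gamma2) * (α + 1) / Real.Gamma (α + 2) * (α * τ ^ (α - 1))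
        + b0 * (b0 * gamma1 + gamma2) * α / Real.Gamma (α + 1) * ((α - 1) * τ ^ (α - 2)) := by
    intro τ hτ
    have hτ0 := hτ.1
    have hev : (fun τ' => deriv (fun τ'' => w z τ'') τ') =ᶠ[nhds τ]
        (fun s => 2 * b1 ^ 2 * gamma1 * (α + 2) / Real.Gamma (α + 3) * s ^ (α + 1)
          + (2 * b1 * b0 * gamma1 + b1 * gamma2) * (α + 1) / Real.Gamma (α + 2) * s ^ α
          + b0 * (b0 * gamma1 + gamma2) * α / Real.Gamma (α + 1) * s ^ (α - 1)
          + (a1 + b1 * z)) := by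
      filter_upwards [Ioi_mem_nhds hτ0] with s hs using (hd1 s hs).deriv
    rw [hev.deriv_eq]
    have h1 := (Real.hasDerivAt_rpow_const (p := α + 1) (Or.inl hτ0.ne')).const_mul
      (2 * b1 ^ 2 * gamma1 * (α + 2) / Real.Gamma (α + 3))
    have h2 := (Real.hasDerivAt_rpow_const (p := α) (Or.inl hτ0.ne')).const_mul
      ((2 * b1 * b0 * gamma1 + b1 * gamma2) * (α + 1) / Real.Gamma (α + 2))
    have h3 := (Real.hasDerivAt_rpow_const (p := α - 1) (Or.inl hτ0.ne')).const_mul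
      (b0 * (b0 * gamma1 + gamma2) * α / Real.Gamma (α + 1))
    have h := (((h1.add h2).add h3).add_const (a1 + b1 * z))
    erw [h.deriv, show α + 1 - 1 = α by ring, show α - 1 - 1 = α - 2 by ring]
  -- rewrite the integral
  have key : (∫ τ in (0:ℝ)..t, deriv (fun τ' => deriv (fun τ'' => w z τ'') τ') τ * (t - τ) ^ (1 - α))
      = ∫ τ in (0:ℝ)..t,
        ((2 * b1 ^ 2 * gamma1 * (α + 2) / Real.Gamma (α + 3) * (α + 1))
            * (τ ^ (α + 1 - 1) * (t - τ) ^ (2 - α - 1))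
          + (((2 * b1 * b0 * gamma1 + b1 * gamma2) * (α + 1) / Real.Gamma (α + 2) * α)
            * (τ ^ (α - 1) * (t - τ) ^ (2 - α - 1))
          + (b0 * (b0 * gamma1 + gamma2) * α / Real.Gamma (α + 1) * (α - 1))
            * (τ ^ (α - 1 - 1) * (t - τ) ^ (2 - α - 1)))) := by
    rw [intervalIntegral.integral_of_le ht.le, intervalIntegral.integral_of_le ht.le]
    refine setIntegral_congr_fun measurableSet_Ioc fun τ hτ => ?_
    rw [hd2 τ hτ, show α + 1 - 1 = α by ring, show 2 - α - 1 = 1 - α by ring,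
      show α - 1 - 1 = α - 2 by ring]
    ring
  have I1 : IntervalIntegrable (fun τ : ℝ => τ ^ (α + 1 - 1) * (t - τ) ^ (2 - α - 1)) volume 0 t :=
    rbeta_integrable (by linarith) (by linarith) ht
  have I2 : IntervalIntegrable (fun τ : ℝ => τ ^ (α - 1) * (t - τ) ^ (2 - α - 1)) volume 0 t :=
    rbeta_integrable (by linarith) (by linarith) ht
  have I3 : IntervalIntegrable (fun τ : ℝ => τ ^ (α - 1 - 1) * (t - τ) ^ (2 - α - 1)) volume 0 t :=
    rbeta_integrable (by linarith) (by linarith) ht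
  rw [key, intervalIntegral.integral_add (I1.const_mul _) ((I2.const_mul _).add (I3.const_mul _)),
    intervalIntegral.integral_add (I2.const_mul _) (I3.const_mul _),
    intervalIntegral.integral_const_mul, intervalIntegral.integral_const_mul,
    intervalIntegral.integral_const_mul,
    rbeta_value (show (0:ℝ) < α + 1 by linarith) (show (0:ℝ) < 2 - α by linarith) ht,
    rbeta_value (show (0:ℝ) < α by linarith) (show (0:ℝ) < 2 - α by linarith) ht,
    rbeta_value hα1' (show (0:ℝ) < 2 - α by linarith) ht, hR]
  rw [show α + 1 + (2 - α) - 1 = (2:ℝ) by ring, show α + (2 - α) - 1 = (1:ℝ) by ring,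
    show α - 1 + (2 - α) - 1 = (0:ℝ) by ring, show α + 1 + (2 - α) = (3:ℝ) by ring,
    show α + (2 - α) = (2:ℝ) by ring, show α - 1 + (2 - α) = (1:ℝ) by ring]
  have ht2 : t ^ (2:ℝ) = t * t := by
    rw [show (2:ℝ) = ((2:ℕ):ℝ) by norm_num, Real.rpow_natCast]; ring
  rw [ht2, Real.rpow_one, Real.rpow_zero]
  have hG3 : Real.Gamma 3 = 2 := by
    rw [show (3:ℝ) = 2 + 1 by norm_num, Real.Gamma_add_one two_ne_zero, Real.Gamma_two]; ring
  have e0 := Real.Gamma_add_one hα1'.ne'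
  rw [show α - 1 + 1 = α by ring] at e0
  have e1 := Real.Gamma_add_one hαne
  have e2 := Real.Gamma_add_one (show α + 1 ≠ 0 by positivity)
  rw [show α + 1 + 1 = α + 2 by ring] at e2
  have e3 := Real.Gamma_add_one (show α + 2 ≠ 0 by positivity)
  rw [show α + 2 + 1 = α + 3 by ring] at e3
  rw [hG3, Real.Gamma_two, Real.Gamma_one, e3, e2, e1, e0]
  have hG1 : (0:ℝ) < Real.Gamma (α - 1) := Real.Gamma_pos_of_pos hα1'
  have hG2 : (0:ℝ) < Real.Gamma (2 - α) := Real.Gamma_pos_of_pos (by linarith)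
  have hne1 : α + 1 ≠ 0 := by positivity
  have hne2 : α + 2 ≠ 0 := by positivity
  field_simp
  ring
end

section
/- Let 0 < α < 1 and γ ∈ ℝ, and define C(t) = ∑_{s=0}^∞ γ^s t^{αs}/Γ(αs+1) for t ≥ 0, i.e. C(t) = E_{α,1}(γt^α). Then for every t > 0, C satisfies the Caputo fractional ordinary differential equation (1/Γ(1−α)) ∫₀ᵗ C′(τ)·(t−τ)^{−α} dτ = γ·C(t), and C(0) = 1. -/
open Real Filter


lemma gammaA {α x : ℝ} (hα0 : 0 < α) (hα1 : α < 1) (hx : 1 ≤ x) :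
    Real.Gamma x * (x + α - 1) ^ α ≤ Real.Gamma (x + α) := by
  set p := x + α - 1 with hp_def
  have hp : 0 < p := by simp only [hp_def]; linarith
  have hq : 0 < x + α := by linarith
  have hx0 : 0 < x := by linarith
  have hcvx := Real.convexOn_log_Gamma.2 (Set.mem_Ioi.mpr hp) (Set.mem_Ioi.mpr hq)
    hα0.le (by linarith : (0:ℝ) ≤ 1 - α) (by ring)
  have hcomb : α • p + (1 - α) • (x + α) = x := by
    simp only [smul_eq_mul, hp_def]; ring
  rw [hcomb] at hcvx
  have hGp : Real.Gamma (x + α) = p * Real.Gamma p := by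
    have := Real.Gamma_add_one hp.ne'
    rw [show p + 1 = x + α by rw [hp_def]; ring] at this
    exact this
  have hlogp : Real.log (Real.Gamma p) = Real.log (Real.Gamma (x + α)) - Real.log p := by
    rw [hGp, Real.log_mul hp.ne' (Real.Gamma_pos_of_pos hp).ne']
    ring
  simp only [Function.comp_apply, smul_eq_mul] at hcvx
  rw [hlogp] at hcvx
  have key : Real.log (Real.Gamma x) + α * Real.log p ≤ Real.log (Real.Gamma (x + α)) := by
    nlinarith [hcvx]
  have h1 : Real.log (Real.Gamma x * p ^ α) ≤ Real.log (Real.Gamma (x + α)) := by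
    rw [Real.log_mul (Real.Gamma_pos_of_pos hx0).ne' (Real.rpow_pos_of_pos hp α).ne',
      Real.log_rpow hp]
    exact key
  have := Real.exp_le_exp.mpr h1
  rwa [Real.exp_log (by positivity), Real.exp_log (Real.Gamma_pos_of_pos hq)] at this

lemma sumB {α β q : ℝ} (hα0 : 0 < α) (hα1 : α < 1) (hβ : 0 < β) (hq : 0 ≤ q) :
    Summable (fun n : ℕ => q ^ n / Real.Gamma (α * n + β)) := by
  apply summable_of_ratio_norm_eventually_le (r := 1/2) (by norm_num)
  have t1 : Tendsto (fun n : ℕ => α * n + β) atTop atTop := by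
    apply tendsto_atTop_add_const_right
    exact (tendsto_natCast_atTop_atTop (R := ℝ)).const_mul_atTop hα0
  have t2 : Tendsto (fun n : ℕ => (α * n + β + α - 1) ^ α) atTop atTop := by
    apply (tendsto_rpow_atTop hα0).comp
    have := tendsto_atTop_add_const_right atTop (α - 1) t1
    exact this.congr (fun n => by ring)
  filter_upwards [t1.eventually_ge_atTop 1, t2.eventually_ge_atTop (2 * q)] with n hn1 hn2
  set x := α * n + β with hx_def
  have hx0 : 0 < x := lt_of_lt_of_le one_pos hn1
  have hGx : 0 < Real.Gamma x := Real.Gamma_pos_of_pos hx0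
  have hGxa : 0 < Real.Gamma (x + α) := Real.Gamma_pos_of_pos (by linarith)
  have hcast : α * ((n : ℝ) + 1) + β = x + α := by rw [hx_def]; ring
  rw [show ((n + 1 : ℕ) : ℝ) = (n : ℝ) + 1 by push_cast; ring, hcast]
  rw [Real.norm_of_nonneg (div_nonneg (pow_nonneg hq _) hGxa.le),
    Real.norm_of_nonneg (div_nonneg (pow_nonneg hq _) hGx.le)]
  have hA := gammaA hα0 hα1 hn1
  have h2q : 2 * q * Real.Gamma x ≤ Real.Gamma (x + α) := by
    calc 2 * q * Real.Gamma x ≤ (x + α - 1) ^ α * Real.Gamma x := by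
          apply mul_le_mul_of_nonneg_right hn2 hGx.le
      _ ≤ Real.Gamma (x + α) := by rw [mul_comm]; exact hA
  rcases eq_or_lt_of_le hq with h | hq'
  · simp [← h, pow_succ]
    positivity
  · have h2qG : 0 < 2 * q * Real.Gamma x := by positivity
    calc q ^ (n + 1) / Real.Gamma (x + α) ≤ q ^ (n + 1) / (2 * q * Real.Gamma x) :=
          div_le_div_of_nonneg_left (pow_nonneg hq _) h2qG h2q
      _ = 1 / 2 * (q ^ n / Real.Gamma x) := by
          rw [pow_succ]; field_simp

open MeasureTheory Set in
lemma betaInt {a b t : ℝ} (ha : 0 < a) (hb : 0 < b) (ht : 0 < t) :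
    IntegrableOn (fun τ => τ ^ (a - 1) * (t - τ) ^ (b - 1)) (Ioo 0 t) := by
  have hmeas : AEStronglyMeasurable (fun τ : ℝ => τ ^ (a - 1) * (t - τ) ^ (b - 1))
      (volume.restrict (Ioo (0:ℝ) t)) := by
    apply ContinuousOn.aestronglyMeasurable _ measurableSet_Ioo
    apply ContinuousOn.mul
    · exact continuousOn_id.rpow_const fun x hx => Or.inl (ne_of_gt hx.1)
    · exact (continuousOn_const.sub continuousOn_id).rpow_const
        fun x hx => Or.inl (ne_of_gt (by simp only [Pi.sub_apply, id]; linarith [hx.2]))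
  have hsub : Ioo (0:ℝ) t ⊆ Ioc 0 (t/2) ∪ Ioo (t/2) t := by
    intro τ hτ
    rcases le_or_gt τ (t/2) with h | h
    · exact Or.inl ⟨hτ.1, h⟩
    · exact Or.inr ⟨h, hτ.2⟩
  have hmeas1 : AEStronglyMeasurable (fun τ : ℝ => τ ^ (a - 1) * (t - τ) ^ (b - 1))
      (volume.restrict (Ioc (0:ℝ) (t/2))) := by
    apply ContinuousOn.aestronglyMeasurable _ measurableSet_Ioc
    apply ContinuousOn.mul
    · exact continuousOn_id.rpow_const fun x hx => Or.inl (ne_of_gt hx.1)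
    · exact (continuousOn_const.sub continuousOn_id).rpow_const
        fun x hx => Or.inl (ne_of_gt (by simp only [Pi.sub_apply, id]; linarith [hx.2]))
  have hmeas2 : AEStronglyMeasurable (fun τ : ℝ => τ ^ (a - 1) * (t - τ) ^ (b - 1))
      (volume.restrict (Ioo (t/2) t)) := by
    apply ContinuousOn.aestronglyMeasurable _ measurableSet_Ioo
    apply ContinuousOn.mul
    · exact continuousOn_id.rpow_const fun x hx => Or.inl
        (ne_of_gt (lt_trans (half_pos ht) hx.1))
    · exact (continuousOn_const.sub continuousOn_id).rpow_const
        fun x hx => Or.inl (ne_of_gt (by simp only [Pi.sub_apply, id]; linarith [hx.2]))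
  have p1 : IntegrableOn (fun τ => τ ^ (a - 1) * (t - τ) ^ (b - 1)) (Ioc 0 (t/2)) := by
    set M := max ((t/2) ^ (b-1)) (t ^ (b-1)) with hM
    have h1 : IntegrableOn (fun τ : ℝ => τ ^ (a-1)) (Ioc 0 (t/2)) := by
      have h := intervalIntegral.intervalIntegrable_rpow' (a := 0) (b := t/2)
        (r := a - 1) (by linarith)
      rwa [intervalIntegrable_iff_integrableOn_Ioc_of_le (by linarith)] at h
    refine Integrable.mono' (h1.const_mul M) hmeas1 ?_
    rw [ae_restrict_iff' measurableSet_Ioc]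
    filter_upwards with τ hτ
    have h0 : 0 < t - τ := by
      rcases hτ with ⟨h1', h2'⟩; linarith
    have hbnd : (t - τ) ^ (b-1) ≤ M := by
      rcases le_or_gt 1 b with hb1 | hb1
      · refine le_trans (Real.rpow_le_rpow h0.le (by linarith [hτ.1]) (by linarith))
          (le_max_right _ _)
      · refine le_trans (Real.rpow_le_rpow_of_nonpos (half_pos ht)
          (by linarith [hτ.2]) (by linarith)) (le_max_left _ _)
    rw [Real.norm_of_nonneg (mul_nonneg (Real.rpow_nonneg hτ.1.le _)
      (Real.rpow_nonneg h0.le _))]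
    calc τ ^ (a-1) * (t - τ) ^ (b-1) ≤ τ ^ (a-1) * M :=
          mul_le_mul_of_nonneg_left hbnd (Real.rpow_nonneg hτ.1.le _)
      _ = M * τ ^ (a-1) := mul_comm _ _
  have p2 : IntegrableOn (fun τ => τ ^ (a - 1) * (t - τ) ^ (b - 1)) (Ioo (t/2) t) := by
    set M := max ((t/2) ^ (a-1)) (t ^ (a-1)) with hM
    have h1 : IntegrableOn (fun τ : ℝ => (t - τ) ^ (b-1)) (Ioo (t/2) t) := by
      have h := intervalIntegral.intervalIntegrable_rpow' (a := 0) (b := t/2)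
        (r := b - 1) (by linarith)
      have h2 := (h.comp_sub_left t).symm
      rw [sub_zero] at h2
      rw [show t - t/2 = t/2 by ring] at h2
      rw [intervalIntegrable_iff_integrableOn_Ioc_of_le (by linarith)] at h2
      exact h2.mono_set Ioo_subset_Ioc_self
    refine Integrable.mono' (h1.const_mul M) hmeas2 ?_
    rw [ae_restrict_iff' measurableSet_Ioo]
    filter_upwards with τ hτ
    have h0 : 0 < t - τ := by rcases hτ with ⟨h1', h2'⟩; linarith
    have hτ0 : 0 < τ := lt_trans (half_pos ht) hτ.1
    have hbnd : τ ^ (a-1) ≤ M := by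
      rcases le_or_gt 1 a with ha1 | ha1
      · exact le_trans (Real.rpow_le_rpow hτ0.le (le_of_lt hτ.2) (by linarith))
          (le_max_right _ _)
      · exact le_trans (Real.rpow_le_rpow_of_nonpos (half_pos ht) hτ.1.le (by linarith))
          (le_max_left _ _)
    rw [Real.norm_of_nonneg (mul_nonneg (Real.rpow_nonneg hτ0.le _)
      (Real.rpow_nonneg h0.le _))]
    exact mul_le_mul_of_nonneg_right hbnd (Real.rpow_nonneg h0.le _)
  exact (p1.union p2).mono_set hsub

open MeasureTheory Set in
lemma betaR {a b t : ℝ} (ha : 0 < a) (hb : 0 < b) (ht : 0 < t) :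
    ∫ τ in Ioo (0:ℝ) t, τ ^ (a - 1) * (t - τ) ^ (b - 1) =
      t ^ (a + b - 1) * (Real.Gamma a * Real.Gamma b / Real.Gamma (a + b)) := by
  have hs := Complex.betaIntegral_scaled (a : ℂ) (b : ℂ) ht
  have hL : (∫ x in (0:ℝ)..t, (x:ℂ) ^ ((a:ℂ) - 1) * ((t:ℂ) - x) ^ ((b:ℂ) - 1))
      = ((∫ τ in Ioo (0:ℝ) t, τ ^ (a - 1) * (t - τ) ^ (b - 1) : ℝ) : ℂ) := by
    rw [intervalIntegral.integral_of_le ht.le, MeasureTheory.integral_Ioc_eq_integral_Ioo,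
      show ((∫ τ in Ioo (0:ℝ) t, τ ^ (a - 1) * (t - τ) ^ (b - 1) : ℝ) : ℂ)
        = ∫ τ in Ioo (0:ℝ) t, ((τ ^ (a - 1) * (t - τ) ^ (b - 1) : ℝ) : ℂ)
        from integral_ofReal.symm]
    apply setIntegral_congr_fun measurableSet_Ioo
    intro x hx
    simp only []
    rw [Complex.ofReal_mul,
      show ((a:ℂ) - 1) = ((a - 1 : ℝ) : ℂ) by push_cast; ring,
      show ((b:ℂ) - 1) = ((b - 1 : ℝ) : ℂ) by push_cast; ring,
      ← Complex.ofReal_cpow hx.1.le,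
      show ((t:ℂ) - (x:ℂ)) = ((t - x : ℝ) : ℂ) by push_cast; ring,
      ← Complex.ofReal_cpow (by linarith [hx.2] : (0:ℝ) ≤ t - x)]
  have hbeta : Complex.betaIntegral a b
      = ((Real.Gamma a * Real.Gamma b / Real.Gamma (a + b) : ℝ) : ℂ) := by
    have h := Complex.Gamma_mul_Gamma_eq_betaIntegral
      (s := (a:ℂ)) (t := (b:ℂ)) (by simpa using ha) (by simpa using hb)
    have hG : Complex.Gamma ((a:ℂ) + (b:ℂ)) ≠ 0 := by
      rw [show ((a:ℂ) + (b:ℂ)) = ((a + b : ℝ) : ℂ) by push_cast; ring, Complex.Gamma_ofReal]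
      exact_mod_cast (Real.Gamma_pos_of_pos (by linarith : (0:ℝ) < a + b)).ne'
    have hbeta' : Complex.betaIntegral a b
        = Complex.Gamma a * Complex.Gamma b / Complex.Gamma ((a:ℂ) + (b:ℂ)) := by
      field_simp
      linear_combination -h
    rw [hbeta', show ((a:ℂ) + (b:ℂ)) = ((a + b : ℝ) : ℂ) by push_cast; ring,
      Complex.Gamma_ofReal, Complex.Gamma_ofReal, Complex.Gamma_ofReal]
    push_cast
    ring
  rw [hL, hbeta] at hs
  have hR : ((t:ℂ)) ^ ((a:ℂ) + (b:ℂ) - 1) = ((t ^ (a + b - 1) : ℝ) : ℂ) := by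
    rw [show ((a:ℂ) + (b:ℂ) - 1) = ((a + b - 1 : ℝ) : ℂ) by push_cast; ring,
      ← Complex.ofReal_cpow ht.le]
  rw [hR, ← Complex.ofReal_mul] at hs
  exact_mod_cast hs

open MeasureTheory Set in
/-- For `0 < α < 1` and `γ ∈ ℝ`, the function
`C(t) = E_{α,1}(γt^α) = ∑_{s=0}^∞ γ^s t^{αs}/Γ(αs+1)` satisfies the Caputo fractional ODE
`(1/Γ(1−α)) ∫₀ᵗ C′(τ)·(t−τ)^{−α} dτ = γ·C(t)` for all `t > 0`, with `C(0) = 1`. -/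
theorem stmt_11 (α γ : ℝ) (hα0 : 0 < α) (hα1 : α < 1)
    (C : ℝ → ℝ)
    (hC : ∀ t, C t = ∑' s : ℕ, γ ^ s * t ^ (α * (s : ℝ)) / Real.Gamma (α * (s : ℝ) + 1)) :
    (∀ t : ℝ, 0 < t →
        (1 / Real.Gamma (1 - α)) * ∫ τ in (0:ℝ)..t, deriv C τ * (t - τ) ^ (-α) = γ * C t)
      ∧ C 0 = 1 := by
  have hΓ1α : 0 < Real.Gamma (1 - α) := Real.Gamma_pos_of_pos (by linarith)
  constructor
  · intro t ht
    -- the summand functions and their derivatives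
    have hCfun : C = fun y => ∑' n : ℕ, γ ^ n * y ^ (α * (n : ℝ)) / Real.Gamma (α * n + 1) :=
      funext hC
    -- term-by-term derivative of C on (0, t)
    have hderiv : ∀ τ ∈ Ioo (0:ℝ) t, HasDerivAt C
        (∑' n : ℕ, γ ^ n * τ ^ (α * (n : ℝ) - 1) / Real.Gamma (α * n)) τ := by
      intro τ hτ
      obtain ⟨hτ0, hτt⟩ := hτ
      have hτ2 : 0 < τ / 2 := by linarith
      have ht1 : (0:ℝ) < t + 1 := by linarith
      set q : ℝ := |γ| * (t + 1) ^ α with hq_def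
      have hq0 : 0 ≤ q := by positivity
      have hu : Summable (fun n : ℕ => (2/τ) * (q ^ n / Real.Gamma (α * n))) := by
        rw [← summable_nat_add_iff 1]
        have hs0 := (sumB hα0 hα1 hα0 hq0).mul_left ((2/τ) * q)
        refine hs0.congr fun n => ?_
        have harg : α * ((n + 1 : ℕ) : ℝ) = α * n + α := by push_cast; ring
        rw [harg, pow_succ]
        ring
      have hmem : τ ∈ Ioo (τ/2) (t+1) := by constructor <;> linarith
      have key := hasDerivAt_tsum_of_isPreconnected hu isOpen_Ioo isPreconnected_Ioo
        (g := fun (n : ℕ) (y : ℝ) => γ ^ n * y ^ (α * (n : ℝ)) / Real.Gamma (α * n + 1))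
        (g' := fun (n : ℕ) (y : ℝ) => γ ^ n * y ^ (α * (n : ℝ) - 1) / Real.Gamma (α * n))
        ?_ ?_ hmem ?_ hmem
      · rw [hCfun]; exact key
      · -- HasDerivAt for each term
        rintro (_ | m) y hy
        · simp only [Nat.cast_zero, mul_zero, pow_zero, one_mul, Real.rpow_zero, zero_add,
            Real.Gamma_one, div_one, zero_sub, Real.Gamma_zero, div_zero]
          exact hasDerivAt_const y 1
        · have hy0 : 0 < y := lt_trans hτ2 hy.1
          have hn0 : (0:ℝ) < α * ((m + 1 : ℕ) : ℝ) := by positivity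
          have h1 := Real.hasDerivAt_rpow_const (x := y) (p := α * ((m + 1 : ℕ) : ℝ))
            (Or.inl hy0.ne')
          have h2 := (h1.const_mul (γ ^ (m + 1))).div_const
            (Real.Gamma (α * ((m + 1 : ℕ) : ℝ) + 1))
          refine h2.congr_deriv ?_
          rw [Real.Gamma_add_one hn0.ne']
          have hΓ : Real.Gamma (α * ((m + 1 : ℕ) : ℝ)) ≠ 0 :=
            (Real.Gamma_pos_of_pos hn0).ne'
          field_simp
      · -- uniform bound on derivatives
        rintro (_ | m) y hy
        · simp [Real.Gamma_zero]
        · have hy0 : 0 < y := lt_trans hτ2 hy.1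
          have hn0 : (0:ℝ) < α * ((m + 1 : ℕ) : ℝ) := by positivity
          have hΓpos : 0 < Real.Gamma (α * ((m + 1 : ℕ) : ℝ)) := Real.Gamma_pos_of_pos hn0
          rw [Real.norm_eq_abs, abs_div, abs_mul, abs_pow,
            abs_of_pos hΓpos, abs_of_pos (Real.rpow_pos_of_pos hy0 _)]
          rw [show (2/τ) * (q ^ (m+1) / Real.Gamma (α * ((m + 1 : ℕ) : ℝ)))
            = (2/τ * q ^ (m+1)) / Real.Gamma (α * ((m + 1 : ℕ) : ℝ)) by ring]
          have hA : y ^ (α * ((m+1:ℕ):ℝ)) ≤ (t+1) ^ (α * ((m+1:ℕ):ℝ)) :=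
            Real.rpow_le_rpow hy0.le (le_of_lt hy.2) hn0.le
          have hB : y ^ (α * ((m+1:ℕ):ℝ)) / y ≤ (t+1) ^ (α * ((m+1:ℕ):ℝ)) / (τ/2) :=
            div_le_div₀ (Real.rpow_nonneg ht1.le _) hA hτ2 hy.1.le
          have hkey : |γ| ^ (m+1) * y ^ (α * ((m+1:ℕ):ℝ) - 1) ≤ 2/τ * q ^ (m+1) := by
            calc |γ| ^ (m+1) * y ^ (α * ((m+1:ℕ):ℝ) - 1)
                = |γ| ^ (m+1) * (y ^ (α * ((m+1:ℕ):ℝ)) / y) := by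
                  rw [Real.rpow_sub hy0, Real.rpow_one]
              _ ≤ |γ| ^ (m+1) * ((t+1) ^ (α * ((m+1:ℕ):ℝ)) / (τ/2)) :=
                  mul_le_mul_of_nonneg_left hB (by positivity)
              _ = 2/τ * q ^ (m+1) := by
                  rw [hq_def, mul_pow, ← Real.rpow_natCast ((t+1) ^ α) (m+1),
                    ← Real.rpow_mul ht1.le]
                  field_simp
          exact (div_le_div_iff_of_pos_right hΓpos).mpr hkey
      · -- summability at the point τ
        have hs1 := sumB hα0 hα1 one_pos (q := |γ| * τ ^ α) (by positivity)
        apply Summable.of_norm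
        refine (hs1.congr fun n => ?_)
        have hΓp : 0 < Real.Gamma (α * n + 1) := Real.Gamma_pos_of_pos (by positivity)
        rw [Real.norm_eq_abs, abs_div, abs_mul, abs_pow, abs_of_pos hΓp,
          abs_of_nonneg (Real.rpow_nonneg hτ0.le _), mul_pow,
          ← Real.rpow_natCast (τ ^ α) n, ← Real.rpow_mul hτ0.le]
    have hder_eq : ∀ τ ∈ Ioo (0:ℝ) t, deriv C τ
        = ∑' n : ℕ, γ ^ n * τ ^ (α * (n : ℝ) - 1) / Real.Gamma (α * n) :=
      fun τ hτ => (hderiv τ hτ).deriv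
    set F : ℕ → ℝ → ℝ :=
      fun n τ => γ ^ n * τ ^ (α * (n : ℝ) - 1) / Real.Gamma (α * n) * (t - τ) ^ (-α)
      with hF_def
    have hαn : ∀ n : ℕ, (0:ℝ) < α * ((n+1:ℕ):ℝ) := fun n => by positivity
    have hΓn : ∀ n : ℕ, 0 < Real.Gamma (α * ((n+1:ℕ):ℝ)) :=
      fun n => Real.Gamma_pos_of_pos (hαn n)
    have hF0 : F 0 = fun _ => (0:ℝ) := by
      funext τ
      simp only [hF_def, Nat.cast_zero, mul_zero, Real.Gamma_zero, div_zero, zero_mul]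
    have hF1 : ∀ n : ℕ, F (n+1) = fun τ => (γ ^ (n+1) / Real.Gamma (α * ((n+1:ℕ):ℝ))) *
        (τ ^ (α * ((n+1:ℕ):ℝ) - 1) * (t - τ) ^ ((1 - α) - 1)) := by
      intro n
      funext τ
      simp only [hF_def]
      rw [show (1 - α) - 1 = -α by ring]
      ring
    have hFint : ∀ n : ℕ, IntegrableOn (F n) (Ioo 0 t) := by
      intro n
      cases n with
      | zero => rw [hF0]; exact integrable_zero _ _ _
      | succ m =>
        rw [hF1 m]
        exact (betaInt (hαn m) (by linarith : (0:ℝ) < 1 - α) ht).const_mul _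
    have hval : ∀ n : ℕ, (∫ τ in Ioo (0:ℝ) t, F (n+1) τ)
        = γ ^ (n+1) * (t ^ (α * ((n+1:ℕ):ℝ) - α) * Real.Gamma (1-α)
            / Real.Gamma (α * ((n+1:ℕ):ℝ) + 1 - α)) := by
      intro n
      rw [hF1 n]
      simp only []
      rw [MeasureTheory.integral_const_mul,
        betaR (hαn n) (by linarith : (0:ℝ) < 1 - α) ht]
      rw [show α * ((n+1:ℕ):ℝ) + (1-α) - 1 = α * ((n+1:ℕ):ℝ) - α by ring,
        show α * ((n+1:ℕ):ℝ) + (1-α) = α * ((n+1:ℕ):ℝ) + 1 - α by ring]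
      have h1 : Real.Gamma (α * ((n+1:ℕ):ℝ)) ≠ 0 := (hΓn n).ne'
      have h2 : Real.Gamma (α * ((n+1:ℕ):ℝ) + 1 - α) ≠ 0 :=
        (Real.Gamma_pos_of_pos (by linarith [hαn n] : (0:ℝ) < α * ((n+1:ℕ):ℝ) + 1 - α)).ne'
      field_simp
    have hnval : ∀ n : ℕ, (∫ τ in Ioo (0:ℝ) t, ‖F (n+1) τ‖)
        = |γ| ^ (n+1) * (t ^ (α * ((n+1:ℕ):ℝ) - α) * Real.Gamma (1-α)
            / Real.Gamma (α * ((n+1:ℕ):ℝ) + 1 - α)) := by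
      intro n
      rw [setIntegral_congr_fun (f := fun τ => ‖F (n+1) τ‖) measurableSet_Ioo
        (g := fun τ => (|γ| ^ (n+1) / Real.Gamma (α * ((n+1:ℕ):ℝ))) *
          (τ ^ (α * ((n+1:ℕ):ℝ) - 1) * (t - τ) ^ ((1 - α) - 1)))
        (fun τ hτ => by
          have h1 : (0:ℝ) ≤ τ ^ (α * ((n+1:ℕ):ℝ) - 1) := Real.rpow_nonneg hτ.1.le _
          have h2 : (0:ℝ) ≤ (t - τ) ^ ((1 - α) - 1) :=
            Real.rpow_nonneg (by linarith [hτ.2] : (0:ℝ) ≤ t - τ) _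
          rw [hF1 n]
          simp only [norm_mul, norm_div, Real.norm_eq_abs, abs_pow, abs_of_pos (hΓn n),
            abs_of_nonneg h1, abs_of_nonneg h2, abs_mul, abs_div])]
      rw [MeasureTheory.integral_const_mul,
        betaR (hαn n) (by linarith : (0:ℝ) < 1 - α) ht]
      rw [show α * ((n+1:ℕ):ℝ) + (1-α) - 1 = α * ((n+1:ℕ):ℝ) - α by ring,
        show α * ((n+1:ℕ):ℝ) + (1-α) = α * ((n+1:ℕ):ℝ) + 1 - α by ring]
      have h1 : Real.Gamma (α * ((n+1:ℕ):ℝ)) ≠ 0 := (hΓn n).ne'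
      have h2 : Real.Gamma (α * ((n+1:ℕ):ℝ) + 1 - α) ≠ 0 :=
        (Real.Gamma_pos_of_pos (by linarith [hαn n] : (0:ℝ) < α * ((n+1:ℕ):ℝ) + 1 - α)).ne'
      field_simp
    have hFsum : Summable (fun n => ∫ τ in Ioo (0:ℝ) t, ‖F n τ‖) := by
      rw [← summable_nat_add_iff 1]
      have hs2 := (sumB hα0 hα1 one_pos (q := |γ| * t ^ α)
        (by positivity)).mul_left (Real.Gamma (1-α) * |γ|)
      refine hs2.congr fun n => ?_
      rw [hnval n]
      have h1 : α * ((n+1:ℕ):ℝ) - α = α * n := by push_cast; ring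
      have h2 : α * ((n+1:ℕ):ℝ) + 1 - α = α * n + 1 := by push_cast; ring
      have h3 : (|γ| * t ^ α) ^ n = |γ| ^ n * t ^ (α * (n:ℝ)) := by
        rw [mul_pow, ← Real.rpow_natCast (t ^ α) n, ← Real.rpow_mul ht.le]
      rw [h1, h2, h3, pow_succ]
      ring
    have hswap := MeasureTheory.hasSum_integral_of_summable_integral_norm
      (μ := volume.restrict (Ioo (0:ℝ) t)) (fun n => hFint n) hFsum
    have hIeq : (∫ τ in Ioo (0:ℝ) t, deriv C τ * (t - τ) ^ (-α))
        = ∫ τ in Ioo (0:ℝ) t, ∑' n : ℕ, F n τ := by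
      apply setIntegral_congr_fun measurableSet_Ioo
      intro τ hτ
      simp only []
      rw [hder_eq τ hτ]
      simp only [hF_def]
      exact (tsum_mul_right).symm
    rw [intervalIntegral.integral_of_le ht.le, MeasureTheory.integral_Ioc_eq_integral_Ioo,
      hIeq, ← hswap.tsum_eq, Summable.tsum_eq_zero_add hswap.summable]
    have hZ : (∫ τ in Ioo (0:ℝ) t, F 0 τ) = 0 := by
      rw [hF0]
      simp
    rw [hZ, zero_add]
    have hfinal : (∑' n : ℕ, ∫ τ in Ioo (0:ℝ) t, F (n+1) τ)
        = Real.Gamma (1-α) * γ * C t := by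
      rw [hC t, ← tsum_mul_left]
      apply tsum_congr
      intro n
      rw [hval n]
      have h1 : α * ((n+1:ℕ):ℝ) - α = α * n := by push_cast; ring
      have h2 : α * ((n+1:ℕ):ℝ) + 1 - α = α * n + 1 := by push_cast; ring
      rw [h1, h2, pow_succ]
      have hΓp : Real.Gamma (α * (n:ℝ) + 1) ≠ 0 :=
        (Real.Gamma_pos_of_pos (by positivity)).ne'
      field_simp
    rw [hfinal]
    field_simp
  · -- C 0 = 1
    rw [hC 0]
    rw [tsum_eq_single 0 ?_]
    · norm_num
    · intro s hs
      have hz : (0:ℝ) ^ (α * (s:ℝ)) = 0 :=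
        Real.zero_rpow (ne_of_gt (mul_pos hα0 (Nat.cast_pos.mpr (Nat.pos_of_ne_zero hs))))
      simp [hz]
end

section
/- Let 1 < α < 2, γ ∈ ℝ, and A₀, A₁ ∈ ℝ, and define C(t) = A₀·∑_{s=0}^∞ γ^s t^{αs}/Γ(αs+1) + A₁·∑_{s=0}^∞ γ^s t^{αs+1}/Γ(αs+2) for t ≥ 0, i.e. C(t) = A₀·E_{α,1}(γt^α) + A₁·t·E_{α,2}(γt^α). Then for every t > 0, C satisfies the Caputo fractional ordinary differential equation (1/Γ(2−α)) ∫₀ᵗ C″(τ)·(t−τ)^{1−α} dτ = γ·C(t), with C(0) = A₀ and C′(0) = A₁. -/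
open Real MeasureTheory Filter Topology Set

namespace CaputoAux


noncomputable def ml (α γ b : ℝ) (s : ℕ) (t : ℝ) : ℝ :=
  γ ^ s * t ^ (α * s + b - 1) / Real.Gamma (α * s + b)

lemma gamma_mono {x y : ℝ} (hx : 2 ≤ x) (hxy : x ≤ y) : Real.Gamma x ≤ Real.Gamma y :=
  Real.Gamma_strictMonoOn_Ici.monotoneOn hx (le_trans hx hxy) hxy

lemma summable_ml_aux {α : ℝ} (hα : 1 < α) (x c : ℝ) (hx : 0 ≤ x) :
    Summable (fun s : ℕ => x ^ s / |Real.Gamma (α * s + c)|) := by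
  rcases hx.eq_or_lt with h | hx0
  · apply summable_of_ne_finset_zero (s := {0})
    intro s hs
    simp only [Finset.mem_singleton] at hs
    rw [← h, zero_pow hs, zero_div]
  · apply summable_of_ratio_norm_eventually_le (r := 1/2) (by norm_num)
    have htend : Tendsto (fun s : ℕ => α * s + c) atTop atTop := by
      apply tendsto_atTop_add_const_right
      exact Tendsto.const_mul_atTop (by linarith) tendsto_natCast_atTop_atTop
    filter_upwards [htend.eventually_ge_atTop 2, htend.eventually_ge_atTop (2 * x)]
      with s h2 h2x
    have hg1 : 0 < Real.Gamma (α * s + c) := Real.Gamma_pos_of_pos (by linarith)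
    have hg2 : 2 * x * Real.Gamma (α * s + c) ≤ Real.Gamma (α * (s + 1 : ℕ) + c) := by
      have e1 : Real.Gamma (α * s + c + 1) = (α * s + c) * Real.Gamma (α * s + c) :=
        Real.Gamma_add_one (by linarith)
      have e2 : Real.Gamma (α * s + c + 1) ≤ Real.Gamma (α * (s + 1 : ℕ) + c) := by
        apply gamma_mono (by linarith)
        push_cast; nlinarith
      nlinarith [mul_le_mul_of_nonneg_right h2x hg1.le]
    have hg2pos : 0 < Real.Gamma (α * (s + 1 : ℕ) + c) :=
      lt_of_lt_of_le (by positivity) hg2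
    rw [Real.norm_of_nonneg (by positivity), Real.norm_of_nonneg (by positivity),
      abs_of_pos hg1, abs_of_pos hg2pos]
    calc x ^ (s + 1) / Real.Gamma (α * (s + 1 : ℕ) + c)
        ≤ x ^ (s + 1) / (2 * x * Real.Gamma (α * s + c)) := by
          apply div_le_div_of_nonneg_left (by positivity) (by positivity) hg2
      _ = 1 / 2 * (x ^ s / Real.Gamma (α * s + c)) := by
          rw [pow_succ]; field_simp

lemma summable_ml {α : ℝ} (hα : 1 < α) (γ b : ℝ) {t : ℝ} (ht : t ≠ 0) :
    Summable (fun s : ℕ => ml α γ b s t) := by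
  have habs : 0 < |t| := abs_pos.mpr ht
  apply Summable.of_norm_bounded
    ((summable_ml_aux hα (|γ| * |t| ^ α) b (by positivity)).mul_right (|t| ^ (b - 1)))
  intro s
  rw [ml, Real.norm_eq_abs, abs_div, abs_mul, abs_pow]
  calc |γ| ^ s * |t ^ (α * s + b - 1)| / |Real.Gamma (α * s + b)|
      ≤ |γ| ^ s * |t| ^ (α * s + b - 1) / |Real.Gamma (α * s + b)| := by
        gcongr; exact Real.abs_rpow_le_abs_rpow _ _
    _ = (|γ| * |t| ^ α) ^ s / |Real.Gamma (α * s + b)| * |t| ^ (b - 1) := by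
        rw [show α * (s : ℝ) + b - 1 = α * s + (b - 1) by ring, Real.rpow_add habs,
          Real.rpow_mul (abs_nonneg t), Real.rpow_natCast, mul_pow]
        ring

lemma hasDerivAt_ml (α γ b : ℝ) (s : ℕ) {t : ℝ} (ht : t ≠ 0) :
    HasDerivAt (fun x => ml α γ b s x) (ml α γ (b - 1) s t) t := by
  rcases eq_or_ne (α * s + b - 1) 0 with h | h
  · have hfun : (fun x => ml α γ b s x) = fun _ => γ ^ s / Real.Gamma (α * s + b) := by
      funext x; rw [ml, h, Real.rpow_zero, mul_one]
    have h2 : α * s + (b - 1) = 0 := by linarith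
    rw [hfun, ml, h2, Real.Gamma_zero, div_zero]
    exact hasDerivAt_const t _
  · have H := (((Real.hasDerivAt_rpow_const (p := α * s + b - 1)
      (Or.inl ht)).const_mul (γ ^ s)).div_const (Real.Gamma (α * s + b)))
    have heq : ml α γ (b - 1) s t
        = γ ^ s * ((α * s + b - 1) * t ^ (α * s + b - 1 - 1)) / Real.Gamma (α * s + b) := by
      rw [ml, show α * (s : ℝ) + (b - 1) = α * s + b - 1 by ring,
        show α * (s : ℝ) + b = (α * s + b - 1) + 1 by ring, Real.Gamma_add_one h]
      rcases eq_or_ne (Real.Gamma (α * s + b - 1)) 0 with hg | hg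
      · rw [hg]; simp; exact Or.inr hg
      · rw [show α * (s:ℝ) + b - 1 + 1 - 1 = α * s + b - 1 by ring]; field_simp
    rw [heq]
    exact H

lemma hasDerivAt_tsum_ml {α : ℝ} (hα : 1 < α) (γ b : ℝ) {t : ℝ} (ht : 0 < t) :
    HasDerivAt (fun x => ∑' s, ml α γ b s x) (∑' s, ml α γ (b - 1) s t) t := by
  set K := (t / 2) ^ (b - 2) + (2 * t) ^ (b - 2) with hK
  have hbound : ∀ (s : ℕ) (y : ℝ), y ∈ Ioo (t / 2) (2 * t) →
      ‖ml α γ (b - 1) s y‖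
        ≤ (|γ| * (2 * t) ^ α) ^ s / |Real.Gamma (α * s + (b - 1))| * K := by
    intro s y hy
    have hy0 : 0 < y := lt_trans (by linarith) hy.1
    rw [ml, Real.norm_eq_abs, abs_div, abs_mul, abs_pow,
      abs_of_nonneg (Real.rpow_nonneg hy0.le _)]
    have e1 : y ^ (α * (s : ℝ) + (b - 1) - 1) = y ^ (α * (s : ℝ)) * y ^ (b - 2) := by
      rw [← Real.rpow_add hy0]; ring_nf
    rw [e1]
    have h1 : y ^ (α * (s : ℝ)) ≤ ((2 * t) ^ α) ^ s := by
      calc y ^ (α * (s : ℝ)) ≤ (2 * t) ^ (α * (s : ℝ)) :=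
            Real.rpow_le_rpow hy0.le hy.2.le (by positivity)
        _ = ((2 * t) ^ α) ^ s := by
            rw [Real.rpow_mul (by linarith), Real.rpow_natCast]
    have h2 : y ^ (b - 2) ≤ K := by
      rcases le_or_gt 0 (b - 2) with hb | hb
      · calc y ^ (b - 2) ≤ (2 * t) ^ (b - 2) := Real.rpow_le_rpow hy0.le hy.2.le hb
          _ ≤ K := le_add_of_nonneg_left (by positivity)
      · calc y ^ (b - 2) ≤ (t / 2) ^ (b - 2) :=
            Real.rpow_le_rpow_of_nonpos (by linarith) hy.1.le hb.le
          _ ≤ K := le_add_of_nonneg_right (by positivity)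
    calc |γ| ^ s * (y ^ (α * (s : ℝ)) * y ^ (b - 2)) / |Real.Gamma (α * s + (b - 1))|
        ≤ |γ| ^ s * (((2 * t) ^ α) ^ s * K) / |Real.Gamma (α * s + (b - 1))| := by
          gcongr
      _ = (|γ| * (2 * t) ^ α) ^ s / |Real.Gamma (α * s + (b - 1))| * K := by
          rw [mul_pow]; ring
  exact hasDerivAt_tsum_of_isPreconnected
    ((summable_ml_aux hα (|γ| * (2 * t) ^ α) (b - 1) (by positivity)).mul_right K)
    isOpen_Ioo isPreconnected_Ioo
    (fun s y hy => hasDerivAt_ml α γ b s (ne_of_gt (lt_trans (by linarith) hy.1)))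
    hbound (show t ∈ Ioo (t / 2) (2 * t) by constructor <;> linarith)
    (summable_ml hα γ b ht.ne') (show t ∈ Ioo (t / 2) (2 * t) by constructor <;> linarith)


lemma beta01 {u v : ℝ} (hu : 0 < u) (hv : 0 < v) :
    ∫ x in (0:ℝ)..1, x ^ (u - 1) * (1 - x) ^ (v - 1)
      = Real.Gamma u * Real.Gamma v / Real.Gamma (u + v) := by
  have h := Complex.Gamma_mul_Gamma_eq_betaIntegral (s := (u:ℂ)) (t := (v:ℂ))
    (by simpa using hu) (by simpa using hv)
  have hβ : Complex.betaIntegral u v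
      = ((∫ x in (0:ℝ)..1, x ^ (u - 1) * (1 - x) ^ (v - 1) : ℝ) : ℂ) := by
    rw [Complex.betaIntegral, ← intervalIntegral.integral_ofReal]
    apply intervalIntegral.integral_congr
    intro x hx
    rw [Set.uIcc_of_le (zero_le_one (α := ℝ)), Set.mem_Icc] at hx
    show (x:ℂ) ^ ((u:ℂ) - 1) * ((1:ℂ) - (x:ℂ)) ^ ((v:ℂ) - 1)
      = ((x ^ (u - 1) * (1 - x) ^ (v - 1) : ℝ) : ℂ)
    rw [Complex.ofReal_mul, Complex.ofReal_cpow hx.1, Complex.ofReal_cpow (by linarith)]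
    push_cast
    ring
  rw [hβ, show ((u : ℂ)) = ((u : ℝ) : ℂ) from rfl, show ((v : ℂ)) = ((v : ℝ) : ℂ) from rfl,
    Complex.Gamma_ofReal, Complex.Gamma_ofReal, ← Complex.ofReal_add, Complex.Gamma_ofReal] at h
  have h2 : Real.Gamma u * Real.Gamma v
      = Real.Gamma (u + v) * ∫ x in (0:ℝ)..1, x ^ (u - 1) * (1 - x) ^ (v - 1) := by
    exact_mod_cast h
  have hne : Real.Gamma (u + v) ≠ 0 := (Real.Gamma_pos_of_pos (by linarith)).ne'
  rw [eq_div_iff hne, mul_comm]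
  exact h2.symm

lemma betaInt01 {u v : ℝ} (hu : 0 < u) (hv : 0 < v) :
    IntervalIntegrable (fun x : ℝ => x ^ (u - 1) * (1 - x) ^ (v - 1)) volume 0 1 := by
  have h := Complex.betaIntegral_convergent (u := u) (v := v) (by simpa using hu)
    (by simpa using hv)
  rw [intervalIntegrable_iff_integrableOn_Ioc_of_le zero_le_one] at h ⊢
  apply (h.re).congr
  filter_upwards [MeasureTheory.ae_restrict_mem measurableSet_Ioc] with x hx
  show RCLike.re ((x:ℂ) ^ ((u:ℂ) - 1) * ((1:ℂ) - (x:ℂ)) ^ ((v:ℂ) - 1))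
    = x ^ (u - 1) * (1 - x) ^ (v - 1)
  have hx0 : (0 : ℝ) ≤ x := hx.1.le
  have hx1 : (0 : ℝ) ≤ 1 - x := by linarith [hx.2]
  have : ((x : ℂ) ^ ((u : ℂ) - 1) * ((1 : ℂ) - x) ^ ((v : ℂ) - 1))
      = ((x ^ (u - 1) * (1 - x) ^ (v - 1) : ℝ) : ℂ) := by
    rw [Complex.ofReal_mul, Complex.ofReal_cpow hx0, Complex.ofReal_cpow hx1]
    push_cast
    ring
  rw [this]
  simp

lemma betaIoo_int {u v t : ℝ} (hu : 0 < u) (hv : 0 < v) (ht : 0 < t) :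
    IntegrableOn (fun τ : ℝ => τ ^ (u - 1) * (t - τ) ^ (v - 1)) (Ioo 0 t) volume := by
  have h := (betaInt01 hu hv).comp_mul_left (c := 1 / t)
  have h0 : (0 : ℝ) / (1 / t) = 0 := by simp
  have h1 : (1 : ℝ) / (1 / t) = t := by field_simp
  rw [h0, h1, intervalIntegrable_iff_integrableOn_Ioc_of_le ht.le] at h
  have h' : IntegrableOn
      (fun x : ℝ => t ^ (u - 1) * t ^ (v - 1) * ((1 / t * x) ^ (u - 1) * (1 - 1 / t * x) ^ (v - 1)))
      (Ioc 0 t) volume := Integrable.const_mul h _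
  have h2 := h'.mono_set Ioo_subset_Ioc_self
  apply h2.congr
  filter_upwards [MeasureTheory.ae_restrict_mem measurableSet_Ioo] with τ hτ
  have hτ0 : 0 < τ := hτ.1
  have hτt : τ < t := hτ.2
  have e1 : (1 / t * τ) = τ / t := by ring
  show t ^ (u - 1) * t ^ (v - 1) * ((1 / t * τ) ^ (u - 1) * (1 - 1 / t * τ) ^ (v - 1))
      = τ ^ (u - 1) * (t - τ) ^ (v - 1)
  rw [e1]
  have e2 : τ ^ (u - 1) = t ^ (u - 1) * (τ / t) ^ (u - 1) := by
    rw [← Real.mul_rpow ht.le (by positivity)]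
    rw [mul_div_cancel₀ _ ht.ne']
  have e3 : (t - τ) ^ (v - 1) = t ^ (v - 1) * (1 - τ / t) ^ (v - 1) := by
    rw [← Real.mul_rpow ht.le (by simp [div_le_one ht]; linarith)]
    rw [mul_one_sub, mul_div_cancel₀ _ ht.ne']
  rw [e2, e3]; ring

lemma betaIoo_val {u v t : ℝ} (hu : 0 < u) (hv : 0 < v) (ht : 0 < t) :
    ∫ τ in Ioo (0:ℝ) t, τ ^ (u - 1) * (t - τ) ^ (v - 1)
      = Real.Gamma u * Real.Gamma v / Real.Gamma (u + v) * t ^ (u + v - 1) := by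
  rw [← MeasureTheory.integral_Ioc_eq_integral_Ioo,
    ← intervalIntegral.integral_of_le ht.le]
  have hs := intervalIntegral.smul_integral_comp_mul_left
    (f := fun τ : ℝ => τ ^ (u - 1) * (t - τ) ^ (v - 1)) (a := 0) (b := 1) t
  rw [mul_zero, mul_one] at hs
  rw [← hs]
  have hcong : ∀ x ∈ Set.uIcc (0:ℝ) 1,
      (t * x) ^ (u - 1) * (t - t * x) ^ (v - 1)
        = t ^ (u - 1) * t ^ (v - 1) * (x ^ (u - 1) * (1 - x) ^ (v - 1)) := by
    intro x hx
    rw [Set.uIcc_of_le (zero_le_one (α := ℝ)), Set.mem_Icc] at hx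
    rw [Real.mul_rpow ht.le hx.1, show t - t * x = t * (1 - x) by ring,
      Real.mul_rpow ht.le (by linarith)]
    ring
  rw [intervalIntegral.integral_congr hcong, intervalIntegral.integral_const_mul,
    beta01 hu hv, smul_eq_mul,
    show u + v - 1 = 1 + (u - 1) + (v - 1) by ring, Real.rpow_add ht, Real.rpow_add ht,
    Real.rpow_one]
  ring

section zero
variable {α : ℝ} (γ A0 A1 : ℝ)

lemma ml_zero_eq {b : ℝ} (hα : 1 < α) (hb : 1 ≤ b) (s : ℕ) :
    ml α γ b s 0 = if s = 0 ∧ b = 1 then 1 else 0 := by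
  rcases eq_or_ne (α * s + b - 1) 0 with h | h
  · rcases eq_or_ne s 0 with rfl | hs
    · simp only [Nat.cast_zero, mul_zero, zero_add] at h ⊢
      have hb1 : b = 1 := by linarith
      simp [ml, hb1, Real.Gamma_one]
    · exfalso
      have hs1 : (1 : ℝ) ≤ s := by exact_mod_cast Nat.one_le_iff_ne_zero.mpr hs
      nlinarith [h, hα]
  · rw [ml, Real.zero_rpow h, mul_zero, zero_div]
    have : ¬(s = 0 ∧ b = 1) := by
      rintro ⟨rfl, rfl⟩
      simp at h
    simp [this]

lemma summable_ml_succ_bound {b : ℝ} (hα : 1 < α) (hb : 1 ≤ b) :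
    Summable (fun s : ℕ => |γ| ^ (s + 1) / |Real.Gamma (α * (s + 1 : ℕ) + b)|) := by
  apply Summable.congr ((summable_ml_aux hα |γ| (α + b) (abs_nonneg γ)).mul_left |γ|)
  intro s
  rw [pow_succ]
  have : α * ((s : ℝ) + 1) + b = α * s + (α + b) := by ring
  push_cast
  rw [this]
  ring

lemma ml_succ_bound {b : ℝ} (hα : 1 < α) (hb : 1 ≤ b) (s : ℕ) {x : ℝ} (hx1 : |x| ≤ 1) :
    |ml α γ b (s + 1) x| ≤ |x| ^ α * (|γ| ^ (s + 1) / |Real.Gamma (α * (s + 1 : ℕ) + b)|) := by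
  rcases eq_or_ne x 0 with rfl | hx0
  · have he : α * ((s + 1 : ℕ) : ℝ) + b - 1 ≠ 0 := by
      push_cast; nlinarith
    rw [ml, Real.zero_rpow he, mul_zero, zero_div, abs_zero]
    positivity
  · have habs : 0 < |x| := abs_pos.mpr hx0
    rw [ml, abs_div, abs_mul, abs_pow]
    have h1 : |x ^ (α * ((s + 1 : ℕ) : ℝ) + b - 1)| ≤ |x| ^ α := by
      calc |x ^ (α * ((s + 1 : ℕ) : ℝ) + b - 1)| ≤ |x| ^ (α * ((s + 1 : ℕ) : ℝ) + b - 1) :=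
            Real.abs_rpow_le_abs_rpow _ _
        _ = |x| ^ α * |x| ^ (α * s + b - 1) := by
            rw [← Real.rpow_add habs]; push_cast; ring_nf
        _ ≤ |x| ^ α * 1 := by
            gcongr
            apply Real.rpow_le_one (abs_nonneg x) hx1
            have := Nat.cast_nonneg (α := ℝ) s
            nlinarith
        _ = |x| ^ α := mul_one _
    calc |γ| ^ (s + 1) * |x ^ (α * ((s + 1 : ℕ) : ℝ) + b - 1)| / |Real.Gamma (α * (s + 1 : ℕ) + b)|
        ≤ |γ| ^ (s + 1) * |x| ^ α / |Real.Gamma (α * (s + 1 : ℕ) + b)| := by gcongr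
      _ = |x| ^ α * (|γ| ^ (s + 1) / |Real.Gamma (α * (s + 1 : ℕ) + b)|) := by ring

end zero

section zero2
variable {α : ℝ} (γ A0 A1 : ℝ)

lemma tsum_tail_bound {b : ℝ} (hα : 1 < α) (hb : 1 ≤ b) {x : ℝ} (hx0 : x ≠ 0) (hx1 : |x| ≤ 1) :
    |(∑' s, ml α γ b s x) - ml α γ b 0 x|
      ≤ |x| ^ α * ∑' s : ℕ, |γ| ^ (s + 1) / |Real.Gamma (α * (s + 1 : ℕ) + b)| := by
  rw [Summable.tsum_eq_zero_add (summable_ml hα γ b hx0), add_sub_cancel_left, ← Real.norm_eq_abs]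
  exact tsum_of_norm_bounded
    (((summable_ml_succ_bound γ hα hb).hasSum).mul_left (|x| ^ α))
    (fun s => ml_succ_bound γ hα hb s hx1)

lemma ml_one_zero' (hα : 1 < α) (x : ℝ) : ml α γ 1 0 x = 1 := by
  simp [ml, Real.Gamma_one]

lemma ml_two_zero' (hα : 1 < α) (x : ℝ) : ml α γ 2 0 x = x := by
  have : α * ((0 : ℕ) : ℝ) + 2 - 1 = 1 := by push_cast; ring
  rw [ml, this, Real.rpow_one]
  have : α * ((0 : ℕ) : ℝ) + 2 = 2 := by push_cast; ring
  rw [this, Real.Gamma_two]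
  simp

lemma tsum_ml_one_zero (hα : 1 < α) : (∑' s, ml α γ 1 s 0) = 1 := by
  rw [tsum_eq_single 0 (fun s hs => by rw [ml_zero_eq γ hα le_rfl]; simp [hs])]
  rw [ml_zero_eq γ hα le_rfl]
  simp

lemma tsum_ml_two_zero (hα : 1 < α) : (∑' s, ml α γ 2 s 0) = 0 := by
  have h : ∀ s : ℕ, ml α γ 2 s 0 = 0 := by
    intro s
    rw [ml_zero_eq γ hα (by norm_num)]
    simp
  rw [tsum_congr h, tsum_zero]

lemma hasDerivAt_zero (hα0 : 1 < α) :
    HasDerivAt (fun x => A0 * ∑' s, ml α γ 1 s x + A1 * ∑' s, ml α γ 2 s x) A1 0 := by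
  set S1 := ∑' s : ℕ, |γ| ^ (s + 1) / |Real.Gamma (α * (s + 1 : ℕ) + 1)| with hS1
  set S2 := ∑' s : ℕ, |γ| ^ (s + 1) / |Real.Gamma (α * (s + 1 : ℕ) + 2)| with hS2
  set K := |A0| * S1 + |A1| * S2 with hKdef
  rw [hasDerivAt_iff_isLittleO, Asymptotics.isLittleO_iff]
  intro c hc
  have htend : Tendsto (fun x : ℝ => K * |x| ^ (α - 1)) (𝓝 0) (𝓝 0) := by
    have h1 : Tendsto (fun x : ℝ => |x|) (𝓝 0) (𝓝 0) := by
      simpa using (continuous_abs.tendsto (0 : ℝ))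
    have h2 : ContinuousAt (fun y : ℝ => y ^ (α - 1)) 0 :=
      Real.continuousAt_rpow_const 0 (α - 1) (Or.inr (by linarith))
    have h3 := (h2.tendsto.comp h1).const_mul K
    simpa [Real.zero_rpow (by linarith : α - 1 ≠ 0)] using h3
  have hev1 : ∀ᶠ x : ℝ in 𝓝 0, K * |x| ^ (α - 1) < c := htend.eventually_lt_const hc
  have hev2 : ∀ᶠ x : ℝ in 𝓝 0, |x| ≤ 1 := by
    filter_upwards [Metric.closedBall_mem_nhds (0 : ℝ) zero_lt_one] with x hx
    simpa [Real.dist_eq] using hx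
  filter_upwards [hev1, hev2] with x hx1 hx2
  rcases eq_or_ne x 0 with rfl | hx0
  · simp
  · have habs : 0 < |x| := abs_pos.mpr hx0
    have hb1 := tsum_tail_bound γ (b := 1) hα0 le_rfl hx0 hx2
    have hb2 := tsum_tail_bound γ (b := 2) hα0 (by norm_num) hx0 hx2
    rw [ml_one_zero' γ hα0] at hb1
    rw [ml_two_zero' γ hα0] at hb2
    have hval : A0 * (∑' s, ml α γ 1 s 0) + A1 * (∑' s, ml α γ 2 s 0) = A0 := by
      rw [tsum_ml_one_zero γ hα0, tsum_ml_two_zero γ hα0]; ring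
    have key : ‖A0 * (∑' s, ml α γ 1 s x) + A1 * (∑' s, ml α γ 2 s x)
        - (A0 * (∑' s, ml α γ 1 s 0) + A1 * (∑' s, ml α γ 2 s 0)) - (x - 0) • A1‖
        ≤ K * |x| ^ α := by
      rw [hval, sub_zero, smul_eq_mul, Real.norm_eq_abs]
      have e : A0 * (∑' s, ml α γ 1 s x) + A1 * (∑' s, ml α γ 2 s x) - A0 - x * A1
          = A0 * ((∑' s, ml α γ 1 s x) - 1) + A1 * ((∑' s, ml α γ 2 s x) - x) := by ring
      rw [e]
      calc |A0 * ((∑' s, ml α γ 1 s x) - 1) + A1 * ((∑' s, ml α γ 2 s x) - x)|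
          ≤ |A0| * |(∑' s, ml α γ 1 s x) - 1| + |A1| * |(∑' s, ml α γ 2 s x) - x| := by
            refine (abs_add_le _ _).trans ?_
            rw [abs_mul, abs_mul]
        _ ≤ |A0| * (|x| ^ α * S1) + |A1| * (|x| ^ α * S2) := by gcongr
        _ = K * |x| ^ α := by rw [hKdef]; ring
    refine key.trans ?_
    have : K * |x| ^ α = (K * |x| ^ (α - 1)) * |x| := by
      rw [show α = (α - 1) + 1 by ring, Real.rpow_add habs, Real.rpow_one]
      ring_nf
    rw [this]
    have : ‖x - 0‖ = |x| := by simp [Real.norm_eq_abs]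
    rw [this]
    exact mul_le_mul_of_nonneg_right hx1.le (abs_nonneg x)

variable {α γ t : ℝ}

lemma ml_w_eq (b : ℝ) (s : ℕ) :
    (fun τ : ℝ => ml α γ b s τ * (t - τ) ^ (1 - α))
      = fun τ : ℝ => (γ ^ s / Real.Gamma (α * s + b))
          * (τ ^ (α * s + b - 1) * (t - τ) ^ ((2 - α) - 1)) := by
  funext τ
  rw [ml, show (2 : ℝ) - α - 1 = 1 - α by ring]
  ring

lemma integrable_ml_w (hα1 : α < 2) {b : ℝ} {s : ℕ} (hu : 0 < α * s + b) (ht : 0 < t) :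
    IntegrableOn (fun τ : ℝ => ml α γ b s τ * (t - τ) ^ (1 - α)) (Ioo 0 t) volume := by
  rw [ml_w_eq]
  exact (betaIoo_int hu (by linarith) ht).const_mul _

lemma integral_ml_w (hα1 : α < 2) {b : ℝ} {s : ℕ} (hu : 0 < α * s + b) (ht : 0 < t) :
    ∫ τ in Ioo (0:ℝ) t, ml α γ b s τ * (t - τ) ^ (1 - α)
      = γ ^ s * Real.Gamma (2 - α) * t ^ (α * s + b + 1 - α)
          / Real.Gamma (α * s + b + 2 - α) := by
  rw [ml_w_eq, MeasureTheory.integral_const_mul, betaIoo_val hu (by linarith) ht]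
  rw [show α * (s : ℝ) + b + (2 - α) - 1 = α * s + b + 1 - α by ring,
    show α * (s : ℝ) + b + (2 - α) = α * s + b + 2 - α by ring]
  have hΓ : Real.Gamma (α * s + b) ≠ 0 := (Real.Gamma_pos_of_pos hu).ne'
  calc γ ^ s / Real.Gamma (α * s + b)
        * (Real.Gamma (α * s + b) * Real.Gamma (2 - α) / Real.Gamma (α * s + b + 2 - α)
            * t ^ (α * s + b + 1 - α))
      = (Real.Gamma (α * s + b) / Real.Gamma (α * s + b))
          * (γ ^ s * Real.Gamma (2 - α) * t ^ (α * s + b + 1 - α)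
              / Real.Gamma (α * s + b + 2 - α)) := by ring
    _ = γ ^ s * Real.Gamma (2 - α) * t ^ (α * s + b + 1 - α)
          / Real.Gamma (α * s + b + 2 - α) := by rw [div_self hΓ, one_mul]

lemma ml_s0_eq_zero {b : ℝ} (hb : Real.Gamma b = 0) (τ : ℝ) : ml α γ b 0 τ = 0 := by
  rw [ml]
  simp [hb]

lemma abs_ml {b : ℝ} {s : ℕ} (hΓ : 0 ≤ Real.Gamma (α * s + b)) {τ : ℝ} (hτ : 0 < τ) :
    |ml α γ b s τ| = ml α |γ| b s τ := by
  rw [ml, ml, abs_div, abs_mul, abs_pow, abs_of_nonneg (Real.rpow_nonneg hτ.le _),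
    abs_of_nonneg hΓ]

lemma summable_V (hα0 : 1 < α) (b : ℝ) (hb : -1 ≤ b) (ht : 0 < t) :
    Summable (fun s : ℕ => |γ| ^ (s + 1) * Real.Gamma (2 - α)
      * t ^ (α * ((s + 1 : ℕ) : ℝ) + b + 1 - α) / Real.Gamma (α * ((s + 1 : ℕ) : ℝ) + b + 2 - α)) := by
  apply Summable.congr
    ((summable_ml_aux hα0 (|γ| * t ^ α) (b + 2) (by positivity)).mul_left
      (|γ| * Real.Gamma (2 - α) * t ^ (b + 1)))
  intro s
  have hpos : 0 < α * s + (b + 2) := by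
    have := Nat.cast_nonneg (α := ℝ) s
    nlinarith
  have hΓ : |Real.Gamma (α * s + (b + 2))| = Real.Gamma (α * s + (b + 2)) :=
    abs_of_pos (Real.Gamma_pos_of_pos hpos)
  have e1 : α * ((s + 1 : ℕ) : ℝ) + b + 2 - α = α * s + (b + 2) := by push_cast; ring
  have e2 : t ^ (α * ((s + 1 : ℕ) : ℝ) + b + 1 - α) = (t ^ α) ^ s * t ^ (b + 1) := by
    rw [show α * ((s + 1 : ℕ) : ℝ) + b + 1 - α = α * s + (b + 1) by push_cast; ring,
      Real.rpow_add ht, Real.rpow_mul ht.le, Real.rpow_natCast]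
  rw [e1, e2, hΓ, pow_succ, mul_pow]
  ring

lemma main_eq {A0 A1 : ℝ} (hα0 : 1 < α) (hα1 : α < 2) (ht : 0 < t) :
    (1 / Real.Gamma (2 - α)) * ∫ τ in Ioo (0:ℝ) t,
        (A0 * ∑' s, ml α γ (-1) s τ + A1 * ∑' s, ml α γ 0 s τ) * (t - τ) ^ (1 - α)
      = γ * (A0 * ∑' s, ml α γ 1 s t + A1 * ∑' s, ml α γ 2 s t) := by
  have hΓv : 0 < Real.Gamma (2 - α) := Real.Gamma_pos_of_pos (by linarith)
  set w : ℝ → ℝ := fun τ => (t - τ) ^ (1 - α) with hw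
  set F : ℕ → ℝ → ℝ :=
    fun s τ => (A0 * ml α γ (-1) s τ + A1 * ml α γ 0 s τ) * w τ with hF
  have hΓm1 : Real.Gamma (-1 : ℝ) = 0 := by
    simpa using Real.Gamma_neg_nat_eq_zero 1
  have hF0 : ∀ τ, F 0 τ = 0 := by
    intro τ
    show (A0 * ml α γ (-1) 0 τ + A1 * ml α γ 0 0 τ) * w τ = 0
    rw [ml_s0_eq_zero hΓm1, ml_s0_eq_zero Real.Gamma_zero]
    ring
  have hu1 : ∀ s : ℕ, 0 < α * ((s + 1 : ℕ) : ℝ) + -1 := by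
    intro s; push_cast
    have := Nat.cast_nonneg (α := ℝ) s
    nlinarith
  have hu2 : ∀ s : ℕ, 0 < α * ((s + 1 : ℕ) : ℝ) + 0 := by
    intro s; push_cast
    have := Nat.cast_nonneg (α := ℝ) s
    nlinarith
  have hFint : ∀ s : ℕ, IntegrableOn (F s) (Ioo 0 t) volume := by
    intro s
    rcases s with _ | s
    · have : F 0 = fun _ : ℝ => (0:ℝ) := funext hF0
      rw [this]
      exact integrableOn_zero
    · apply Integrable.congr
        (((integrable_ml_w (γ := γ) hα1 (hu1 s) ht).const_mul A0).add
         ((integrable_ml_w (γ := γ) hα1 (hu2 s) ht).const_mul A1))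
      apply Filter.Eventually.of_forall
      intro τ
      simp only [Pi.add_apply]
      show A0 * (ml α γ (-1) (s+1) τ * w τ) + A1 * (ml α γ 0 (s+1) τ * w τ)
        = (A0 * ml α γ (-1) (s+1) τ + A1 * ml α γ 0 (s+1) τ) * w τ
      ring
  -- bound function
  set B : ℕ → ℝ → ℝ := fun s τ =>
    |A0| * (ml α |γ| (-1) (s + 1) τ * w τ) + |A1| * (ml α |γ| 0 (s + 1) τ * w τ) with hB
  have hBint : ∀ s : ℕ, IntegrableOn (B s) (Ioo 0 t) volume := fun s =>
    ((integrable_ml_w (γ := |γ|) hα1 (hu1 s) ht).const_mul _).add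
      ((integrable_ml_w (γ := |γ|) hα1 (hu2 s) ht).const_mul _)
  have hFB : ∀ (s : ℕ) {τ : ℝ}, τ ∈ Ioo (0:ℝ) t → ‖F (s + 1) τ‖ ≤ B s τ := by
    intro s τ hτ
    have hτ0 : 0 < τ := hτ.1
    have hwpos : 0 ≤ w τ := Real.rpow_nonneg (by linarith [hτ.2]) _
    rw [hF, Real.norm_eq_abs, abs_mul, abs_of_nonneg hwpos, hB]
    have habs1 : |ml α γ (-1) (s + 1) τ| = ml α |γ| (-1) (s + 1) τ :=
      abs_ml (Real.Gamma_pos_of_pos (hu1 s)).le hτ0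
    have habs2 : |ml α γ 0 (s + 1) τ| = ml α |γ| 0 (s + 1) τ :=
      abs_ml (Real.Gamma_pos_of_pos (hu2 s)).le hτ0
    have : |A0 * ml α γ (-1) (s + 1) τ + A1 * ml α γ 0 (s + 1) τ|
        ≤ |A0| * ml α |γ| (-1) (s + 1) τ + |A1| * ml α |γ| 0 (s + 1) τ := by
      refine (abs_add_le _ _).trans ?_
      rw [abs_mul, abs_mul, habs1, habs2]
    calc |A0 * ml α γ (-1) (s + 1) τ + A1 * ml α γ 0 (s + 1) τ| * w τ
        ≤ (|A0| * ml α |γ| (-1) (s + 1) τ + |A1| * ml α |γ| 0 (s + 1) τ) * w τ :=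
          mul_le_mul_of_nonneg_right this hwpos
      _ = |A0| * (ml α |γ| (-1) (s + 1) τ * w τ) + |A1| * (ml α |γ| 0 (s + 1) τ * w τ) := by
          ring
  have hintB : ∀ s : ℕ, ∫ τ in Ioo (0:ℝ) t, B s τ
      = |A0| * (|γ| ^ (s+1) * Real.Gamma (2 - α) * t ^ (α * ((s+1:ℕ):ℝ) + -1 + 1 - α)
            / Real.Gamma (α * ((s+1:ℕ):ℝ) + -1 + 2 - α))
        + |A1| * (|γ| ^ (s+1) * Real.Gamma (2 - α) * t ^ (α * ((s+1:ℕ):ℝ) + 0 + 1 - α)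
            / Real.Gamma (α * ((s+1:ℕ):ℝ) + 0 + 2 - α)) := by
    intro s
    rw [hB, MeasureTheory.integral_add
        ((integrable_ml_w (γ := |γ|) hα1 (hu1 s) ht).const_mul _)
        ((integrable_ml_w (γ := |γ|) hα1 (hu2 s) ht).const_mul _),
      MeasureTheory.integral_const_mul, MeasureTheory.integral_const_mul,
      integral_ml_w (γ := |γ|) hα1 (hu1 s) ht, integral_ml_w (γ := |γ|) hα1 (hu2 s) ht]
  have hF_sum : Summable (fun s : ℕ => ∫ τ in Ioo (0:ℝ) t, ‖F s τ‖) := by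
    rw [← summable_nat_add_iff 1]
    apply Summable.of_nonneg_of_le
      (fun s => integral_nonneg fun τ => norm_nonneg _)
      (fun s => ?_)
      (((summable_V (γ := γ) hα0 (-1) le_rfl ht).mul_left |A0|).add
        ((summable_V (γ := γ) hα0 0 (by norm_num) ht).mul_left |A1|))
    rw [← hintB s]
    apply MeasureTheory.integral_mono_of_nonneg
      (Filter.Eventually.of_forall fun τ => norm_nonneg _) (hBint s)
    filter_upwards [MeasureTheory.ae_restrict_mem measurableSet_Ioo] with τ hτ
    exact hFB s hτ
  have hHasSum := MeasureTheory.hasSum_integral_of_summable_integral_norm hFint hF_sum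
  -- step 1 : rewrite integrand as a single tsum
  have hstep1 : ∫ τ in Ioo (0:ℝ) t,
      (A0 * ∑' s, ml α γ (-1) s τ + A1 * ∑' s, ml α γ 0 s τ) * (t - τ) ^ (1 - α)
      = ∫ τ in Ioo (0:ℝ) t, ∑' s, F s τ := by
    apply MeasureTheory.setIntegral_congr_fun measurableSet_Ioo
    intro τ hτ
    have hτ0 : (τ : ℝ) ≠ 0 := ne_of_gt hτ.1
    have h1 : Summable (fun s => A0 * ml α γ (-1) s τ) :=
      (summable_ml hα0 γ (-1) hτ0).mul_left A0
    have h2 : Summable (fun s => A1 * ml α γ 0 s τ) :=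
      (summable_ml hα0 γ 0 hτ0).mul_left A1
    show (A0 * ∑' s, ml α γ (-1) s τ + A1 * ∑' s, ml α γ 0 s τ) * (t - τ) ^ (1 - α)
      = ∑' s, F s τ
    rw [← tsum_mul_left, ← tsum_mul_left, ← Summable.tsum_add h1 h2, ← tsum_mul_right]
  -- step 2+3 : swap integral and sum, evaluate term integrals
  have hIF : ∀ s : ℕ, ∫ τ in Ioo (0:ℝ) t, F (s+1) τ
      = Real.Gamma (2 - α) * γ * (A0 * ml α γ 1 s t + A1 * ml α γ 2 s t) := by
    intro s
    have e : F (s+1) = fun τ => A0 * (ml α γ (-1) (s+1) τ * w τ)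
        + A1 * (ml α γ 0 (s+1) τ * w τ) := by
      funext τ; rw [hF]; ring
    rw [e, MeasureTheory.integral_add
        ((integrable_ml_w (γ := γ) hα1 (hu1 s) ht).const_mul A0)
        ((integrable_ml_w (γ := γ) hα1 (hu2 s) ht).const_mul A1),
      MeasureTheory.integral_const_mul, MeasureTheory.integral_const_mul,
      integral_ml_w (γ := γ) hα1 (hu1 s) ht, integral_ml_w (γ := γ) hα1 (hu2 s) ht]
    rw [ml, ml]
    rw [show α * ((s+1:ℕ):ℝ) + -1 + 1 - α = α * (s:ℝ) + 1 - 1 by push_cast; ring,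
      show α * ((s+1:ℕ):ℝ) + -1 + 2 - α = α * (s:ℝ) + 1 by push_cast; ring,
      show α * ((s+1:ℕ):ℝ) + 0 + 1 - α = α * (s:ℝ) + 2 - 1 by push_cast; ring,
      show α * ((s+1:ℕ):ℝ) + 0 + 2 - α = α * (s:ℝ) + 2 by push_cast; ring,
      pow_succ]
    ring
  have hsum0 : (∫ τ in Ioo (0:ℝ) t, F 0 τ) = 0 := by
    have : F 0 = fun _ : ℝ => (0:ℝ) := funext hF0
    rw [this]
    simp
  have hstep2 : ∫ τ in Ioo (0:ℝ) t, ∑' s, F s τ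
      = ∑' s : ℕ, ∫ τ in Ioo (0:ℝ) t, F s τ := hHasSum.tsum_eq.symm
  have hstep3 : ∑' s : ℕ, ∫ τ in Ioo (0:ℝ) t, F s τ
      = Real.Gamma (2 - α) * γ * (A0 * ∑' s, ml α γ 1 s t + A1 * ∑' s, ml α γ 2 s t) := by
    rw [Summable.tsum_eq_zero_add hHasSum.summable, hsum0, zero_add]
    have h1 : Summable (fun s => Real.Gamma (2 - α) * γ * A0 * ml α γ 1 s t) :=
      (summable_ml hα0 γ 1 ht.ne').mul_left _
    have h2 : Summable (fun s => Real.Gamma (2 - α) * γ * A1 * ml α γ 2 s t) :=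
      (summable_ml hα0 γ 2 ht.ne').mul_left _
    calc ∑' s : ℕ, ∫ τ in Ioo (0:ℝ) t, F (s+1) τ
        = ∑' s : ℕ, (Real.Gamma (2 - α) * γ * A0 * ml α γ 1 s t
            + Real.Gamma (2 - α) * γ * A1 * ml α γ 2 s t) := by
          apply tsum_congr
          intro s
          rw [hIF s]
          ring
      _ = Real.Gamma (2 - α) * γ
            * (A0 * ∑' s, ml α γ 1 s t + A1 * ∑' s, ml α γ 2 s t) := by
          rw [Summable.tsum_add h1 h2, tsum_mul_left, tsum_mul_left]
          ring
  rw [hstep1, hstep2, hstep3]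
  field_simp

end zero2
end CaputoAux

/-- For `1 < α < 2`, `γ, A₀, A₁ ∈ ℝ`, the function
`C(t) = A₀·E_{α,1}(γt^α) + A₁·t·E_{α,2}(γt^α)
      = A₀·∑ γ^s t^{αs}/Γ(αs+1) + A₁·∑ γ^s t^{αs+1}/Γ(αs+2)` satisfies the Caputo fractional
ODE `(1/Γ(2−α)) ∫₀ᵗ C″(τ)·(t−τ)^{1−α} dτ = γ·C(t)` for all `t > 0`, with `C(0) = A₀` and
`C′(0) = A₁`. -/
theorem stmt_12 (α γ A0 A1 : ℝ) (hα0 : 1 < α) (hα1 : α < 2)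
    (C : ℝ → ℝ)
    (hC : ∀ t, C t =
      A0 * ∑' s : ℕ, γ ^ s * t ^ (α * (s : ℝ)) / Real.Gamma (α * (s : ℝ) + 1)
        + A1 * ∑' s : ℕ, γ ^ s * t ^ (α * (s : ℝ) + 1) / Real.Gamma (α * (s : ℝ) + 2)) :
    (∀ t : ℝ, 0 < t →
        (1 / Real.Gamma (2 - α))
            * ∫ τ in (0:ℝ)..t, deriv (fun τ' => deriv C τ') τ * (t - τ) ^ (1 - α)
          = γ * C t)
      ∧ C 0 = A0 ∧ deriv C 0 = A1 := by
  open CaputoAux in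
  have hCfun : C = fun x => A0 * ∑' s, ml α γ 1 s x + A1 * ∑' s, ml α γ 2 s x := by
    funext x
    rw [hC x]
    congr 1
    · congr 1
      apply tsum_congr
      intro s
      rw [ml, show α * (s:ℝ) + 1 - 1 = α * s by ring]
    · congr 1
      apply tsum_congr
      intro s
      rw [ml, show α * (s:ℝ) + 2 - 1 = α * s + 1 by ring]
  subst hCfun
  refine ⟨?_, ?_, ?_⟩
  · -- the Caputo ODE
    intro t ht
    have e0 : (1:ℝ) - 1 = 0 := by norm_num
    have em : (0:ℝ) - 1 = -1 := by norm_num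
    have e1 : (2:ℝ) - 1 = 1 := by norm_num
    set D1 : ℝ → ℝ := fun x => A0 * ∑' s, ml α γ 0 s x + A1 * ∑' s, ml α γ 1 s x with hD1def
    have hCd : ∀ x : ℝ, 0 < x → HasDerivAt
        (fun x => A0 * ∑' s, ml α γ 1 s x + A1 * ∑' s, ml α γ 2 s x) (D1 x) x := by
      intro x hx
      have h1 := (hasDerivAt_tsum_ml (γ := γ) hα0 1 hx).const_mul A0
      have h2 := (hasDerivAt_tsum_ml (γ := γ) hα0 2 hx).const_mul A1
      rw [e0] at h1
      rw [e1] at h2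
      exact h1.add h2
    have hD2 : ∀ x : ℝ, 0 < x → HasDerivAt D1
        (A0 * ∑' s, ml α γ (-1) s x + A1 * ∑' s, ml α γ 0 s x) x := by
      intro x hx
      have h1 := (hasDerivAt_tsum_ml (γ := γ) hα0 0 hx).const_mul A0
      have h2 := (hasDerivAt_tsum_ml (γ := γ) hα0 1 hx).const_mul A1
      rw [em] at h1
      rw [e0] at h2
      exact h1.add h2
    have hderiv2 : ∀ τ : ℝ, τ ∈ Ioo (0:ℝ) t →
        deriv (deriv (fun x => A0 * ∑' s, ml α γ 1 s x + A1 * ∑' s, ml α γ 2 s x)) τ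
          = A0 * ∑' s, ml α γ (-1) s τ + A1 * ∑' s, ml α γ 0 s τ := by
      intro τ hτ
      have hev : deriv (fun x => A0 * ∑' s, ml α γ 1 s x + A1 * ∑' s, ml α γ 2 s x)
          =ᶠ[nhds τ] D1 := by
        filter_upwards [isOpen_Ioi.mem_nhds (show τ ∈ Ioi (0:ℝ) from hτ.1)] with x hx
        exact (hCd x hx).deriv
      rw [hev.deriv_eq, (hD2 τ hτ.1).deriv]
    rw [intervalIntegral.integral_of_le ht.le, MeasureTheory.integral_Ioc_eq_integral_Ioo]
    have hcong : ∫ τ in Ioo (0:ℝ) t,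
        deriv (fun τ' => deriv (fun x => A0 * ∑' s, ml α γ 1 s x + A1 * ∑' s, ml α γ 2 s x) τ') τ
          * (t - τ) ^ (1 - α)
        = ∫ τ in Ioo (0:ℝ) t,
            (A0 * ∑' s, ml α γ (-1) s τ + A1 * ∑' s, ml α γ 0 s τ) * (t - τ) ^ (1 - α) := by
      apply MeasureTheory.setIntegral_congr_fun measurableSet_Ioo
      intro τ hτ
      show deriv (deriv (fun x => A0 * ∑' s, ml α γ 1 s x + A1 * ∑' s, ml α γ 2 s x)) τ
          * (t - τ) ^ (1 - α)
        = (A0 * ∑' s, ml α γ (-1) s τ + A1 * ∑' s, ml α γ 0 s τ) * (t - τ) ^ (1 - α)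
      rw [hderiv2 τ hτ]
    rw [hcong]
    exact main_eq hα0 hα1 ht
  · -- C 0 = A0
    show A0 * (∑' s, ml α γ 1 s 0) + A1 * (∑' s, ml α γ 2 s 0) = A0
    rw [tsum_ml_one_zero γ hα0, tsum_ml_two_zero γ hα0]
    ring
  · -- C' 0 = A1
    exact (hasDerivAt_zero γ A0 A1 hα0).deriv
end

section
/- Let α > 0 and γ ∈ ℝ. Then for every t > 0, the function t ↦ ∑_{s=0}^∞ γ^s t^{αs+1}/Γ(αs+2), i.e. t ↦ t·E_{α,2}(γt^α), is differentiable at t and its derivative equals ∑_{s=0}^∞ γ^s t^{αs}/Γ(αs+1), i.e. (d/dt)[t·E_{α,2}(γt^α)] = E_{α,1}(γt^α). -/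
open Real Filter Nat

lemma summable_ml (α q : ℝ) (hα : 0 < α) (hq : 0 ≤ q) :
    Summable (fun s : ℕ => q ^ s / Real.Gamma (α * s + 1)) := by
  set M : ℝ := max q 1 with hM
  have hM1 : (1 : ℝ) ≤ M := le_max_right _ _
  have hM0 : (0 : ℝ) < M := lt_of_lt_of_le one_pos hM1
  set r : ℝ := M ^ (α⁻¹) with hr
  have hr1 : (1 : ℝ) ≤ r := Real.one_le_rpow hM1 (by positivity)
  have hr0 : (0 : ℝ) < r := lt_of_lt_of_le one_pos hr1
  set ρ : ℝ := (2 : ℝ) ^ (-α) with hρ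
  have hρ0 : (0 : ℝ) ≤ ρ := Real.rpow_nonneg (by norm_num) _
  have hρ1 : ρ < 1 := Real.rpow_lt_one_of_one_lt_of_neg one_lt_two (by linarith)
  have hgsum : Summable (fun s : ℕ => (2 * r) * ρ ^ s) :=
    (summable_geometric_of_lt_one hρ0 hρ1).mul_left _
  apply Summable.of_norm_bounded_eventually_nat hgsum
  -- eventual facts
  have htα : Tendsto (fun s : ℕ => α * s) atTop atTop := by
    apply Tendsto.const_mul_atTop hα
    exact tendsto_natCast_atTop_atTop
  have hfloor : Tendsto (fun s : ℕ => ⌊α * (s : ℝ)⌋₊) atTop atTop :=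
    (tendsto_nat_floor_atTop.comp htα)
  have hfact : Tendsto (fun n : ℕ => (2 * r) ^ n / (n ! : ℝ)) atTop (nhds 0) :=
    FloorSemiring.tendsto_pow_div_factorial_atTop (2 * r)
  have hfact' : ∀ᶠ n : ℕ in atTop, (2 * r) ^ n / (n ! : ℝ) ≤ 1 := by
    filter_upwards [hfact.eventually (eventually_le_nhds (by norm_num : (0:ℝ) < 1))] with n hn
    exact hn
  have hev1 : ∀ᶠ s : ℕ in atTop, (1 : ℝ) ≤ α * s := htα.eventually_ge_atTop 1
  have hev2 : ∀ᶠ s : ℕ in atTop, (2 * r) ^ (⌊α * (s : ℝ)⌋₊) / ((⌊α * (s : ℝ)⌋₊)! : ℝ) ≤ 1 :=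
    hfloor.eventually hfact'
  filter_upwards [hev1, hev2] with s h1 h2
  set n : ℕ := ⌊α * (s : ℝ)⌋₊ with hn
  have hαs0 : (0 : ℝ) < α * s + 1 := by linarith
  have hΓpos : 0 < Real.Gamma (α * s + 1) := Real.Gamma_pos_of_pos hαs0
  have hnle : (n : ℝ) ≤ α * s := Nat.floor_le (by linarith)
  have hlen : α * s ≤ (n : ℝ) + 1 := (Nat.lt_floor_add_one _).le
  have hn1 : 1 ≤ n := Nat.le_floor (by exact_mod_cast h1)
  have hn1' : (1 : ℝ) ≤ (n : ℝ) := by exact_mod_cast hn1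
  -- Gamma lower bound: Γ(αs+1) ≥ n!
  have hΓmono : (n ! : ℝ) ≤ Real.Gamma (α * s + 1) := by
    have := Real.Gamma_strictMonoOn_Ici.monotoneOn
      (by simp only [Set.mem_Ici]; linarith : ((n : ℝ) + 1) ∈ Set.Ici (2:ℝ))
      (by simp only [Set.mem_Ici]; linarith : (α * s + 1) ∈ Set.Ici (2:ℝ))
      (by linarith)
    rwa [Real.Gamma_nat_eq_factorial] at this
  -- q^s ≤ r^(n+1)
  have hq1 : q ^ s ≤ r ^ (n + 1) := by
    have e1 : r ^ (α * (s : ℝ)) = M ^ (s : ℕ) := by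
      rw [hr, ← Real.rpow_natCast M s, ← Real.rpow_mul hM0.le]
      congr 1
      field_simp
    have e2 : q ^ s ≤ M ^ s := pow_le_pow_left₀ hq (le_max_left _ _) s
    have e3 : r ^ (α * (s : ℝ)) ≤ r ^ (((n : ℝ)) + 1) :=
      Real.rpow_le_rpow_of_exponent_le hr1 hlen
    have e4 : r ^ (((n : ℝ)) + 1) = r ^ (n + 1) := by
      rw [← Real.rpow_natCast r (n + 1)]
      push_cast
      ring_nf
    calc q ^ s ≤ M ^ s := e2
      _ = r ^ (α * (s : ℝ)) := e1.symm
      _ ≤ r ^ (((n : ℝ)) + 1) := e3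
      _ = r ^ (n + 1) := e4
  -- r^n/n! ≤ 1/2^n
  have hr2 : r ^ n / (n ! : ℝ) ≤ ((2:ℝ) ^ n)⁻¹ := by
    have hfac : (0:ℝ) < (n ! : ℝ) := by exact_mod_cast n.factorial_pos
    have h2' : (2:ℝ) ^ n * r ^ n ≤ (n ! : ℝ) := by
      rw [← mul_pow]
      calc ((2:ℝ) * r) ^ n = ((2:ℝ) * r) ^ n / (n ! : ℝ) * (n ! : ℝ) := by field_simp
        _ ≤ 1 * (n ! : ℝ) := mul_le_mul_of_nonneg_right h2 hfac.le
        _ = (n ! : ℝ) := one_mul _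
    rw [div_le_iff₀ hfac, inv_mul_eq_div, le_div_iff₀ (by positivity : (0:ℝ) < (2:ℝ) ^ n)]
    linarith
  -- 1/2^n ≤ 2 * ρ^s
  have hr3 : ((2:ℝ) ^ n)⁻¹ ≤ 2 * ρ ^ s := by
    have e5 : ρ ^ s = (2:ℝ) ^ (-α * (s:ℝ)) := by
      rw [hρ, ← Real.rpow_natCast ((2:ℝ) ^ (-α)) s, ← Real.rpow_mul (by norm_num)]
    have e6 : (2:ℝ) * ρ ^ s = (2:ℝ) ^ (1 + -α * (s:ℝ)) := by
      rw [e5, Real.rpow_add (by norm_num), Real.rpow_one]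
    have e7 : ((2:ℝ) ^ n)⁻¹ = (2:ℝ) ^ (-(n:ℝ)) := by
      rw [Real.rpow_neg (by norm_num), Real.rpow_natCast]
    rw [e6, e7]
    apply Real.rpow_le_rpow_of_exponent_le one_le_two
    linarith
  -- combine
  have hnorm : ‖q ^ s / Real.Gamma (α * s + 1)‖ = q ^ s / Real.Gamma (α * s + 1) := by
    rw [Real.norm_eq_abs, abs_of_nonneg (by positivity)]
  rw [hnorm]
  calc q ^ s / Real.Gamma (α * s + 1)
      ≤ r ^ (n + 1) / (n ! : ℝ) := by
        apply div_le_div₀ (by positivity) hq1 (by positivity) hΓmono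
    _ = r * (r ^ n / (n ! : ℝ)) := by rw [pow_succ]; ring
    _ ≤ r * ((2:ℝ) ^ n)⁻¹ := by
        exact mul_le_mul_of_nonneg_left hr2 hr0.le
    _ ≤ r * (2 * ρ ^ s) := mul_le_mul_of_nonneg_left hr3 hr0.le
    _ = 2 * r * ρ ^ s := by ring



/-- For `α > 0`, `γ ∈ ℝ` and `t > 0`, the function
`t ↦ t·E_{α,2}(γt^α) = ∑_{s=0}^∞ γ^s t^{αs+1}/Γ(αs+2)` is differentiable at `t` with derivative
`E_{α,1}(γt^α) = ∑_{s=0}^∞ γ^s t^{αs}/Γ(αs+1)`. -/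
theorem stmt_14 (α γ : ℝ) (hα : 0 < α) :
    ∀ t : ℝ, 0 < t →
      HasDerivAt
        (fun t' : ℝ => ∑' s : ℕ, γ ^ s * t' ^ (α * (s : ℝ) + 1) / Real.Gamma (α * (s : ℝ) + 2))
        (∑' s : ℕ, γ ^ s * t ^ (α * (s : ℝ)) / Real.Gamma (α * (s : ℝ) + 1))
        t := by
  intro t ht
  set R : ℝ := t + 1 with hR
  have hR0 : (0 : ℝ) < R := by linarith
  -- the bound sequence
  set u : ℕ → ℝ := fun s => (|γ| * R ^ α) ^ s / Real.Gamma (α * s + 1) with hu_def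
  have hΓpos : ∀ s : ℕ, 0 < Real.Gamma (α * s + 1) := fun s =>
    Real.Gamma_pos_of_pos (by positivity)
  have hΓpos2 : ∀ s : ℕ, 0 < Real.Gamma (α * s + 2) := fun s =>
    Real.Gamma_pos_of_pos (by positivity)
  have hΓrel : ∀ s : ℕ, Real.Gamma (α * s + 2) = (α * s + 1) * Real.Gamma (α * s + 1) := by
    intro s
    have : α * s + 2 = (α * s + 1) + 1 := by ring
    rw [this, Real.Gamma_add_one (by positivity)]
  have hu : Summable u := summable_ml α (|γ| * R ^ α) hα (by positivity)
  -- expand u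
  have hu_eq : ∀ s : ℕ, u s = |γ| ^ s * R ^ (α * (s : ℝ)) / Real.Gamma (α * s + 1) := by
    intro s
    have h3 : R ^ (α * (s : ℝ)) = (R ^ α) ^ s := by
      rw [Real.rpow_mul hR0.le, Real.rpow_natCast]
    simp only [hu_def]
    rw [mul_pow, h3]
  have key := hasDerivAt_tsum_of_isPreconnected hu (isOpen_Ioo (a := (0:ℝ)) (b := R))
    (isPreconnected_Ioo)
    (g := fun (s : ℕ) (x : ℝ) => γ ^ s * x ^ (α * (s : ℝ) + 1) / Real.Gamma (α * (s : ℝ) + 2))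
    (g' := fun (s : ℕ) (x : ℝ) => γ ^ s * x ^ (α * (s : ℝ)) / Real.Gamma (α * (s : ℝ) + 1))
    (fun s x hx => by
      -- HasDerivAt of each term
      have h1 : HasDerivAt (fun z : ℝ => z ^ (α * (s : ℝ) + 1))
          ((α * s + 1) * x ^ (α * (s : ℝ) + 1 - 1)) x :=
        Real.hasDerivAt_rpow_const (Or.inr (by
          have := mul_nonneg hα.le (Nat.cast_nonneg s); linarith))
      have h2 := (h1.const_mul (γ ^ s)).div_const (Real.Gamma (α * (s : ℝ) + 2))
      refine HasDerivAt.congr_deriv h2 ?_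
      rw [hΓrel s]
      have hx1 : α * (s : ℝ) + 1 - 1 = α * s := by ring
      rw [hx1]
      field_simp)
    (fun s x hx => by
      -- norm bound
      rw [hu_eq s, Real.norm_eq_abs, abs_div, abs_mul, abs_pow,
        abs_of_pos (hΓpos s), abs_of_nonneg (Real.rpow_nonneg (le_of_lt hx.1) _)]
      gcongr
      · exact hx.1.le
      · exact hx.2.le)
    (Set.mem_Ioo.mpr ⟨ht, by linarith⟩)
    (by
      -- summability at t
      apply Summable.of_norm_bounded (hu.mul_left R)
      intro s
      rw [hu_eq s, Real.norm_eq_abs, abs_div, abs_mul, abs_pow,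
        abs_of_pos (hΓpos2 s), abs_of_nonneg (Real.rpow_nonneg ht.le _)]
      have ht1 : t ^ (α * (s:ℝ) + 1) ≤ R ^ (α * (s:ℝ)) * R := by
        rw [Real.rpow_add ht, Real.rpow_one]
        exact mul_le_mul (Real.rpow_le_rpow ht.le (by linarith) (by positivity))
          (by linarith) ht.le (Real.rpow_nonneg hR0.le _)
      have hΓ2 : Real.Gamma (α * s + 1) ≤ Real.Gamma (α * s + 2) := by
        rw [hΓrel s]
        nlinarith [hΓpos s, mul_nonneg hα.le (Nat.cast_nonneg s : (0:ℝ) ≤ s)]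
      calc |γ| ^ s * t ^ (α * (s:ℝ) + 1) / Real.Gamma (α * s + 2)
          ≤ |γ| ^ s * (R ^ (α * (s:ℝ)) * R) / Real.Gamma (α * s + 1) := by
            apply div_le_div₀ (by positivity)
              (mul_le_mul_of_nonneg_left ht1 (by positivity)) (hΓpos s) hΓ2
        _ = R * (|γ| ^ s * R ^ (α * (s:ℝ)) / Real.Gamma (α * s + 1)) := by ring)
    (Set.mem_Ioo.mpr ⟨ht, by linarith⟩)
  exact key
end

section
/- Let λ₁, μ₁, μ₂, μ₃, μ₄, A, B be real constants with λ₁ ≠ 0 and ρ₀ > 0. Then for the function w(z) = A·sin(√ρ₀·z) + B·cos(√ρ₀·z) one has, for all z ∈ ℝ, F_T[w](z) = (μ₂ − λ₁²μ₄ρ₀ + (2μ₁/3)(A² + B²))·(A·sin(√ρ₀·z) + B·cos(√ρ₀·z)) + λ₁μ₃√ρ₀·(A·cos(√ρ₀·z) − B·sin(√ρ₀·z)); in particular the two-dimensional linear space spanned by {sin(√ρ₀·z), cos(√ρ₀·z)} is invariant under the cubically nonlinear operator F_T. -/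
/-- The two-dimensional space spanned by `{sin(√ρ₀ z), cos(√ρ₀ z)}` is invariant
under the cubically nonlinear operator
`F_T[w] = λ₁² (d/dz)((μ₁w²/(3λ₁²ρ₀) + μ₄)·w') + λ₁μ₃·w' + μ₁w³ + μ₂w`: for
`w(z) = A·sin(√ρ₀ z) + B·cos(√ρ₀ z)` one has
`F_T[w](z) = (μ₂ − λ₁²μ₄ρ₀ + (2μ₁/3)(A² + B²))·(A·sin(√ρ₀ z) + B·cos(√ρ₀ z))
             + λ₁μ₃√ρ₀·(A·cos(√ρ₀ z) − B·sin(√ρ₀ z))`. -/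
theorem stmt_15 (lam1 mu1 mu2 mu3 mu4 A B rho0 : ℝ) (hlam : lam1 ≠ 0) (hrho : 0 < rho0)
    (w : ℝ → ℝ)
    (hw : ∀ z, w z = A * Real.sin (Real.sqrt rho0 * z) + B * Real.cos (Real.sqrt rho0 * z)) :
    ∀ z : ℝ,
      lam1 ^ 2 * deriv (fun z' =>
          (mu1 * (w z') ^ 2 / (3 * lam1 ^ 2 * rho0) + mu4) * deriv w z') z
        + lam1 * mu3 * deriv w z + mu1 * (w z) ^ 3 + mu2 * w z
      = (mu2 - lam1 ^ 2 * mu4 * rho0 + 2 * mu1 / 3 * (A ^ 2 + B ^ 2))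
            * (A * Real.sin (Real.sqrt rho0 * z) + B * Real.cos (Real.sqrt rho0 * z))
        + lam1 * mu3 * Real.sqrt rho0
            * (A * Real.cos (Real.sqrt rho0 * z) - B * Real.sin (Real.sqrt rho0 * z)) := by
  intro z
  have hwf : w = fun z => A * Real.sin (Real.sqrt rho0 * z) + B * Real.cos (Real.sqrt rho0 * z) :=
    funext hw
  subst hwf
  set s := Real.sqrt rho0 with hsdef
  have hs2 : s ^ 2 = rho0 := Real.sq_sqrt hrho.le
  have hlin : ∀ t : ℝ, HasDerivAt (fun u : ℝ => s * u) s t := by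
    intro t; simpa using (hasDerivAt_id t).const_mul s
  have hd : ∀ t : ℝ, HasDerivAt (fun u => A * Real.sin (s * u) + B * Real.cos (s * u))
      (A * (Real.cos (s * t) * s) + B * (-Real.sin (s * t) * s)) t := fun t =>
    (((Real.hasDerivAt_sin (s * t)).comp t (hlin t)).const_mul A).add
      (((Real.hasDerivAt_cos (s * t)).comp t (hlin t)).const_mul B)
  have hderiv : deriv (fun u => A * Real.sin (s * u) + B * Real.cos (s * u)) =
      fun t => A * (Real.cos (s * t) * s) + B * (-Real.sin (s * t) * s) :=
    funext fun t => (hd t).deriv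
  rw [hderiv]
  -- derivative of the product
  have hg : HasDerivAt (fun z' =>
      (mu1 * (A * Real.sin (s * z') + B * Real.cos (s * z')) ^ 2 / (3 * lam1 ^ 2 * rho0) + mu4) *
        (A * (Real.cos (s * z') * s) + B * (-Real.sin (s * z') * s)))
      ((mu1 * (2 * (A * Real.sin (s * z) + B * Real.cos (s * z)) ^ 1 *
          (A * (Real.cos (s * z) * s) + B * (-Real.sin (s * z) * s))) / (3 * lam1 ^ 2 * rho0) + 0) *
        (A * (Real.cos (s * z) * s) + B * (-Real.sin (s * z) * s)) +
       (mu1 * (A * Real.sin (s * z) + B * Real.cos (s * z)) ^ 2 / (3 * lam1 ^ 2 * rho0) + mu4) *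
        (A * (-Real.sin (s * z) * s * s) + B * (-(Real.cos (s * z) * s) * s))) z := by
    have h1 : HasDerivAt (fun z' =>
        mu1 * (A * Real.sin (s * z') + B * Real.cos (s * z')) ^ 2 / (3 * lam1 ^ 2 * rho0) + mu4)
        (mu1 * (2 * (A * Real.sin (s * z) + B * Real.cos (s * z)) ^ 1 *
          (A * (Real.cos (s * z) * s) + B * (-Real.sin (s * z) * s))) / (3 * lam1 ^ 2 * rho0) + 0) z := by
      have h0 := ((((hd z).pow 2).const_mul mu1).div_const (3 * lam1 ^ 2 * rho0)).add_const mu4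
      refine HasDerivAt.congr_deriv h0 ?_
      push_cast
      ring
    have h2 : HasDerivAt (fun z' => A * (Real.cos (s * z') * s) + B * (-Real.sin (s * z') * s))
        (A * (-Real.sin (s * z) * s * s) + B * (-(Real.cos (s * z) * s) * s)) z := by
      have hA : HasDerivAt (fun z' => Real.cos (s * z') * s) (-Real.sin (s * z) * s * s) z := by
        simpa [mul_comm, mul_assoc] using
          (((Real.hasDerivAt_cos (s * z)).comp z (hlin z)).mul_const s)
      have hB : HasDerivAt (fun z' => -Real.sin (s * z') * s) (-(Real.cos (s * z) * s) * s) z := by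
        simpa [mul_comm, mul_assoc] using
          ((((Real.hasDerivAt_sin (s * z)).comp z (hlin z)).neg).mul_const s)
      exact (hA.const_mul A).add (hB.const_mul B)
    exact h1.mul h2
  rw [hg.deriv]
  have hpy : Real.sin (s * z) ^ 2 + Real.cos (s * z) ^ 2 = 1 := Real.sin_sq_add_cos_sq _
  have h3 : (3 : ℝ) * lam1 ^ 2 * rho0 ≠ 0 := by positivity
  set S := Real.sin (s * z) with hS
  set C := Real.cos (s * z) with hC
  field_simp
  rw [← hs2]
  linear_combination 2 * mu1 * s ^ 2 * (A * S + B * C) * (A ^ 2 + B ^ 2) * hpy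
end

section
/- Let λ₁, μ₁, μ₂, μ₃, μ₄, μ₅, a, b be real constants. Then for the function w(z) = a + b·(z − μ₁)² one has, for all z ∈ ℝ, F_T[w](z) = (6λ₁²μ₄b² + μ₂b)·(z − μ₁)² + 2λ₁²b(μ₄a + μ₅) + μ₂a + μ₃; in particular the two-dimensional linear space spanned by {1, (z − μ₁)²} is invariant under F_T. -/
/-- The two-dimensional space spanned by `{1, (z − μ₁)²}` is invariant under the
nonlinear operator `F_T[w] = λ₁² (d/dz)((μ₄·w + μ₅)·w') + μ₂·w + μ₃`: for
`w(z) = a + b·(z − μ₁)²` one has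
`F_T[w](z) = (6λ₁²μ₄b² + μ₂b)·(z − μ₁)² + 2λ₁²b(μ₄a + μ₅) + μ₂a + μ₃`. -/
theorem stmt_16 (lam1 mu1 mu2 mu3 mu4 mu5 a b : ℝ)
    (w : ℝ → ℝ) (hw : ∀ z, w z = a + b * (z - mu1) ^ 2) :
    ∀ z : ℝ,
      lam1 ^ 2 * deriv (fun z' => (mu4 * w z' + mu5) * deriv w z') z + mu2 * w z + mu3
      = (6 * lam1 ^ 2 * mu4 * b ^ 2 + mu2 * b) * (z - mu1) ^ 2
        + 2 * lam1 ^ 2 * b * (mu4 * a + mu5) + mu2 * a + mu3 := by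
  have hwfun : w = fun z => a + b * (z - mu1) ^ 2 := funext hw
  subst hwfun
  intro z
  have hd : ∀ z' : ℝ, HasDerivAt (fun z : ℝ => a + b * (z - mu1) ^ 2)
      (2 * b * (z' - mu1)) z' := by
    intro z'
    have h : HasDerivAt (fun z : ℝ => z - mu1) 1 z' :=
      (hasDerivAt_id z').sub_const mu1
    have := ((h.pow 2).const_mul b).const_add a
    refine this.congr_deriv ?_
    ring
  have hderiv : (fun z' => (mu4 * (a + b * (z' - mu1) ^ 2) + mu5) *
      deriv (fun z : ℝ => a + b * (z - mu1) ^ 2) z')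
      = fun z' => (mu4 * (a + b * (z' - mu1) ^ 2) + mu5) * (2 * b * (z' - mu1)) := by
    funext z'
    rw [(hd z').deriv]
  rw [hderiv]
  have h2 : HasDerivAt (fun z' : ℝ => (mu4 * (a + b * (z' - mu1) ^ 2) + mu5) *
      (2 * b * (z' - mu1)))
      ((mu4 * (2 * b * (z - mu1))) * (2 * b * (z - mu1))
        + (mu4 * (a + b * (z - mu1) ^ 2) + mu5) * (2 * b)) z := by
    have hA : HasDerivAt (fun z' : ℝ => mu4 * (a + b * (z' - mu1) ^ 2) + mu5)
        (mu4 * (2 * b * (z - mu1))) z := ((hd z).const_mul mu4).add_const mu5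
    have hB : HasDerivAt (fun z' : ℝ => 2 * b * (z' - mu1)) (2 * b) z := by
      have := ((hasDerivAt_id z).sub_const mu1).const_mul (2 * b)
      simpa using this
    exact hA.mul hB
  rw [h2.deriv]
  ring
end

section
/- Let λ₁, μ₁, μ₂, μ₃, μ₄, μ₅, μ₆, a, b be real constants with μ₁ ≠ 0. Then for the function w(z) = a + b·sin((z + μ₂)/μ₁) one has, for all z ∈ ℝ, F_T[w](z) = (μ₃b²/4 + μ₃a²/2 + μ₄a + μ₅) + ((3/4)μ₃ab + μ₄b − λ₁²μ₆b/μ₁²)·sin((z + μ₂)/μ₁); in particular the two-dimensional linear space spanned by {1, sin((z + μ₂)/μ₁)} is invariant under the quadratically nonlinear operator F_T. -/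
/-- The two-dimensional space spanned by `{1, sin((z + μ₂)/μ₁)}` is invariant
under the quadratically nonlinear operator
`F_T[w] = λ₁² (d/dz)(((μ₁²μ₃/(4λ₁²))·w + μ₆)·w') + (1/2)μ₃·w² + μ₄·w + μ₅`: for
`w(z) = a + b·sin((z + μ₂)/μ₁)` one has
`F_T[w](z) = (μ₃b²/4 + μ₃a²/2 + μ₄a + μ₅)
             + ((3/4)μ₃ab + μ₄b − λ₁²μ₆b/μ₁²)·sin((z + μ₂)/μ₁)`. -/
theorem stmt_17 (lam1 mu1 mu2 mu3 mu4 mu5 mu6 a b : ℝ) (hlam : lam1 ≠ 0) (hmu1 : mu1 ≠ 0)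
    (w : ℝ → ℝ) (hw : ∀ z, w z = a + b * Real.sin ((z + mu2) / mu1)) :
    ∀ z : ℝ,
      lam1 ^ 2 * deriv (fun z' =>
          (mu1 ^ 2 * mu3 / (4 * lam1 ^ 2) * w z' + mu6) * deriv w z') z
        + (1 / 2) * mu3 * (w z) ^ 2 + mu4 * w z + mu5
      = (mu3 * b ^ 2 / 4 + mu3 * a ^ 2 / 2 + mu4 * a + mu5)
        + ((3 / 4) * mu3 * a * b + mu4 * b - lam1 ^ 2 * mu6 * b / mu1 ^ 2)
            * Real.sin ((z + mu2) / mu1) := by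
  have hwf : w = fun z => a + b * Real.sin ((z + mu2) / mu1) := funext hw
  subst hwf
  have hs : ∀ z : ℝ, HasDerivAt (fun z => (z + mu2) / mu1) (1 / mu1) z := by
    intro z
    simpa using ((hasDerivAt_id z).add_const mu2).div_const mu1
  have hw1 : ∀ z : ℝ, HasDerivAt (fun z => a + b * Real.sin ((z + mu2) / mu1))
      (b * (Real.cos ((z + mu2) / mu1) * (1 / mu1))) z := by
    intro z
    exact ((((Real.hasDerivAt_sin _).comp z (hs z))).const_mul b).const_add a
  have hdw : deriv (fun z => a + b * Real.sin ((z + mu2) / mu1))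
      = fun z => b * (Real.cos ((z + mu2) / mu1) * (1 / mu1)) := by
    funext z
    exact (hw1 z).deriv
  intro z
  rw [hdw]
  set c := mu1 ^ 2 * mu3 / (4 * lam1 ^ 2) with hc
  have h1 : HasDerivAt (fun z' => c * (a + b * Real.sin ((z' + mu2) / mu1)) + mu6)
      (c * (b * (Real.cos ((z + mu2) / mu1) * (1 / mu1)))) z :=
    ((hw1 z).const_mul c).add_const mu6
  have h2 : HasDerivAt (fun z' => b * (Real.cos ((z' + mu2) / mu1) * (1 / mu1)))
      (b * (-Real.sin ((z + mu2) / mu1) * (1 / mu1) * (1 / mu1))) z := by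
    have := (((Real.hasDerivAt_cos _).comp z (hs z))).const_mul b
    have h3 := this.mul_const (1 / mu1)
    have e : (fun z' => b * (Real.cos ((z' + mu2) / mu1) * (1 / mu1)))
        = fun y => b * (Real.cos ∘ fun z => (z + mu2) / mu1) y * (1 / mu1) := by
      funext t; simp only [Function.comp]; ring
    rw [e]; exact h3.congr_deriv (by ring)
  have hprod := (h1.mul h2).deriv
  simp only [Pi.mul_def] at hprod
  beta_reduce
  rw [hprod]
  have pyth := Real.sin_sq_add_cos_sq ((z + mu2) / mu1)
  have hl : lam1 ^ 2 ≠ 0 := pow_ne_zero 2 hlam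
  have hm : mu1 ^ 2 ≠ 0 := pow_ne_zero 2 hmu1
  set s := Real.sin ((z + mu2) / mu1) with hsdef
  set co := Real.cos ((z + mu2) / mu1) with hcodef
  have hkey : lam1 ^ 2 * (c * (b * (co * (1 / mu1))) * (b * (co * (1 / mu1)))
      + (c * (a + b * s) + mu6) * (b * (-s * (1 / mu1) * (1 / mu1))))
      = mu3 / 4 * b ^ 2 * co ^ 2
        - (mu3 / 4 * (a + b * s) + lam1 ^ 2 * mu6 / mu1 ^ 2) * b * s := by
    rw [hc]
    field_simp
    ring
  rw [hkey]
  linear_combination (mu3 * b ^ 2 / 4) * pyth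
end
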